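/- arXiv:2510.00463 — 6 statements merged into one kernel-verified Lean document; each statement's English description precedes it below -/
import Mathlib

section
/- Let A ⊆ H_0 be a fixed (deterministic) set of test indices with |A| = m_a. Under Assumption 1, if the post-attack score function s̃ is permutation-invariant, the attack map f_attack is order-invariant, and the post-attack scores S_{k+1},…,S_{n+m} are almost surely pairwise distinct, then the false discovery rate after the oracle attack satisfies FDR*_attack = E[Ṽ/(R̃ ∨ 1)] ≤ α + m_a · E[1/(R̃ ∨ 1)], where the expectations are over the randomness of the training and test samples Z_1,…,Z_{n+m}. -/
open MeasureTheory ProbabilityTheory Finset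

noncomputable section

/-- The Benjamini–Hochberg rejection index at level `α` for p-values `p 1, …, p m`:
the largest `r ≤ m` such that at least `r` of the p-values are `≤ α r / m`
(equivalently, such that the `r`-th ordered p-value satisfies `p_(r) ≤ α r / m`);
it equals `0` if no such `r ≥ 1` exists. -/
def BHindex (m : ℕ) (α : ℝ) (p : ℕ → ℝ) : ℕ :=
  sSup {r | r ≤ m ∧ r ≤ ((Finset.Icc 1 m).filter fun j => p j ≤ α * r / m).card}

namespace FDRAttackAux

def BHset (m : ℕ) (α : ℝ) (p : ℕ → ℝ) : Set ℕ :=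
  {r | r ≤ m ∧ r ≤ ((Finset.Icc 1 m).filter fun j => p j ≤ α * r / m).card}

lemma BHindex_def (m : ℕ) (α : ℝ) (p : ℕ → ℝ) : BHindex m α p = sSup (BHset m α p) := rfl

lemma zero_mem_BHset (m : ℕ) (α : ℝ) (p : ℕ → ℝ) : 0 ∈ BHset m α p :=
  ⟨Nat.zero_le _, Nat.zero_le _⟩

lemma bddAbove_BHset (m : ℕ) (α : ℝ) (p : ℕ → ℝ) : BddAbove (BHset m α p) :=
  ⟨m, fun _ hr => hr.1⟩

lemma BHindex_mem (m : ℕ) (α : ℝ) (p : ℕ → ℝ) : BHindex m α p ∈ BHset m α p :=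
  Nat.sSup_mem ⟨0, zero_mem_BHset m α p⟩ (bddAbove_BHset m α p)

lemma le_BHindex (m : ℕ) (α : ℝ) (p : ℕ → ℝ) {r : ℕ} (h : r ∈ BHset m α p) :
    r ≤ BHindex m α p :=
  le_csSup (bddAbove_BHset m α p) h

lemma BHindex_le (m : ℕ) (α : ℝ) (p : ℕ → ℝ) {b : ℕ}
    (h : ∀ r ∈ BHset m α p, r ≤ b) : BHindex m α p ≤ b :=
  csSup_le ⟨0, zero_mem_BHset m α p⟩ h

lemma BHindex_eq_iff (m : ℕ) (α : ℝ) (p : ℕ → ℝ) (r : ℕ) :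
    BHindex m α p = r ↔ r ∈ BHset m α p ∧ ∀ r' ∈ BHset m α p, r' ≤ r := by
  constructor
  · rintro rfl
    exact ⟨BHindex_mem m α p, fun r' hr' => le_BHindex m α p hr'⟩
  · rintro ⟨h1, h2⟩
    exact le_antisymm (BHindex_le m α p h2) (le_BHindex m α p h1)

lemma BHindex_mono (m : ℕ) (α : ℝ) (p₁ p₂ : ℕ → ℝ)
    (h : ∀ l ∈ Finset.Icc 1 m, p₁ l ≤ p₂ l) : BHindex m α p₂ ≤ BHindex m α p₁ := by
  apply csSup_le_csSup (bddAbove_BHset m α p₁) ⟨0, zero_mem_BHset m α p₂⟩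
  rintro r ⟨hr1, hr2⟩
  refine ⟨hr1, hr2.trans (Finset.card_le_card ?_)⟩
  intro l hl
  simp only [Finset.mem_filter] at hl ⊢
  exact ⟨hl.1, (h l hl.1).trans hl.2⟩

/-- conformal p-values associated to a score configuration -/
def pval (n k : ℕ) (s : ℕ → ℝ) (l : ℕ) : ℝ :=
  (1 + (((Finset.Icc (k + 1) n).filter fun i => s (n + l) ≤ s i).card : ℝ)) /
    ((n : ℝ) - k + 1)

def tauOf (n m k : ℕ) (α : ℝ) (s : ℕ → ℝ) : ℕ := BHindex m α (pval n k s)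

def rejOf (n m k : ℕ) (α : ℝ) (s : ℕ → ℝ) : Finset ℕ :=
  (Finset.Icc 1 m).filter fun l => pval n k s l ≤ α * (tauOf n m k α s) / m

def valOf (n m k : ℕ) (α : ℝ) (j : ℕ) (s : ℕ → ℝ) : ℝ :=
  if j ∈ rejOf n m k α s then (((max (rejOf n m k α s).card 1 : ℕ) : ℝ))⁻¹ else 0

lemma card_rejOf (n m k : ℕ) (α : ℝ) (hm : 1 ≤ m) (hα : 0 ≤ α) (s : ℕ → ℝ) :
    (rejOf n m k α s).card = tauOf n m k α s := by
  have h1 : tauOf n m k α s ≤ (rejOf n m k α s).card := (BHindex_mem m α (pval n k s)).2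
  refine le_antisymm ?_ h1
  apply le_BHindex
  constructor
  · exact (Finset.card_filter_le _ _).trans (by simp)
  · apply Finset.card_le_card
    intro l hl
    simp only [rejOf, Finset.mem_filter] at hl ⊢
    refine Finset.mem_filter.mpr ⟨hl.1, hl.2.trans ?_⟩
    have hm' : (0:ℝ) < m := by exact_mod_cast hm
    have h1' : (tauOf n m k α s : ℝ) ≤ ((rejOf n m k α s).card : ℝ) := by exact_mod_cast h1
    gcongr
    exact h1

lemma mem_rejOf (n m k : ℕ) (α : ℝ) (s : ℕ → ℝ) (l : ℕ) :
    l ∈ rejOf n m k α s ↔ l ∈ Finset.Icc 1 m ∧ pval n k s l ≤ α * (tauOf n m k α s) / m :=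
  Finset.mem_filter

/-- The deterministic orbit lemma: averaging the rejection indicator over the
`n-k+1` swaps of the test point `n+j` with the calibration points. -/
lemma core (n m k : ℕ) (α : ℝ) (hkn : k ≤ n) (hm : 1 ≤ m) (hα0 : 0 < α) (s : ℕ → ℝ)
    (hdist : ∀ i ∈ Finset.Icc (k + 1) (n + m), ∀ i' ∈ Finset.Icc (k + 1) (n + m),
      i ≠ i' → s i ≠ s i')
    (j : ℕ) (hj1 : 1 ≤ j) (hjm : j ≤ m) :
    ∑ i ∈ insert (n + j) (Finset.Icc (k + 1) n),
        valOf n m k α j (fun x => s (Equiv.swap i (n + j) x))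
      ≤ ((n : ℝ) - k + 1) * (α / m) := by
  classical
  set C : Finset ℕ := insert (n + j) (Finset.Icc (k + 1) n) with hC
  have hmR : (0:ℝ) < m := by exact_mod_cast hm
  have hD : (0:ℝ) < (n : ℝ) - k + 1 := by
    have : (k:ℝ) ≤ n := by exact_mod_cast hkn
    linarith
  have hRHS0 : 0 ≤ ((n : ℝ) - k + 1) * (α / m) :=
    le_of_lt (mul_pos hD (div_pos hα0 hmR))
  have hCmem : ∀ i ∈ C, (k + 1 ≤ i ∧ i ≤ n) ∨ i = n + j := by
    intro i hi
    rcases Finset.mem_insert.mp hi with h | h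
    · exact Or.inr h
    · exact Or.inl (Finset.mem_Icc.mp h)
  have hCsub : C ⊆ Finset.Icc (k + 1) (n + m) := by
    intro i hi
    rcases hCmem i hi with ⟨h1, h2⟩ | rfl
    · exact Finset.mem_Icc.mpr ⟨h1, h2.trans (Nat.le_add_right n m)⟩
    · exact Finset.mem_Icc.mpr ⟨by omega, by omega⟩
  -- the rank (from the top) of `s i` among the orbit values
  set t : ℕ → ℕ := fun i => (C.filter fun w => s i ≤ s w).card with ht
  have ht_strict : ∀ i ∈ C, ∀ i' ∈ C, s i < s i' → t i' < t i := by
    intro i hi i' hi' hlt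
    apply Finset.card_lt_card
    rw [Finset.ssubset_iff_of_subset]
    · exact ⟨i, Finset.mem_filter.mpr ⟨hi, le_refl _⟩,
        fun hmem => absurd (Finset.mem_filter.mp hmem).2 (not_le.mpr hlt)⟩
    · intro w hw
      rw [Finset.mem_filter] at hw ⊢
      exact ⟨hw.1, hlt.le.trans hw.2⟩
  have ht_ge_one : ∀ i ∈ C, 1 ≤ t i := by
    intro i hi
    exact Finset.card_pos.mpr ⟨i, Finset.mem_filter.mpr ⟨hi, le_refl _⟩⟩
  -- the swap bijection for counting
  have hswap_count : ∀ i ∈ C, ∀ c : ℝ,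
      ((Finset.Icc (k + 1) n).filter fun x => c ≤ s (Equiv.swap i (n + j) x)).card
        = ((C.erase i).filter fun w => c ≤ s w).card := by
    intro i hi c
    apply Finset.card_bij (fun x _ => Equiv.swap i (n + j) x)
    · intro x hx
      rw [Finset.mem_filter] at hx
      have hxn : x ≤ n := (Finset.mem_Icc.mp hx.1).2
      rw [Finset.mem_filter]
      refine ⟨?_, hx.2⟩
      by_cases hxi : x = i
      · subst hxi
        rw [Equiv.swap_apply_left]
        exact Finset.mem_erase.mpr ⟨by omega, Finset.mem_insert_self _ _⟩
      · rw [Equiv.swap_apply_of_ne_of_ne hxi (by omega)]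
        exact Finset.mem_erase.mpr ⟨hxi, Finset.mem_insert_of_mem hx.1⟩
    · intro a₁ _ a₂ _ h
      exact (Equiv.swap _ _).injective h
    · intro b hb
      rw [Finset.mem_filter, Finset.mem_erase] at hb
      obtain ⟨⟨hbi, hbC⟩, hbc⟩ := hb
      refine ⟨Equiv.swap i (n + j) b, ?_, by rw [Equiv.swap_apply_self]⟩
      rw [Finset.mem_filter, Equiv.swap_apply_self]
      refine ⟨?_, hbc⟩
      rcases Finset.mem_insert.mp hbC with rfl | hbIcc
      · rw [Equiv.swap_apply_right]
        rcases hCmem i hi with ⟨h1, h2⟩ | rfl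
        · exact Finset.mem_Icc.mpr ⟨h1, h2⟩
        · exact absurd rfl hbi
      · have hbn : b ≤ n := (Finset.mem_Icc.mp hbIcc).2
        rw [Equiv.swap_apply_of_ne_of_ne hbi (by omega)]
        exact hbIcc
  -- p-value of `j` after the swap
  have hpj : ∀ i ∈ C, pval n k (fun x => s (Equiv.swap i (n + j) x)) j
      = (t i : ℝ) / ((n : ℝ) - k + 1) := by
    intro i hi
    simp only [pval, Equiv.swap_apply_right]
    rw [hswap_count i hi (s i)]
    have hmemf : i ∈ C.filter (fun w => s i ≤ s w) := Finset.mem_filter.mpr ⟨hi, le_refl _⟩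
    rw [Finset.filter_erase, Finset.card_erase_of_mem hmemf]
    rw [Nat.cast_sub (ht_ge_one i hi)]
    push_cast
    ring_nf
  have hnl : ∀ a ∈ C, ∀ l, 1 ≤ l → l ≠ j → Equiv.swap a (n + j) (n + l) = n + l := by
    intro a ha l hl1 hlj
    apply Equiv.swap_apply_of_ne_of_ne
    · rcases hCmem a ha with ⟨h1, h2⟩ | rfl
      · omega
      · omega
    · omega
  -- monotonicity of erase-counts
  have hcount_mono : ∀ i ∈ C, ∀ i' ∈ C, s i' ≤ s i → ∀ c : ℝ,
      ((C.erase i).filter fun w => c ≤ s w).card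
        ≤ ((C.erase i').filter fun w => c ≤ s w).card := by
    intro i hi i' hi' hle c
    rw [Finset.filter_erase, Finset.filter_erase]
    set T := C.filter fun w => c ≤ s w with hT
    by_cases hiT : i ∈ T
    · rw [Finset.card_erase_of_mem hiT]
      by_cases hi'T : i' ∈ T
      · rw [Finset.card_erase_of_mem hi'T]
      · rw [Finset.erase_eq_of_notMem hi'T]
        exact Nat.sub_le _ _
    · have hi'T : i' ∉ T := by
        intro hmem
        exact hiT (Finset.mem_filter.mpr ⟨hi, ((Finset.mem_filter.mp hmem).2).trans hle⟩)
      rw [Finset.erase_eq_of_notMem hiT, Finset.erase_eq_of_notMem hi'T]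
  -- monotonicity of all p-values along the orbit
  have hpmono : ∀ i ∈ C, ∀ i' ∈ C, s i' ≤ s i → ∀ l ∈ Finset.Icc 1 m,
      pval n k (fun x => s (Equiv.swap i (n + j) x)) l
        ≤ pval n k (fun x => s (Equiv.swap i' (n + j) x)) l := by
    intro i hi i' hi' hle l hl
    by_cases hlj : l = j
    · subst hlj
      rw [hpj i hi, hpj i' hi']
      have htle : (t i : ℝ) ≤ (t i' : ℝ) := by
        have : t i ≤ t i' := by
          apply Finset.card_le_card
          intro w hw
          rw [Finset.mem_filter] at hw ⊢
          exact ⟨hw.1, hle.trans hw.2⟩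
        exact_mod_cast this
      gcongr
    · obtain ⟨hl1, hlm⟩ := Finset.mem_Icc.mp hl
      simp only [pval]
      simp only [hnl i hi l hl1 hlj, hnl i' hi' l hl1 hlj]
      rw [hswap_count i hi (s (n + l)), hswap_count i' hi' (s (n + l))]
      have := hcount_mono i hi i' hi' hle (s (n + l))
      have hcast : ((((C.erase i).filter fun w => s (n + l) ≤ s w).card : ℕ) : ℝ)
          ≤ ((((C.erase i').filter fun w => s (n + l) ≤ s w).card : ℕ) : ℝ) := by
        exact_mod_cast this
      gcongr
  -- τ monotonicity
  have hτmono : ∀ i ∈ C, ∀ i' ∈ C, s i' ≤ s i →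
      tauOf n m k α (fun x => s (Equiv.swap i' (n + j) x))
        ≤ tauOf n m k α (fun x => s (Equiv.swap i (n + j) x)) := by
    intro i hi i' hi' hle
    exact BHindex_mono m α _ _ (hpmono i hi i' hi' hle)
  -- the rejection orbit
  set W : Finset ℕ := C.filter (fun i => j ∈ rejOf n m k α (fun x => s (Equiv.swap i (n + j) x)))
    with hW
  have hsum : ∑ i ∈ C, valOf n m k α j (fun x => s (Equiv.swap i (n + j) x))
      = ∑ i ∈ W, (((max (rejOf n m k α (fun x => s (Equiv.swap i (n + j) x))).card 1 : ℕ) : ℝ))⁻¹ := by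
    rw [hW, Finset.sum_filter]
    exact Finset.sum_congr rfl fun i _ => rfl
  rw [hsum]
  rcases Finset.eq_empty_or_nonempty W with hWe | hWne
  · rw [hWe]; simpa using hRHS0
  obtain ⟨istar, hisW, hmax⟩ := W.exists_max_image t hWne
  have hisC : istar ∈ C := Finset.mem_of_mem_filter _ hisW
  have hjrej : j ∈ rejOf n m k α (fun x => s (Equiv.swap istar (n + j) x)) :=
    (Finset.mem_filter.mp hisW).2
  -- properties of members of W
  have hW_splg : ∀ i ∈ W, s istar ≤ s i := by
    intro i hiW
    have hiC : i ∈ C := Finset.mem_of_mem_filter _ hiW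
    by_contra hcon
    push_neg at hcon
    exact absurd (hmax i hiW) (not_le.mpr (ht_strict i hiC istar hisC hcon))
  set τs : ℕ := tauOf n m k α (fun x => s (Equiv.swap istar (n + j) x)) with hτs
  have hcard_rej : ∀ i ∈ C, (rejOf n m k α (fun x => s (Equiv.swap i (n + j) x))).card
      = tauOf n m k α (fun x => s (Equiv.swap i (n + j) x)) := fun i _ =>
    card_rejOf n m k α hm hα0.le _
  have hτs_pos : 1 ≤ τs := by
    rw [hτs, ← hcard_rej istar hisC]
    exact Finset.card_pos.mpr ⟨j, hjrej⟩
  have hτsR : (0:ℝ) < (τs : ℝ) := by exact_mod_cast hτs_pos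
  have hterm : ∀ i ∈ W,
      (((max (rejOf n m k α (fun x => s (Equiv.swap i (n + j) x))).card 1 : ℕ) : ℝ))⁻¹
        ≤ ((τs : ℝ))⁻¹ := by
    intro i hiW
    have hiC : i ∈ C := Finset.mem_of_mem_filter _ hiW
    have hτi : τs ≤ tauOf n m k α (fun x => s (Equiv.swap i (n + j) x)) :=
      hτmono i hiC istar hisC (hW_splg i hiW)
    have hτipos : 1 ≤ tauOf n m k α (fun x => s (Equiv.swap i (n + j) x)) := hτs_pos.trans hτi
    rw [hcard_rej i hiC, max_eq_left hτipos]
    have : (τs : ℝ) ≤ (tauOf n m k α (fun x => s (Equiv.swap i (n + j) x)) : ℝ) := by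
      exact_mod_cast hτi
    exact inv_anti₀ hτsR this
  have hWcard : W.card ≤ t istar := by
    have : W.card ≤ (Finset.Icc 1 (t istar)).card := by
      apply Finset.card_le_card_of_injOn t
      · intro i hiW
        have hiC : i ∈ C := Finset.mem_of_mem_filter _ hiW
        exact Finset.mem_Icc.mpr ⟨ht_ge_one i hiC, hmax i hiW⟩
      · intro i hiW i' hi'W hti
        have hiC : i ∈ C := Finset.mem_of_mem_filter _ (by exact hiW)
        have hi'C : i' ∈ C := Finset.mem_of_mem_filter _ (by exact hi'W)
        by_contra hne
        have hsne : s i ≠ s i' := hdist i (hCsub hiC) i' (hCsub hi'C) hne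
        rcases lt_or_gt_of_ne hsne with hlt | hgt
        · exact absurd hti (Nat.ne_of_gt (ht_strict i hiC i' hi'C hlt))
        · exact absurd hti (Nat.ne_of_lt (ht_strict i' hi'C i hiC hgt))
    simpa using this
  -- rejection inequality at istar
  have hrej_ineq : (t istar : ℝ) / ((n : ℝ) - k + 1) ≤ α * (τs : ℝ) / m := by
    have := (mem_rejOf n m k α _ j).mp hjrej
    rw [← hpj istar hisC]
    exact this.2
  calc ∑ i ∈ W, (((max (rejOf n m k α (fun x => s (Equiv.swap i (n + j) x))).card 1 : ℕ) : ℝ))⁻¹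
      ≤ ∑ _i ∈ W, ((τs : ℝ))⁻¹ := Finset.sum_le_sum hterm
    _ = (W.card : ℝ) * ((τs : ℝ))⁻¹ := by rw [Finset.sum_const, nsmul_eq_mul]
    _ ≤ (t istar : ℝ) * ((τs : ℝ))⁻¹ := by
        have : (W.card : ℝ) ≤ (t istar : ℝ) := by exact_mod_cast hWcard
        exact mul_le_mul_of_nonneg_right this (inv_nonneg.mpr hτsR.le)
    _ ≤ ((n : ℝ) - k + 1) * (α / m) := by
        have key : (t istar : ℝ) * m ≤ ((n : ℝ) - k + 1) * α * (τs : ℝ) := by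
          rw [div_le_div_iff₀ hD hmR] at hrej_ineq
          nlinarith [hrej_ineq]
        rw [show (t istar : ℝ) * ((τs : ℝ))⁻¹ = (t istar : ℝ) / (τs : ℝ) from
            (div_eq_mul_inv _ _).symm,
          show ((n : ℝ) - k + 1) * (α / m) = (((n : ℝ) - k + 1) * α) / m from
            (mul_div_assoc _ _ _).symm,
          div_le_div_iff₀ hτsR hmR]
        exact key

lemma one_le_cast_max (c : ℕ) : (1:ℝ) ≤ ((max c 1 : ℕ) : ℝ) := by
  exact_mod_cast le_max_right c 1

lemma inv_max_nonneg (c : ℕ) : 0 ≤ (((max c 1 : ℕ) : ℝ))⁻¹ :=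
  inv_nonneg.mpr (zero_le_one.trans (one_le_cast_max c))

lemma inv_max_le_one (c : ℕ) : (((max c 1 : ℕ) : ℝ))⁻¹ ≤ 1 :=
  inv_le_one_of_one_le₀ (one_le_cast_max c)

lemma valOf_nonneg (n m k : ℕ) (α : ℝ) (j : ℕ) (s : ℕ → ℝ) : 0 ≤ valOf n m k α j s := by
  rw [valOf]
  split
  · exact inv_max_nonneg _
  · exact le_refl _

lemma valOf_le_inv (n m k : ℕ) (α : ℝ) (j : ℕ) (s : ℕ → ℝ) :
    valOf n m k α j s ≤ (((max (rejOf n m k α s).card 1 : ℕ) : ℝ))⁻¹ := by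
  rw [valOf]
  split
  · exact le_refl _
  · exact inv_max_nonneg _

lemma valOf_le_one (n m k : ℕ) (α : ℝ) (j : ℕ) (s : ℕ → ℝ) : valOf n m k α j s ≤ 1 :=
  (valOf_le_inv n m k α j s).trans (inv_max_le_one _)

lemma sum_valOf (n m k : ℕ) (α : ℝ) (H0 : Finset ℕ) (s : ℕ → ℝ) :
    (((rejOf n m k α s).filter fun j => j ∈ H0).card : ℝ) /
        ((max (rejOf n m k α s).card 1 : ℕ) : ℝ)
      = ∑ j ∈ H0, valOf n m k α j s := by
  classical
  have h1 : (rejOf n m k α s).filter (fun j => j ∈ H0) = H0.filter (fun j => j ∈ rejOf n m k α s) := by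
    ext x
    simp only [Finset.mem_filter]
    exact and_comm
  rw [h1, Finset.natCast_card_filter, Finset.sum_div]
  apply Finset.sum_congr rfl
  intro j _
  rw [valOf]
  by_cases hjR : j ∈ rejOf n m k α s
  · rw [if_pos hjR, if_pos hjR, one_div]
  · rw [if_neg hjR, if_neg hjR, zero_div]

end FDRAttackAux

open FDRAttackAux

/-- **FDR bound for the oracle attack on AdaDetect** (Theorem 1).
`Z_1,…,Z_n` are null training samples, `Z_{n+1},…,Z_{n+m}` test samples, `H0` the set of
true-null test indices and `A ⊆ H0` a fixed (deterministic) attack set with `|A| = mₐ`.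
Under Assumption 1 (exchangeability of the nulls given the non-nulls), if the post-attack
score function `st` is permutation-invariant over the block `{k+1,…,n+m}`, the attack map
`fatk` is order-invariant in the unordered set `{Z_1,…,Z_n, Z_{n+j} : j ∈ H0 \ A}`, and the
post-attack scores are almost surely pairwise distinct, then the false discovery rate after
the attack satisfies `FDR*_attack = E[Ṽ/(R̃ ∨ 1)] ≤ α + mₐ · E[1/(R̃ ∨ 1)]`. -/
theorem fdr_bound_oracle_attack
    {Ω : Type*} [MeasureSpace Ω] [IsProbabilityMeasure (ℙ : Measure Ω)]
    {𝒵 : Type*} [MeasurableSpace 𝒵]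
    (n m k m₀ mₐ : ℕ) (hk1 : 1 ≤ k) (hkn : k ≤ n) (hm : 1 ≤ m)
    (α : ℝ) (hα0 : 0 < α) (hα1 : α < 1)
    -- the set of true-null test indices
    (H0 : Finset ℕ) (hH0 : H0 ⊆ Finset.Icc 1 m) (hm₀ : H0.card = m₀)
    -- the attack set: a fixed subset of `H0` of cardinality `mₐ`
    (A : Finset ℕ) (hAH0 : A ⊆ H0) (hmₐ : A.card = mₐ)
    -- training and test samples `Z_1, …, Z_{n+m}`
    (Z : Ω → ℕ → 𝒵) (hZmeas : Measurable Z)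
    -- Assumption 1: exchangeability of the nulls given the non-nulls, i.e. the joint law
    -- is invariant under any permutation of the coordinates `{1,…,n} ∪ {n+j : j ∈ H0}`
    (hexch : ∀ σ : Equiv.Perm ℕ,
      (∀ i ∉ Finset.Icc 1 n ∪ H0.image (fun j => n + j), σ i = i) →
      Measure.map (fun ω => fun i => Z ω (σ i)) ℙ = Measure.map Z ℙ)
    -- the attack map, order-invariant in the unordered set `{Z_1,…,Z_n, Z_{n+j} : j ∈ H0 \ A}`
    (fatk : 𝒵 → (ℕ → 𝒵) → 𝒵)
    (hfmeas : Measurable fun q : 𝒵 × (ℕ → 𝒵) => fatk q.1 q.2)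
    (hford : ∀ (z : 𝒵) (data : ℕ → 𝒵) (σ : Equiv.Perm ℕ),
      (∀ i ∉ Finset.Icc 1 n ∪ (H0 \ A).image (fun j => n + j), σ i = i) →
      fatk z (fun i => data (σ i)) = fatk z data)
    -- the post-attack samples: `Z̃_{n+j} = f_attack(Z_{n+j}; data)` for `j ∈ A`, else unchanged
    (Zt : Ω → ℕ → 𝒵)
    (hZtA : ∀ ω, ∀ j ∈ A, Zt ω (n + j) = fatk (Z ω (n + j)) (Z ω))
    (hZtn : ∀ ω i, (∀ j ∈ A, i ≠ n + j) → Zt ω i = Z ω i)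
    -- the post-attack score function, permutation-invariant over the block `{k+1,…,n+m}`
    (st : 𝒵 → (ℕ → 𝒵) → ℝ)
    (hstmeas : Measurable fun q : 𝒵 × (ℕ → 𝒵) => st q.1 q.2)
    (hstinv : ∀ (z : 𝒵) (data : ℕ → 𝒵) (σ : Equiv.Perm ℕ),
      (∀ i ∉ Finset.Icc (k + 1) (n + m), σ i = i) →
      st z (fun i => data (σ i)) = st z data)
    -- the post-attack scores `S_i = s̃(Z̃_i; Z̃)`
    (S : Ω → ℕ → ℝ) (hS : ∀ ω i, S ω i = st (Zt ω i) (Zt ω))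
    -- the post-attack scores are almost surely pairwise distinct
    (hdist : ∀ᵐ ω ∂ℙ, ∀ i ∈ Finset.Icc (k + 1) (n + m), ∀ j ∈ Finset.Icc (k + 1) (n + m),
      i ≠ j → S ω i ≠ S ω j)
    -- the post-attack conformal p-values
    (p : Ω → ℕ → ℝ)
    (hp : ∀ ω j, p ω j =
      (1 + (((Finset.Icc (k + 1) n).filter fun i => S ω (n + j) ≤ S ω i).card : ℝ)) /
        ((n : ℝ) - k + 1))
    -- BH threshold and rejection set at level `α`, number of rejections and false discoveries
    (τ : Ω → ℕ) (hτ : ∀ ω, τ ω = BHindex m α (p ω))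
    (Rej : Ω → Finset ℕ)
    (hRej : ∀ ω, Rej ω = (Finset.Icc 1 m).filter fun j => p ω j ≤ α * τ ω / m)
    (Rt : Ω → ℕ) (hRt : ∀ ω, Rt ω = (Rej ω).card)
    (Vt : Ω → ℕ) (hVt : ∀ ω, Vt ω = ((Rej ω).filter fun j => j ∈ H0).card) :
    ∫ ω, (Vt ω : ℝ) / ((max (Rt ω) 1 : ℕ) : ℝ) ∂ℙ ≤
      α + (mₐ : ℝ) * ∫ ω, 1 / ((max (Rt ω) 1 : ℕ) : ℝ) ∂ℙ := by
  classical
  have hmR : (0:ℝ) < m := by exact_mod_cast hm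
  have hD : (0:ℝ) < (n : ℝ) - k + 1 := by
    have : (k:ℝ) ≤ n := by exact_mod_cast hkn
    linarith
  -- the deterministic post-attack sample map and score map
  set G : (ℕ → 𝒵) → ℕ → 𝒵 :=
    fun z x => if x ∈ A.image (fun j => n + j) then fatk (z x) z else z x with hGdef
  set sc : (ℕ → 𝒵) → ℕ → ℝ := fun z x => st (G z x) (G z) with hscdef
  have hZtG : ∀ ω, Zt ω = G (Z ω) := by
    intro ω; funext x
    by_cases hx : x ∈ A.image (fun j => n + j)
    · obtain ⟨j', hj'A, hj'x⟩ := Finset.mem_image.mp hx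
      rw [← hj'x, hZtA ω j' hj'A]
      have : G (Z ω) (n + j') = fatk (Z ω (n + j')) (Z ω) := by
        rw [hGdef]
        simp only
        rw [if_pos (hj'x ▸ hx)]
      rw [this]
    · have hne : ∀ j' ∈ A, x ≠ n + j' := by
        intro j' hj' he
        exact hx (Finset.mem_image.mpr ⟨j', hj', he.symm⟩)
      rw [hZtn ω x hne]
      rw [hGdef]
      simp only
      rw [if_neg hx]
  have hSsc : ∀ ω, S ω = sc (Z ω) := by
    intro ω; funext x
    rw [hS ω x, hZtG ω, hscdef]
  have hp' : ∀ ω, p ω = pval n k (sc (Z ω)) := by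
    intro ω; funext l
    rw [hp ω l, hSsc ω]
    rfl
  have hτ' : ∀ ω, τ ω = tauOf n m k α (sc (Z ω)) := by
    intro ω; rw [hτ ω, hp' ω]; rfl
  have hRej' : ∀ ω, Rej ω = rejOf n m k α (sc (Z ω)) := by
    intro ω
    rw [hRej ω, hp' ω, hτ' ω]
    rfl
  have hRt' : ∀ ω, Rt ω = (rejOf n m k α (sc (Z ω))).card := by
    intro ω; rw [hRt ω, hRej' ω]
  -- measurability of the score pipeline
  have hGmeas : Measurable G := by
    apply measurable_pi_lambda
    intro x
    by_cases hx : x ∈ A.image (fun j => n + j)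
    · have : (fun z : ℕ → 𝒵 => G z x) = fun z => fatk (z x) z := by
        funext z; rw [hGdef]; simp only; rw [if_pos hx]
      rw [this]
      have he2 : (fun z : ℕ → 𝒵 => fatk (z x) z)
          = (fun q : 𝒵 × (ℕ → 𝒵) => fatk q.1 q.2) ∘ (fun z => (z x, z)) := rfl
      rw [he2]
      exact hfmeas.comp ((measurable_pi_apply x).prodMk measurable_id)
    · have : (fun z : ℕ → 𝒵 => G z x) = fun z => z x := by
        funext z; rw [hGdef]; simp only; rw [if_neg hx]
      rw [this]
      exact measurable_pi_apply x
  have hscmeas : ∀ x, Measurable fun z : ℕ → 𝒵 => sc z x := by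
    intro x
    have he2 : (fun z : ℕ → 𝒵 => sc z x)
        = (fun q : 𝒵 × (ℕ → 𝒵) => st q.1 q.2) ∘ (fun z => (G z x, G z)) := rfl
    rw [he2]
    exact hstmeas.comp (((measurable_pi_apply x).comp hGmeas).prodMk hGmeas)
  have hpvalmeas : ∀ l, Measurable fun z : ℕ → 𝒵 => pval n k (sc z) l := by
    intro l
    have hcard : Measurable fun z : ℕ → 𝒵 =>
        (((Finset.Icc (k + 1) n).filter fun i => sc z (n + l) ≤ sc z i).card : ℝ) := by
      have he : (fun z : ℕ → 𝒵 =>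
          (((Finset.Icc (k + 1) n).filter fun i => sc z (n + l) ≤ sc z i).card : ℝ))
          = fun z => ∑ i ∈ Finset.Icc (k + 1) n, if sc z (n + l) ≤ sc z i then (1:ℝ) else 0 := by
        funext z; rw [Finset.natCast_card_filter]
      rw [he]
      apply Finset.measurable_sum
      intro i _
      exact Measurable.ite (measurableSet_le (hscmeas (n + l)) (hscmeas i))
        measurable_const measurable_const
    show Measurable fun z : ℕ → 𝒵 =>
      (1 + (((Finset.Icc (k + 1) n).filter fun i => sc z (n + l) ≤ sc z i).card : ℝ)) /
        ((n : ℝ) - k + 1)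
    exact (measurable_const.add hcard).div_const _
  have hBHsetMS : ∀ r : ℕ,
      MeasurableSet {z : ℕ → 𝒵 | r ∈ BHset m α (pval n k (sc z))} := by
    intro r
    by_cases hrm : r ≤ m
    · have hcard : Measurable fun z : ℕ → 𝒵 =>
          (((Finset.Icc 1 m).filter fun l => pval n k (sc z) l ≤ α * r / m).card : ℝ) := by
        have he : (fun z : ℕ → 𝒵 =>
            (((Finset.Icc 1 m).filter fun l => pval n k (sc z) l ≤ α * r / m).card : ℝ))
            = fun z => ∑ l ∈ Finset.Icc 1 m, if pval n k (sc z) l ≤ α * r / m then (1:ℝ) else 0 := by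
          funext z; rw [Finset.natCast_card_filter]
        rw [he]
        apply Finset.measurable_sum
        intro l _
        exact Measurable.ite (measurableSet_le (hpvalmeas l) measurable_const)
          measurable_const measurable_const
      have he : {z : ℕ → 𝒵 | r ∈ BHset m α (pval n k (sc z))}
          = {z : ℕ → 𝒵 | (r : ℝ) ≤
              (((Finset.Icc 1 m).filter fun l => pval n k (sc z) l ≤ α * r / m).card : ℝ)} := by
        ext z
        simp only [Set.mem_setOf_eq, BHset, Nat.cast_le, hrm, true_and]
      rw [he]
      exact measurableSet_le measurable_const hcard
    · have he : {z : ℕ → 𝒵 | r ∈ BHset m α (pval n k (sc z))} = ∅ := by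
        ext z
        simp only [Set.mem_setOf_eq, BHset, Set.mem_empty_iff_false, iff_false]
        intro hmem
        exact hrm hmem.1
      rw [he]
      exact MeasurableSet.empty
  have hτmeas : Measurable fun z : ℕ → 𝒵 => tauOf n m k α (sc z) := by
    apply measurable_to_countable'
    intro r
    have he : (fun z : ℕ → 𝒵 => tauOf n m k α (sc z)) ⁻¹' {r}
        = {z : ℕ → 𝒵 | r ∈ BHset m α (pval n k (sc z))} ∩
          ⋂ (r' : ℕ) (_ : r' ∈ Finset.range (m + 1)),
            {z : ℕ → 𝒵 | r' ∈ BHset m α (pval n k (sc z)) → r' ≤ r} := by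
      ext z
      simp only [Set.mem_preimage, Set.mem_singleton_iff, tauOf, BHindex_eq_iff,
        Set.mem_inter_iff, Set.mem_setOf_eq, Set.mem_iInter]
      constructor
      · rintro ⟨h1, h2⟩
        exact ⟨h1, fun r' _ hr' => h2 r' hr'⟩
      · rintro ⟨h1, h2⟩
        refine ⟨h1, fun r' hr' => h2 r' ?_ hr'⟩
        exact Finset.mem_range.mpr (Nat.lt_succ_of_le hr'.1)
    rw [he]
    apply (hBHsetMS r).inter
    apply MeasurableSet.biInter (Set.to_countable _)
    intro r' _
    by_cases hle : r' ≤ r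
    · have he2 : {z : ℕ → 𝒵 | r' ∈ BHset m α (pval n k (sc z)) → r' ≤ r} = Set.univ := by
        ext z; simp [hle]
      rw [he2]
      exact MeasurableSet.univ
    · have he2 : {z : ℕ → 𝒵 | r' ∈ BHset m α (pval n k (sc z)) → r' ≤ r}
          = {z : ℕ → 𝒵 | r' ∈ BHset m α (pval n k (sc z))}ᶜ := by
        ext z; simp [hle]
      rw [he2]
      exact (hBHsetMS r').compl
  have hτRmeas : Measurable fun z : ℕ → 𝒵 => ((tauOf n m k α (sc z) : ℕ) : ℝ) :=
    Measurable.comp (f := fun z : ℕ → 𝒵 => tauOf n m k α (sc z))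
      (g := fun r : ℕ => (r : ℝ)) Measurable.of_discrete hτmeas
  have hrejMS : ∀ j : ℕ, MeasurableSet {z : ℕ → 𝒵 | j ∈ rejOf n m k α (sc z)} := by
    intro j
    by_cases hjm : j ∈ Finset.Icc 1 m
    · have he : {z : ℕ → 𝒵 | j ∈ rejOf n m k α (sc z)}
          = {z : ℕ → 𝒵 | pval n k (sc z) j ≤ α * ((tauOf n m k α (sc z) : ℕ) : ℝ) / m} := by
        ext z
        simp only [Set.mem_setOf_eq, mem_rejOf, hjm, true_and]
      rw [he]
      exact measurableSet_le (hpvalmeas j) ((hτRmeas.const_mul α).div_const m)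
    · have he : {z : ℕ → 𝒵 | j ∈ rejOf n m k α (sc z)} = ∅ := by
        ext z
        simp only [Set.mem_setOf_eq, mem_rejOf, Set.mem_empty_iff_false, iff_false]
        intro hmem
        exact hjm hmem.1
      rw [he]
      exact MeasurableSet.empty
  have hvalmeas : ∀ j : ℕ, Measurable fun z : ℕ → 𝒵 => valOf n m k α j (sc z) := by
    intro j
    have he : (fun z : ℕ → 𝒵 => valOf n m k α j (sc z)) = fun z =>
        if j ∈ rejOf n m k α (sc z) then (((max (tauOf n m k α (sc z)) 1 : ℕ) : ℝ))⁻¹ else 0 := by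
      funext z
      rw [valOf, card_rejOf n m k α hm hα0.le]
    rw [he]
    exact Measurable.ite (hrejMS j)
      (Measurable.comp (g := fun r : ℕ => (((max r 1 : ℕ) : ℝ))⁻¹)
        Measurable.of_discrete hτmeas) measurable_const
  -- integrability of the basic integrands
  have hval_int : ∀ j : ℕ, Integrable (fun ω => valOf n m k α j (sc (Z ω))) ℙ := by
    intro j
    refine Integrable.mono' (integrable_const (1:ℝ))
      (((hvalmeas j).comp hZmeas).aestronglyMeasurable) (ae_of_all _ fun ω => ?_)
    rw [Real.norm_eq_abs, abs_of_nonneg (valOf_nonneg n m k α j _)]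
    exact valOf_le_one n m k α j _
  have hinv_eq : (fun ω => 1 / ((max (Rt ω) 1 : ℕ) : ℝ))
      = fun ω => (((max (rejOf n m k α (sc (Z ω))).card 1 : ℕ) : ℝ))⁻¹ := by
    funext ω
    rw [hRt' ω, one_div]
  have hinv_meas : Measurable fun ω => 1 / ((max (Rt ω) 1 : ℕ) : ℝ) := by
    rw [hinv_eq]
    have he : (fun ω => (((max (rejOf n m k α (sc (Z ω))).card 1 : ℕ) : ℝ))⁻¹)
        = fun ω => (((max (tauOf n m k α (sc (Z ω))) 1 : ℕ) : ℝ))⁻¹ := by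
      funext ω
      rw [card_rejOf n m k α hm hα0.le]
    rw [he]
    exact (Measurable.comp (g := fun r : ℕ => (((max r 1 : ℕ) : ℝ))⁻¹)
      Measurable.of_discrete hτmeas).comp hZmeas
  have hinv_int : Integrable (fun ω => 1 / ((max (Rt ω) 1 : ℕ) : ℝ)) ℙ := by
    refine Integrable.mono' (integrable_const (1:ℝ))
      hinv_meas.aestronglyMeasurable (ae_of_all _ fun ω => ?_)
    rw [hRt' ω, one_div]
    rw [Real.norm_eq_abs, abs_of_nonneg (inv_max_nonneg _)]
    exact inv_max_le_one _
  -- rewrite the FDP as a sum of per-hypothesis contributions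
  have hLHSfun : (fun ω => (Vt ω : ℝ) / ((max (Rt ω) 1 : ℕ) : ℝ))
      = fun ω => ∑ j ∈ H0, valOf n m k α j (sc (Z ω)) := by
    funext ω
    rw [hVt ω, hRej' ω, hRt' ω]
    exact sum_valOf n m k α H0 (sc (Z ω))
  rw [hLHSfun, integral_finset_sum H0 (fun j _ => hval_int j)]
  -- the key per-null bound
  have hkey : ∀ j ∈ H0 \ A, ∫ ω, valOf n m k α j (sc (Z ω)) ∂ℙ ≤ α / m := by
    intro j hjdiff
    obtain ⟨hjH0, hjA⟩ := Finset.mem_sdiff.mp hjdiff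
    obtain ⟨hj1, hjm⟩ := Finset.mem_Icc.mp (hH0 hjH0)
    set C : Finset ℕ := insert (n + j) (Finset.Icc (k + 1) n) with hC
    have hnjIcc : n + j ∉ Finset.Icc (k + 1) n := by simp; omega
    have hcardC : C.card = n - k + 1 := by
      rw [hC, Finset.card_insert_of_notMem hnjIcc, Nat.card_Icc]
      omega
    have hCmem : ∀ i ∈ C, (k + 1 ≤ i ∧ i ≤ n) ∨ i = n + j := by
      intro i hi
      rcases Finset.mem_insert.mp hi with h | h
      · exact Or.inr h
      · exact Or.inl (Finset.mem_Icc.mp h)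
    -- basic facts about the transpositions σᵢ = (i, n+j)
    have hσother : ∀ (i x : ℕ), x ≠ i → x ≠ n + j → Equiv.swap i (n + j) x = x := by
      intro i x h1 h2
      exact Equiv.swap_apply_of_ne_of_ne h1 h2
    have hfix1 : ∀ i ∈ C, ∀ x ∉ Finset.Icc 1 n ∪ H0.image (fun j => n + j),
        Equiv.swap i (n + j) x = x := by
      intro i hiC x hx
      rw [Finset.mem_union, Finset.mem_Icc, Finset.mem_image] at hx
      push_neg at hx
      apply hσother
      · intro he
        rcases hCmem i hiC with ⟨h1, h2⟩ | h3
        · have hx1 : n < x := hx.1 (by omega)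
          omega
        · exact hx.2 j hjH0 (by omega)
      · intro he
        exact hx.2 j hjH0 he.symm
    have hfix2 : ∀ i ∈ C, ∀ x ∉ Finset.Icc 1 n ∪ (H0 \ A).image (fun j => n + j),
        Equiv.swap i (n + j) x = x := by
      intro i hiC x hx
      rw [Finset.mem_union, Finset.mem_Icc, Finset.mem_image] at hx
      push_neg at hx
      apply hσother
      · intro he
        rcases hCmem i hiC with ⟨h1, h2⟩ | h3
        · have hx1 : n < x := hx.1 (by omega)
          omega
        · exact hx.2 j (Finset.mem_sdiff.mpr ⟨hjH0, hjA⟩) (by omega)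
      · intro he
        exact hx.2 j (Finset.mem_sdiff.mpr ⟨hjH0, hjA⟩) he.symm
    have hfix3 : ∀ i ∈ C, ∀ x ∉ Finset.Icc (k + 1) (n + m),
        Equiv.swap i (n + j) x = x := by
      intro i hiC x hx
      rw [Finset.mem_Icc] at hx
      push_neg at hx
      apply hσother
      · intro he
        rcases hCmem i hiC with ⟨h1, h2⟩ | h3
        · omega
        · omega
      · intro he
        omega
    have hfixatt : ∀ i ∈ C, ∀ x ∈ A.image (fun j' => n + j'),
        Equiv.swap i (n + j) x = x := by
      intro i hiC x hx
      obtain ⟨j', hj'A, hj'x⟩ := Finset.mem_image.mp hx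
      have hj'1 : 1 ≤ j' := (Finset.mem_Icc.mp (hH0 (hAH0 hj'A))).1
      apply hσother
      · intro he
        rcases hCmem i hiC with ⟨h1, h2⟩ | h3
        · omega
        · have : j' = j := by omega
          exact hjA (this ▸ hj'A)
      · intro he
        have : j' = j := by omega
        exact hjA (this ▸ hj'A)
    -- equivariance of the attacked-sample map and of the score map
    have hGσ : ∀ i ∈ C, ∀ z : ℕ → 𝒵,
        G (fun x => z (Equiv.swap i (n + j) x)) = fun x => G z (Equiv.swap i (n + j) x) := by
      intro i hiC z
      funext x
      by_cases hx : x ∈ A.image (fun j' => n + j')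
      · have hσx : Equiv.swap i (n + j) x = x := hfixatt i hiC x hx
        have e1 : G (fun y => z (Equiv.swap i (n + j) y)) x
            = fatk (z (Equiv.swap i (n + j) x)) (fun y => z (Equiv.swap i (n + j) y)) := by
          rw [hGdef]; simp only; rw [if_pos hx]
        have e2 : G z (Equiv.swap i (n + j) x) = fatk (z x) z := by
          rw [hGdef]; simp only; rw [hσx, if_pos hx]
        rw [e1, e2, hσx]
        exact hford (z x) z (Equiv.swap i (n + j)) (hfix2 i hiC)
      · have hσx : Equiv.swap i (n + j) x ∉ A.image (fun j' => n + j') := by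
          intro hmem
          have h1 : Equiv.swap i (n + j) (Equiv.swap i (n + j) x) = Equiv.swap i (n + j) x :=
            hfixatt i hiC _ hmem
          have h2 : Equiv.swap i (n + j) (Equiv.swap i (n + j) x) = x :=
            Equiv.swap_apply_self _ _ _
          rw [h2] at h1
          exact hx (h1 ▸ hmem)
        have e1 : G (fun y => z (Equiv.swap i (n + j) y)) x = z (Equiv.swap i (n + j) x) := by
          rw [hGdef]; simp only; rw [if_neg hx]
        have e2 : G z (Equiv.swap i (n + j) x) = z (Equiv.swap i (n + j) x) := by
          rw [hGdef]; simp only; rw [if_neg hσx]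
        rw [e1, e2]
    have hscσ : ∀ i ∈ C, ∀ z : ℕ → 𝒵,
        sc (fun x => z (Equiv.swap i (n + j) x)) = fun x => sc z (Equiv.swap i (n + j) x) := by
      intro i hiC z
      funext x
      have e1 : sc (fun y => z (Equiv.swap i (n + j) y)) x
          = st (G (fun y => z (Equiv.swap i (n + j) y)) x)
              (G (fun y => z (Equiv.swap i (n + j) y))) := rfl
      rw [e1, hGσ i hiC z]
      exact hstinv (G z (Equiv.swap i (n + j) x)) (G z) (Equiv.swap i (n + j)) (hfix3 i hiC)
    have hZσmeas : ∀ i : ℕ, Measurable (fun ω => fun x => Z ω (Equiv.swap i (n + j) x)) := by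
      intro i
      exact measurable_pi_lambda _ (fun x => (measurable_pi_apply _).comp hZmeas)
    -- invariance of the integral under each swap
    have main : ∀ i ∈ C, ∫ ω, valOf n m k α j (sc (Z ω)) ∂ℙ
        = ∫ ω, valOf n m k α j (fun x => sc (Z ω) (Equiv.swap i (n + j) x)) ∂ℙ := by
      intro i hiC
      have hlaw := hexch (Equiv.swap i (n + j)) (hfix1 i hiC)
      have e1 : ∫ ω, valOf n m k α j (sc (Z ω)) ∂ℙ
          = ∫ z, valOf n m k α j (sc z) ∂(Measure.map Z ℙ) :=
        (integral_map hZmeas.aemeasurable ((hvalmeas j).aestronglyMeasurable)).symm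
      have e3 : ∫ z, valOf n m k α j (sc z)
            ∂(Measure.map (fun ω => fun x => Z ω (Equiv.swap i (n + j) x)) ℙ)
          = ∫ ω, valOf n m k α j (sc (fun x => Z ω (Equiv.swap i (n + j) x))) ∂ℙ :=
        integral_map (hZσmeas i).aemeasurable ((hvalmeas j).aestronglyMeasurable)
      rw [e1, ← hlaw, e3]
      apply integral_congr_ae
      apply ae_of_all
      intro ω
      show valOf n m k α j (sc fun x => Z ω (Equiv.swap i (n + j) x))
          = valOf n m k α j (fun x => sc (Z ω) (Equiv.swap i (n + j) x))
      rw [hscσ i hiC (Z ω)]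
    -- integrability of the swapped integrands
    have hswap_int : ∀ i ∈ C,
        Integrable (fun ω => valOf n m k α j (fun x => sc (Z ω) (Equiv.swap i (n + j) x))) ℙ := by
      intro i hiC
      refine Integrable.mono' (integrable_const (1:ℝ)) ?_ (ae_of_all _ fun ω => ?_)
      · apply Measurable.aestronglyMeasurable
        have he : (fun ω => valOf n m k α j (fun x => sc (Z ω) (Equiv.swap i (n + j) x)))
            = (fun z : ℕ → 𝒵 => valOf n m k α j (sc z))
              ∘ (fun ω => fun x => Z ω (Equiv.swap i (n + j) x)) := by
          funext ω
          simp only [Function.comp_apply]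
          rw [hscσ i hiC (Z ω)]
        rw [he]
        exact (hvalmeas j).comp (hZσmeas i)
      · rw [Real.norm_eq_abs, abs_of_nonneg (valOf_nonneg n m k α j _)]
        exact valOf_le_one n m k α j _
    -- averaging over the orbit
    have horbit : ((C.card : ℕ) : ℝ) * ∫ ω, valOf n m k α j (sc (Z ω)) ∂ℙ
        = ∫ ω, ∑ i ∈ C, valOf n m k α j (fun x => sc (Z ω) (Equiv.swap i (n + j) x)) ∂ℙ := by
      rw [integral_finset_sum C hswap_int]
      rw [Finset.sum_congr rfl (fun i hi => (main i hi).symm), Finset.sum_const,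
        nsmul_eq_mul]
    -- the a.e. pointwise bound from the deterministic core lemma
    have hae : ∀ᵐ ω ∂ℙ,
        ∑ i ∈ C, valOf n m k α j (fun x => sc (Z ω) (Equiv.swap i (n + j) x))
          ≤ ((n : ℝ) - k + 1) * (α / m) := by
      filter_upwards [hdist] with ω hω
      apply core n m k α hkn hm hα0 (sc (Z ω)) ?_ j hj1 hjm
      intro i hi i' hi' hne
      have := hω i hi i' hi' hne
      rwa [hSsc ω] at this
    have hsum_int : Integrable
        (fun ω => ∑ i ∈ C, valOf n m k α j (fun x => sc (Z ω) (Equiv.swap i (n + j) x))) ℙ :=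
      integrable_finset_sum C hswap_int
    have hbound : ((C.card : ℕ) : ℝ) * ∫ ω, valOf n m k α j (sc (Z ω)) ∂ℙ
        ≤ ((n : ℝ) - k + 1) * (α / m) := by
      rw [horbit]
      calc ∫ ω, ∑ i ∈ C, valOf n m k α j (fun x => sc (Z ω) (Equiv.swap i (n + j) x)) ∂ℙ
          ≤ ∫ _ω, ((n : ℝ) - k + 1) * (α / m) ∂ℙ :=
            integral_mono_ae hsum_int (integrable_const _) hae
        _ = ((n : ℝ) - k + 1) * (α / m) := by
            rw [integral_const]
            simp
    have hcardCR : ((C.card : ℕ) : ℝ) = (n : ℝ) - k + 1 := by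
      rw [hcardC]
      push_cast [Nat.cast_sub hkn]
      ring
    rw [hcardCR] at hbound
    have := le_of_mul_le_mul_left (hbound.trans_eq rfl) hD
    -- rearrange: from D * I ≤ D * (α/m) conclude I ≤ α/m
    nlinarith [hbound, hD, mul_le_mul_of_nonneg_left (le_refl (α/m)) hD.le]
  -- bound for the attacked indices
  have hatk : ∀ j ∈ A, ∫ ω, valOf n m k α j (sc (Z ω)) ∂ℙ
      ≤ ∫ ω, 1 / ((max (Rt ω) 1 : ℕ) : ℝ) ∂ℙ := by
    intro j _
    apply integral_mono (hval_int j) hinv_int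
    intro ω
    show valOf n m k α j (sc (Z ω)) ≤ 1 / ((max (Rt ω) 1 : ℕ) : ℝ)
    rw [hRt' ω, one_div]
    exact (valOf_le_inv n m k α j _)
  -- put everything together
  have hsplit : ∑ j ∈ H0, ∫ ω, valOf n m k α j (sc (Z ω)) ∂ℙ
      = (∑ j ∈ H0 \ A, ∫ ω, valOf n m k α j (sc (Z ω)) ∂ℙ)
        + ∑ j ∈ A, ∫ ω, valOf n m k α j (sc (Z ω)) ∂ℙ :=
    (Finset.sum_sdiff hAH0).symm
  rw [hsplit]
  have h1 : ∑ j ∈ H0 \ A, ∫ ω, valOf n m k α j (sc (Z ω)) ∂ℙ ≤ α := by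
    calc ∑ j ∈ H0 \ A, ∫ ω, valOf n m k α j (sc (Z ω)) ∂ℙ
        ≤ ((H0 \ A).card : ℝ) * (α / m) := by
          rw [← nsmul_eq_mul]
          exact Finset.sum_le_card_nsmul _ _ _ hkey
      _ ≤ (m : ℝ) * (α / m) := by
          apply mul_le_mul_of_nonneg_right ?_ (div_nonneg hα0.le hmR.le)
          have hle : (H0 \ A).card ≤ m := by
            calc (H0 \ A).card ≤ H0.card := Finset.card_le_card (Finset.sdiff_subset)
              _ ≤ (Finset.Icc 1 m).card := Finset.card_le_card hH0
              _ = m := by rw [Nat.card_Icc]; omega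
          exact_mod_cast hle
      _ = α := by field_simp
  have h2 : ∑ j ∈ A, ∫ ω, valOf n m k α j (sc (Z ω)) ∂ℙ
      ≤ (mₐ : ℝ) * ∫ ω, 1 / ((max (Rt ω) 1 : ℕ) : ℝ) ∂ℙ := by
    calc ∑ j ∈ A, ∫ ω, valOf n m k α j (sc (Z ω)) ∂ℙ
        ≤ (A.card : ℝ) * ∫ ω, 1 / ((max (Rt ω) 1 : ℕ) : ℝ) ∂ℙ := by
          rw [← nsmul_eq_mul]
          exact Finset.sum_le_card_nsmul _ _ _ hatk
      _ = (mₐ : ℝ) * ∫ ω, 1 / ((max (Rt ω) 1 : ℕ) : ℝ) ∂ℙ := by rw [hmₐ]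
  linarith [h1, h2]


end
end

section
/- Let A ⊆ H_0 be a fixed (deterministic) set of test indices with |A| = m_a, and suppose the attacker's score function s satisfies the permutation-invariance property over the block {k+1,…,n+m} and the attack map f_attack depends on the data only through s (hence is order-invariant in the unordered set {Z_{k+1},…,Z_n, Z_{n+j} : j ∈ H_0∖A}). Under Assumption 1, if the post-attack score function s̃ used by the detector is permutation-invariant and the post-attack scores are almost surely pairwise distinct, then the false discovery rate after the direct decision-based attack satisfies FDR*_{attack-decision} = E[Ṽ/(R̃ ∨ 1)] ≤ α + m_a · E[1/(R̃ ∨ 1)], where the expectations are over the randomness of the training and test samples Z_1,…,Z_{n+m}. -/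
open MeasureTheory ProbabilityTheory Finset

noncomputable section

namespace FDRaux

lemma bh_bdd (m : ℕ) (α : ℝ) (p : ℕ → ℝ) :
    BddAbove {r | r ≤ m ∧ r ≤ ((Finset.Icc 1 m).filter fun j => p j ≤ α * r / m).card} :=
  ⟨m, fun _ hr => hr.1⟩

lemma BHindex_mem (m : ℕ) (α : ℝ) (p : ℕ → ℝ) :
    BHindex m α p ≤ m ∧
      BHindex m α p ≤ ((Finset.Icc 1 m).filter fun j => p j ≤ α * (BHindex m α p) / m).card := by
  have h0 : (0 : ℕ) ∈ {r | r ≤ m ∧ r ≤ ((Finset.Icc 1 m).filter fun j => p j ≤ α * r / m).card} :=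
    ⟨Nat.zero_le _, Nat.zero_le _⟩
  exact Nat.sSup_mem ⟨0, h0⟩ (bh_bdd m α p)

lemma le_BHindex (m : ℕ) (α : ℝ) (p : ℕ → ℝ) (r : ℕ) (h1 : r ≤ m)
    (h2 : r ≤ ((Finset.Icc 1 m).filter fun j => p j ≤ α * r / m).card) :
    r ≤ BHindex m α p :=
  le_csSup (bh_bdd m α p) ⟨h1, h2⟩

lemma BHindex_mono (m : ℕ) (α : ℝ) (p q : ℕ → ℝ)
    (hpq : ∀ l ∈ Finset.Icc 1 m, p l ≤ q l) :
    BHindex m α q ≤ BHindex m α p := by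
  obtain ⟨h1, h2⟩ := BHindex_mem m α q
  refine le_BHindex m α p _ h1 (h2.trans (Finset.card_le_card ?_))
  intro l hl
  simp only [Finset.mem_filter] at hl ⊢
  exact ⟨hl.1, (hpq l hl.1).trans hl.2⟩

lemma card_rej_eq_BHindex (m : ℕ) (α : ℝ) (hα : 0 ≤ α) (p : ℕ → ℝ) :
    ((Finset.Icc 1 m).filter fun j => p j ≤ α * (BHindex m α p) / m).card = BHindex m α p := by
  obtain ⟨h1, h2⟩ := BHindex_mem m α p
  set R := ((Finset.Icc 1 m).filter fun j => p j ≤ α * (BHindex m α p) / m).card with hR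
  refine le_antisymm ?_ h2
  have hRm : R ≤ m := (Finset.card_filter_le _ _).trans (by simp)
  refine le_BHindex m α p R hRm ?_
  have hsub : ((Finset.Icc 1 m).filter fun j => p j ≤ α * (BHindex m α p) / m) ⊆
      ((Finset.Icc 1 m).filter fun j => p j ≤ α * R / m) := by
    intro l hl
    simp only [Finset.mem_filter] at hl ⊢
    refine ⟨hl.1, hl.2.trans ?_⟩
    have hcast : (BHindex m α p : ℝ) ≤ (R : ℝ) := by exact_mod_cast h2
    gcongr
  exact hR ▸ Finset.card_le_card hsub


lemma crux_sum (D : Finset ℕ) (r g : ℕ → ℕ) (c₀ : ℝ) (hc₀ : 0 < c₀)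
    (hr1 : ∀ c ∈ D, 1 ≤ r c) (hrinj : Set.InjOn r D)
    (hanti : ∀ c ∈ D, ∀ c' ∈ D, r c ≤ r c' → g c' ≤ g c) :
    ∑ c ∈ D, (if (r c : ℝ) ≤ c₀ * g c then (1:ℝ) else 0) / ((max (g c) 1 : ℕ) : ℝ) ≤ c₀ := by
  classical
  set T := D.filter (fun c => (r c : ℝ) ≤ c₀ * g c) with hT
  have hsum : ∑ c ∈ D, (if (r c : ℝ) ≤ c₀ * g c then (1:ℝ) else 0) / ((max (g c) 1 : ℕ) : ℝ)
      = ∑ c ∈ T, 1 / ((max (g c) 1 : ℕ) : ℝ) := by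
    rw [hT, Finset.sum_filter]
    refine Finset.sum_congr rfl fun c _ => ?_
    by_cases hc : (r c : ℝ) ≤ c₀ * g c <;> simp [hc]
  rw [hsum]
  rcases T.eq_empty_or_nonempty with hTe | hTne
  · rw [hTe]; simp [hc₀.le]
  obtain ⟨cs, hcs, hmax⟩ := T.exists_max_image r hTne
  have hcsD : cs ∈ D := (Finset.mem_filter.mp hcs).1
  have hcsle : (r cs : ℝ) ≤ c₀ * g cs := (Finset.mem_filter.mp hcs).2
  have hg1 : 1 ≤ g cs := by
    by_contra hg
    push_neg at hg
    interval_cases h : g cs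
    · have : (r cs : ℝ) ≤ 0 := by simpa using hcsle
      have := hr1 cs hcsD
      have : (1 : ℝ) ≤ r cs := by exact_mod_cast this
      linarith
  have hstep : ∑ c ∈ T, 1 / ((max (g c) 1 : ℕ) : ℝ) ≤ (T.card : ℝ) / g cs := by
    rw [Finset.card_eq_sum_ones T]
    push_cast
    rw [Finset.sum_div]
    refine Finset.sum_le_sum fun c hc => ?_
    have hcD : c ∈ D := (Finset.mem_filter.mp hc).1
    have hgc : g cs ≤ g c := hanti c hcD cs hcsD (hmax c hc)
    have h1' : (1:ℝ) ≤ (g c : ℝ) := by exact_mod_cast hg1.trans hgc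
    rw [max_eq_left h1']
    have h1 : (0:ℝ) < g cs := by exact_mod_cast hg1
    have h2 : (g cs : ℝ) ≤ g c := by exact_mod_cast hgc
    exact one_div_le_one_div_of_le h1 h2
  have hcard : T.card ≤ r cs := by
    have : T.card ≤ (Finset.Icc 1 (r cs)).card := by
      refine Finset.card_le_card_of_injOn r ?_ ?_
      · intro c hc
        simp only [Finset.mem_coe, Finset.coe_Icc, Set.mem_Icc, Finset.mem_Icc]
        exact ⟨hr1 c (Finset.mem_filter.mp hc).1, hmax c hc⟩
      · exact hrinj.mono (fun c hc => (Finset.mem_filter.mp hc).1)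
    simpa using this
  have hgpos : (0:ℝ) < g cs := by exact_mod_cast hg1
  calc ∑ c ∈ T, 1 / ((max (g c) 1 : ℕ) : ℝ) ≤ (T.card : ℝ) / g cs := hstep
    _ ≤ (r cs : ℝ) / g cs := by gcongr <;> exact_mod_cast hcard
    _ ≤ (c₀ * g cs) / g cs := by gcongr
    _ = c₀ := by field_simp


/-- the index set `D = {k+1,…,n} ∪ {n+j}` -/
def DD (n k j : ℕ) : Finset ℕ := insert (n + j) (Finset.Icc (k + 1) n)

lemma njd_not_mem_Icc {n k j : ℕ} (hj1 : 1 ≤ j) : n + j ∉ Finset.Icc (k + 1) n := by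
  simp only [Finset.mem_Icc]; omega

lemma card_DD {n k j : ℕ} (hkn : k ≤ n) (hj1 : 1 ≤ j) : (DD n k j).card = n - k + 1 := by
  rw [DD, Finset.card_insert_of_notMem (njd_not_mem_Icc hj1), Nat.card_Icc]
  omega

lemma image_swap {n k j : ℕ} (hj1 : 1 ≤ j) {c : ℕ} (hc : c ∈ DD n k j) :
    (Finset.Icc (k + 1) n).image (Equiv.swap c (n + j)) = (DD n k j).erase c := by
  classical
  rcases Finset.mem_insert.mp hc with hcj | hcI
  · subst hcj
    rw [Equiv.swap_self, show ⇑(Equiv.refl ℕ) = id from rfl, Finset.image_id, DD,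
      Finset.erase_insert (njd_not_mem_Icc hj1)]
  · have hcne : c ≠ n + j := by
      have := Finset.mem_Icc.mp hcI; omega
    rw [DD, Finset.erase_insert_of_ne (Ne.symm hcne)]
    have himg : ((Finset.Icc (k + 1) n).erase c).image (Equiv.swap c (n + j)) =
        (Finset.Icc (k + 1) n).erase c := by
      rw [Finset.image_congr (g := id), Finset.image_id]
      intro x hx
      simp only [Finset.mem_coe, Finset.mem_erase, Finset.mem_Icc] at hx
      have hx1 : x ≠ c := hx.1
      have hx2 : x ≠ n + j := by omega
      simp [Equiv.swap_apply_of_ne_of_ne hx1 hx2]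
    calc (Finset.Icc (k + 1) n).image (Equiv.swap c (n + j))
        = (insert c ((Finset.Icc (k + 1) n).erase c)).image (Equiv.swap c (n + j)) := by
          rw [Finset.insert_erase hcI]
      _ = insert (n + j) ((Finset.Icc (k + 1) n).erase c) := by
          rw [Finset.image_insert, Equiv.swap_apply_left, himg]

lemma count_swap {n k j : ℕ} (hj1 : 1 ≤ j) {c : ℕ} (hc : c ∈ DD n k j)
    (s : ℕ → ℝ) (x : ℝ) :
    ((Finset.Icc (k + 1) n).filter fun i => x ≤ s (Equiv.swap c (n + j) i)).card
      = (((DD n k j).erase c).filter fun i => x ≤ s i).card := by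
  classical
  rw [← image_swap hj1 hc, Finset.filter_image,
    Finset.card_image_of_injective _ (Equiv.injective _)]


def pvMap (n k : ℕ) (s : ℕ → ℝ) (l : ℕ) : ℝ :=
  (1 + (((Finset.Icc (k + 1) n).filter fun i => s (n + l) ≤ s i).card : ℝ)) /
    ((n : ℝ) - k + 1)

def rankD (n k j : ℕ) (s : ℕ → ℝ) (c : ℕ) : ℕ :=
  ((DD n k j).filter fun i => s c ≤ s i).card

lemma pv_swap_j {n k j : ℕ} (hj1 : 1 ≤ j) {c : ℕ} (hc : c ∈ DD n k j) (s : ℕ → ℝ) :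
    pvMap n k (fun i => s (Equiv.swap c (n + j) i)) j
      = (rankD n k j s c : ℝ) / ((n : ℝ) - k + 1) := by
  classical
  rw [pvMap]
  have h1 : s (Equiv.swap c (n + j) (n + j)) = s c := by rw [Equiv.swap_apply_right]
  simp only [h1]
  rw [count_swap hj1 hc s (s c), Finset.filter_erase]
  have hcmem : c ∈ (DD n k j).filter fun i => s c ≤ s i :=
    Finset.mem_filter.mpr ⟨hc, le_refl _⟩
  congr 1
  rw [rankD, ← Finset.card_erase_add_one hcmem]
  push_cast
  ring

lemma count_erase_mono {n k j : ℕ} {c c' : ℕ} (hc : c ∈ DD n k j) (hc' : c' ∈ DD n k j)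
    (s : ℕ → ℝ) (hsc : s c' ≤ s c) (x : ℝ) :
    (((DD n k j).erase c).filter fun i => x ≤ s i).card
      ≤ (((DD n k j).erase c').filter fun i => x ≤ s i).card := by
  classical
  rw [Finset.filter_erase, Finset.filter_erase, Finset.card_erase_eq_ite,
    Finset.card_erase_eq_ite]
  by_cases hx : x ≤ s c
  · have h1 : c ∈ (DD n k j).filter fun i => x ≤ s i := Finset.mem_filter.mpr ⟨hc, hx⟩
    simp only [h1, if_true]
    split
    · exact le_refl _
    · exact Nat.sub_le _ _
  · have hx' : ¬ x ≤ s c' := fun hxx => hx (hxx.trans hsc)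
    have h1 : c ∉ (DD n k j).filter fun i => x ≤ s i := by
      simp [Finset.mem_filter, hx]
    have h2 : c' ∉ (DD n k j).filter fun i => x ≤ s i := by
      simp [Finset.mem_filter, hx']
    simp [h1, h2]

lemma one_le_rank {n k j : ℕ} {c : ℕ} (hc : c ∈ DD n k j) (s : ℕ → ℝ) :
    1 ≤ rankD n k j s c := by
  rw [rankD, Nat.one_le_iff_ne_zero, ← Nat.pos_iff_ne_zero, Finset.card_pos]
  exact ⟨c, Finset.mem_filter.mpr ⟨hc, le_refl _⟩⟩

lemma rank_lt {n k j : ℕ} {c c' : ℕ} (hc : c ∈ DD n k j) (hc' : c' ∈ DD n k j)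
    (s : ℕ → ℝ) (h : s c < s c') : rankD n k j s c' < rankD n k j s c := by
  classical
  rw [rankD, rankD]
  refine Finset.card_lt_card ?_
  rw [Finset.ssubset_iff_of_subset]
  · exact ⟨c, Finset.mem_filter.mpr ⟨hc, le_refl _⟩, by simp [Finset.mem_filter, not_le.mpr h]⟩
  · intro i hi
    simp only [Finset.mem_filter] at hi ⊢
    exact ⟨hi.1, (le_of_lt h).trans hi.2⟩

lemma rank_le_imp {n k j : ℕ} {c c' : ℕ} (hc : c ∈ DD n k j) (hc' : c' ∈ DD n k j)
    (s : ℕ → ℝ) (h : rankD n k j s c ≤ rankD n k j s c') : s c' ≤ s c := by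
  by_contra hlt
  push_neg at hlt
  exact absurd h (not_le.mpr (rank_lt hc hc' s hlt))

lemma rank_injOn {n k j : ℕ} (s : ℕ → ℝ) (hs : Set.InjOn s (DD n k j)) :
    Set.InjOn (rankD n k j s) (DD n k j) := by
  intro c hc c' hc' hrr
  simp only [Finset.mem_coe] at hc hc'
  exact hs hc hc' (le_antisymm (rank_le_imp hc' hc s hrr.ge) (rank_le_imp hc hc' s hrr.le))

lemma pv_swap_ne {n k j : ℕ} (hj1 : 1 ≤ j) {c : ℕ} (hc : c ∈ DD n k j) (s : ℕ → ℝ)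
    {l : ℕ} (hl1 : 1 ≤ l) (hlj : l ≠ j) :
    pvMap n k (fun i => s (Equiv.swap c (n + j) i)) l
      = (1 + ((((DD n k j).erase c).filter fun i => s (n + l) ≤ s i).card : ℝ)) /
          ((n : ℝ) - k + 1) := by
  classical
  have hne1 : n + l ≠ c := by
    rcases Finset.mem_insert.mp hc with hcj | hcI
    · omega
    · have := Finset.mem_Icc.mp hcI; omega
  have hne2 : n + l ≠ n + j := by omega
  have h1 : s (Equiv.swap c (n + j) (n + l)) = s (n + l) := by
    rw [Equiv.swap_apply_of_ne_of_ne hne1 hne2]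
  rw [pvMap]
  simp only [h1]
  rw [count_swap hj1 hc s (s (n + l))]

def τv (n m k : ℕ) (α : ℝ) (s : ℕ → ℝ) : ℕ := BHindex m α (pvMap n k s)

def Rejv (n m k : ℕ) (α : ℝ) (s : ℕ → ℝ) : Finset ℕ :=
  (Finset.Icc 1 m).filter fun l => pvMap n k s l ≤ α * (τv n m k α s) / m

def Fj (n m k : ℕ) (α : ℝ) (j : ℕ) (s : ℕ → ℝ) : ℝ :=
  (if j ∈ Rejv n m k α s then (1 : ℝ) else 0) /
    ((max (Rejv n m k α s).card 1 : ℕ) : ℝ)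

lemma card_Rejv (n m k : ℕ) (α : ℝ) (hα : 0 ≤ α) (s : ℕ → ℝ) :
    (Rejv n m k α s).card = τv n m k α s :=
  card_rej_eq_BHindex m α hα (pvMap n k s)

lemma sum_Fj_le {n m k j : ℕ} (α : ℝ) (hα : 0 < α) (hkn : k ≤ n) (hm : 1 ≤ m)
    (hj1 : 1 ≤ j) (hjm : j ≤ m) (s : ℕ → ℝ) (hs : Set.InjOn s (DD n k j)) :
    ∑ c ∈ DD n k j, Fj n m k α j (fun i => s (Equiv.swap c (n + j) i))
      ≤ α * ((n : ℝ) - k + 1) / m := by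
  classical
  have hν : (0 : ℝ) < (n : ℝ) - k + 1 := by
    have : (k : ℝ) ≤ n := by exact_mod_cast hkn
    linarith
  have hmR : (0 : ℝ) < m := by exact_mod_cast hm
  set ν : ℝ := (n : ℝ) - k + 1 with hνdef
  set c₀ : ℝ := α * ν / m with hc₀def
  have hc₀ : 0 < c₀ := by positivity
  set r : ℕ → ℕ := rankD n k j s with hrdef
  set g : ℕ → ℕ := fun c => τv n m k α (fun i => s (Equiv.swap c (n + j) i)) with hgdef
  have hterm : ∀ c ∈ DD n k j, Fj n m k α j (fun i => s (Equiv.swap c (n + j) i))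
      = (if (r c : ℝ) ≤ c₀ * g c then (1 : ℝ) else 0) / ((max (g c) 1 : ℕ) : ℝ) := by
    intro c hc
    rw [Fj, card_Rejv n m k α hα.le]
    have hmem : j ∈ Rejv n m k α (fun i => s (Equiv.swap c (n + j) i))
        ↔ (r c : ℝ) ≤ c₀ * g c := by
      rw [Rejv, Finset.mem_filter]
      have hjmem : j ∈ Finset.Icc 1 m := Finset.mem_Icc.mpr ⟨hj1, hjm⟩
      rw [pv_swap_j hj1 hc s]
      constructor
      · rintro ⟨-, hle⟩
        rw [div_le_iff₀ hν] at hle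
        calc (r c : ℝ) = (rankD n k j s c : ℝ) := by rw [hrdef]
          _ ≤ α * (τv n m k α fun i => s (Equiv.swap c (n + j) i)) / m * ν := hle
          _ = c₀ * g c := by rw [hc₀def, hgdef]; ring
      · intro hle
        refine ⟨hjmem, ?_⟩
        rw [div_le_iff₀ hν]
        calc (rankD n k j s c : ℝ) = (r c : ℝ) := by rw [hrdef]
          _ ≤ c₀ * g c := hle
          _ = α * (τv n m k α fun i => s (Equiv.swap c (n + j) i)) / m * ν := by
              rw [hc₀def, hgdef]; ring
    simp only [hmem, hgdef]
  rw [Finset.sum_congr rfl hterm]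
  have hr1 : ∀ c ∈ DD n k j, 1 ≤ r c := fun c hc => one_le_rank hc s
  have hrinj : Set.InjOn r (DD n k j) := rank_injOn s hs
  have hanti : ∀ c ∈ DD n k j, ∀ c' ∈ DD n k j, r c ≤ r c' → g c' ≤ g c := by
    intro c hc c' hc' hrr
    have hsc : s c' ≤ s c := rank_le_imp hc hc' s hrr
    rw [hgdef]
    refine BHindex_mono m α _ _ ?_
    intro l hl
    obtain ⟨hl1, hlm⟩ := Finset.mem_Icc.mp hl
    by_cases hlj : l = j
    · subst hlj
      rw [pv_swap_j hj1 hc s, pv_swap_j hj1 hc' s, ← hνdef]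
      apply (div_le_div_iff_of_pos_right hν).mpr
      exact_mod_cast hrr
    · rw [pv_swap_ne hj1 hc s hl1 hlj, pv_swap_ne hj1 hc' s hl1 hlj, ← hνdef]
      have hcount := count_erase_mono hc hc' s hsc (s (n + l))
      have hcast : ((((DD n k j).erase c).filter fun i => s (n + l) ≤ s i).card : ℝ)
          ≤ ((((DD n k j).erase c').filter fun i => s (n + l) ≤ s i).card : ℝ) := by
        exact_mod_cast hcount
      apply (div_le_div_iff_of_pos_right hν).mpr
      linarith
  calc ∑ c ∈ DD n k j, (if (r c : ℝ) ≤ c₀ * g c then (1 : ℝ) else 0) / ((max (g c) 1 : ℕ) : ℝ)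
      ≤ c₀ := crux_sum (DD n k j) r g c₀ hc₀ hr1 hrinj hanti
    _ = α * ν / m := hc₀def

section Meas
variable {β : Type*} [MeasurableSpace β]

lemma measurable_card_filter (t : Finset ℕ) (Q : β → ℕ → Prop)
    [∀ b, DecidablePred (Q b)] (hQ : ∀ i ∈ t, MeasurableSet {b | Q b i}) :
    Measurable fun b => ((t.filter (Q b)).card : ℕ) := by
  have : (fun b => ((t.filter (Q b)).card : ℕ))
      = fun b => ∑ i ∈ t, if Q b i then 1 else 0 := by
    funext b; rw [Finset.card_filter]
  rw [this]
  exact Finset.measurable_sum t fun i hi =>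
    Measurable.ite (hQ i hi) measurable_const measurable_const

lemma measurable_pvMap (n k : ℕ) (l : ℕ) : Measurable fun s : ℕ → ℝ => pvMap n k s l := by
  have hcard : Measurable fun s : ℕ → ℝ =>
      (((Finset.Icc (k + 1) n).filter fun i => s (n + l) ≤ s i).card : ℕ) := by
    refine measurable_card_filter (β := ℕ → ℝ) _ (fun s i => s (n + l) ≤ s i) fun i _ => ?_
    exact measurableSet_le (measurable_pi_apply (n + l)) (measurable_pi_apply i)
  have hc : Measurable fun s : ℕ → ℝ =>
      ((((Finset.Icc (k + 1) n).filter fun i => s (n + l) ≤ s i).card : ℕ) : ℝ) :=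
    (measurable_from_top (f := fun c : ℕ => (c : ℝ))).comp hcard
  exact ((measurable_const.add hc).div_const _)

def bhCard (n m k : ℕ) (α : ℝ) (s : ℕ → ℝ) (r : ℕ) : ℕ :=
  ((Finset.Icc 1 m).filter fun l => pvMap n k s l ≤ α * r / m).card

lemma measurable_bhCard (n m k : ℕ) (α : ℝ) (r : ℕ) :
    Measurable fun s : ℕ → ℝ => bhCard n m k α s r := by
  refine measurable_card_filter _ (fun s l => pvMap n k s l ≤ α * r / m) fun l _ => ?_
  exact measurableSet_le (measurable_pvMap n k l) measurable_const

lemma τv_eq_iff (n m k : ℕ) (α : ℝ) (s : ℕ → ℝ) (r : ℕ) :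
    τv n m k α s = r ↔
      (r ≤ m ∧ r ≤ bhCard n m k α s r) ∧
        ∀ r' : ℕ, r' ≤ m → r' ≤ bhCard n m k α s r' → r' ≤ r := by
  constructor
  · rintro rfl
    obtain ⟨h1, h2⟩ := BHindex_mem m α (pvMap n k s)
    exact ⟨⟨h1, h2⟩, fun r' h1' h2' => le_BHindex m α (pvMap n k s) r' h1' h2'⟩
  · rintro ⟨⟨h1, h2⟩, hub⟩
    obtain ⟨g1, g2⟩ := BHindex_mem m α (pvMap n k s)
    exact le_antisymm (hub _ g1 g2) (le_BHindex m α (pvMap n k s) r h1 h2)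

lemma measurable_τv (n m k : ℕ) (α : ℝ) : Measurable fun s : ℕ → ℝ => τv n m k α s := by
  refine measurable_to_countable' fun r => ?_
  have : (fun s : ℕ → ℝ => τv n m k α s) ⁻¹' {r}
      = ({s : ℕ → ℝ | r ≤ m ∧ r ≤ bhCard n m k α s r} ∩
          ⋂ r' : ℕ, {s : ℕ → ℝ | r' ≤ m → r' ≤ bhCard n m k α s r' → r' ≤ r}) := by
    ext s
    simp only [Set.mem_preimage, Set.mem_singleton_iff, Set.mem_inter_iff, Set.mem_iInter,
      Set.mem_setOf_eq, τv_eq_iff]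
  rw [this]
  refine MeasurableSet.inter ?_ (MeasurableSet.iInter fun r' => ?_)
  · by_cases hrm : r ≤ m
    · have : {s : ℕ → ℝ | r ≤ m ∧ r ≤ bhCard n m k α s r}
          = {s : ℕ → ℝ | r ≤ bhCard n m k α s r} := by
        ext s; simp [hrm]
      rw [this]
      exact measurable_bhCard n m k α r measurableSet_Ici
    · have : {s : ℕ → ℝ | r ≤ m ∧ r ≤ bhCard n m k α s r} = ∅ := by
        ext s; simp [hrm]
      rw [this]; exact MeasurableSet.empty
  · by_cases hr' : r' ≤ m
    · by_cases hrr : r' ≤ r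
      · have : {s : ℕ → ℝ | r' ≤ m → r' ≤ bhCard n m k α s r' → r' ≤ r} = Set.univ := by
          ext s; simp [hrr]
        rw [this]; exact MeasurableSet.univ
      · have : {s : ℕ → ℝ | r' ≤ m → r' ≤ bhCard n m k α s r' → r' ≤ r}
            = {s : ℕ → ℝ | ¬ r' ≤ bhCard n m k α s r'} := by
          ext s; simp [hr', hrr]
        rw [this]
        exact (measurable_bhCard n m k α r' measurableSet_Ici).compl
    · have : {s : ℕ → ℝ | r' ≤ m → r' ≤ bhCard n m k α s r' → r' ≤ r} = Set.univ := by
        ext s; simp [hr']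
      rw [this]; exact MeasurableSet.univ

lemma measurableSet_mem_Rejv (n m k : ℕ) (α : ℝ) (j : ℕ) :
    MeasurableSet {s : ℕ → ℝ | j ∈ Rejv n m k α s} := by
  have : {s : ℕ → ℝ | j ∈ Rejv n m k α s}
      = {s : ℕ → ℝ | j ∈ Finset.Icc 1 m ∧ pvMap n k s j ≤ α * (τv n m k α s) / m} := by
    ext s; simp [Rejv]
  rw [this]
  by_cases hj : j ∈ Finset.Icc 1 m
  · have : {s : ℕ → ℝ | j ∈ Finset.Icc 1 m ∧ pvMap n k s j ≤ α * (τv n m k α s) / m}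
        = {s : ℕ → ℝ | pvMap n k s j ≤ α * (τv n m k α s) / m} := by
      ext s; simp [hj]
    rw [this]
    have hτ : Measurable fun s : ℕ → ℝ => α * (τv n m k α s : ℝ) / m :=
      (measurable_from_top (f := fun c : ℕ => α * (c : ℝ) / m)).comp (measurable_τv n m k α)
    exact measurableSet_le (measurable_pvMap n k j) hτ
  · have : {s : ℕ → ℝ | j ∈ Finset.Icc 1 m ∧ pvMap n k s j ≤ α * (τv n m k α s) / m} = ∅ := by
      ext s; simp [hj]
    rw [this]; exact MeasurableSet.empty

lemma measurable_Fj (n m k : ℕ) (α : ℝ) (hα : 0 ≤ α) (j : ℕ) :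
    Measurable fun s : ℕ → ℝ => Fj n m k α j s := by
  have hden : Measurable fun s : ℕ → ℝ => ((max (Rejv n m k α s).card 1 : ℕ) : ℝ) := by
    have : (fun s : ℕ → ℝ => ((max (Rejv n m k α s).card 1 : ℕ) : ℝ))
        = fun s => ((max (τv n m k α s) 1 : ℕ) : ℝ) := by
      funext s; rw [card_Rejv n m k α hα]
    rw [this]
    exact (measurable_from_top (f := fun c : ℕ => ((max c 1 : ℕ) : ℝ))).comp
      (measurable_τv n m k α)
  exact Measurable.div
    (Measurable.ite (measurableSet_mem_Rejv n m k α j) measurable_const measurable_const) hden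

end Meas

section Equivar
variable {𝒵 : Type*} [MeasurableSpace 𝒵]

def ztMap (n : ℕ) (A : Finset ℕ) (fatk : 𝒵 → (ℕ → 𝒵) → 𝒵) (z : ℕ → 𝒵) : ℕ → 𝒵 :=
  fun i => if ∃ j ∈ A, i = n + j then fatk (z i) z else z i

def scoreMap (n : ℕ) (A : Finset ℕ) (fatk : 𝒵 → (ℕ → 𝒵) → 𝒵)
    (st : 𝒵 → (ℕ → 𝒵) → ℝ) (z : ℕ → 𝒵) : ℕ → ℝ :=
  fun i => st (ztMap n A fatk z i) (ztMap n A fatk z)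

lemma measurable_ztMap (n : ℕ) (A : Finset ℕ) (fatk : 𝒵 → (ℕ → 𝒵) → 𝒵)
    (hfmeas : Measurable fun q : 𝒵 × (ℕ → 𝒵) => fatk q.1 q.2) :
    Measurable (ztMap n A fatk) := by
  refine measurable_pi_lambda _ fun i => ?_
  by_cases hP : ∃ j ∈ A, i = n + j
  · simp only [ztMap, if_pos hP]
    exact Measurable.comp (f := fun z : ℕ → 𝒵 => (z i, z))
      (g := fun q : 𝒵 × (ℕ → 𝒵) => fatk q.1 q.2) hfmeas
      ((measurable_pi_apply i).prodMk measurable_id)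
  · simp only [ztMap, if_neg hP]
    exact measurable_pi_apply i

lemma measurable_scoreMap (n : ℕ) (A : Finset ℕ) (fatk : 𝒵 → (ℕ → 𝒵) → 𝒵)
    (st : 𝒵 → (ℕ → 𝒵) → ℝ)
    (hfmeas : Measurable fun q : 𝒵 × (ℕ → 𝒵) => fatk q.1 q.2)
    (hstmeas : Measurable fun q : 𝒵 × (ℕ → 𝒵) => st q.1 q.2) :
    Measurable (scoreMap n A fatk st) := by
  have hzt := measurable_ztMap n A fatk hfmeas
  refine measurable_pi_lambda _ fun i => ?_
  exact Measurable.comp (f := fun z : ℕ → 𝒵 => (ztMap n A fatk z i, ztMap n A fatk z))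
    (g := fun q : 𝒵 × (ℕ → 𝒵) => st q.1 q.2) hstmeas
    (((measurable_pi_apply i).comp hzt).prodMk hzt)

lemma swap_fix {n m k j c : ℕ} (hkn : k ≤ n) (hj1 : 1 ≤ j) (hjm : j ≤ m)
    (hc : c ∈ DD n k j) : ∀ i ∉ Finset.Icc (k + 1) (n + m), Equiv.swap c (n + j) i = i := by
  intro i hi
  rw [Finset.mem_Icc] at hi
  push_neg at hi
  have hcI : k + 1 ≤ c ∧ c ≤ n + m := by
    rcases Finset.mem_insert.mp hc with hcj | hcI
    · omega
    · have := Finset.mem_Icc.mp hcI; omega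
  have h1 : i ≠ c := by by_contra hh; subst hh; omega
  have h2 : i ≠ n + j := by by_contra hh; subst hh; omega
  exact Equiv.swap_apply_of_ne_of_ne h1 h2

lemma scoreMap_swap (n m k j : ℕ) (A : Finset ℕ) (hjA : j ∉ A) (hA1 : ∀ a ∈ A, 1 ≤ a)
    (hj1 : 1 ≤ j) (hjm : j ≤ m) (hkn : k ≤ n)
    (satk : 𝒵 → (ℕ → 𝒵) → ℝ)
    (hsatkinv : ∀ (z : 𝒵) (data : ℕ → 𝒵) (σ : Equiv.Perm ℕ),
      (∀ i ∉ Finset.Icc (k + 1) (n + m), σ i = i) →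
      satk z (fun i => data (σ i)) = satk z data)
    (fatk : 𝒵 → (ℕ → 𝒵) → 𝒵) (h : 𝒵 → (𝒵 → ℝ) → 𝒵)
    (hfscore : ∀ (z : 𝒵) (data : ℕ → 𝒵), fatk z data = h z (fun w => satk w data))
    (st : 𝒵 → (ℕ → 𝒵) → ℝ)
    (hstinv : ∀ (z : 𝒵) (data : ℕ → 𝒵) (σ : Equiv.Perm ℕ),
      (∀ i ∉ Finset.Icc (k + 1) (n + m), σ i = i) →
      st z (fun i => data (σ i)) = st z data)
    {c : ℕ} (hc : c ∈ DD n k j) (z : ℕ → 𝒵) :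
    scoreMap n A fatk st (fun i => z (Equiv.swap c (n + j) i))
      = fun i => scoreMap n A fatk st z (Equiv.swap c (n + j) i) := by
  classical
  set σ : Equiv.Perm ℕ := Equiv.swap c (n + j) with hσdef
  have hfix : ∀ i ∉ Finset.Icc (k + 1) (n + m), σ i = i := swap_fix hkn hj1 hjm hc
  have hfatk_inv : ∀ w, fatk w (fun i => z (σ i)) = fatk w z := by
    intro w
    rw [hfscore, hfscore]
    congr 1
    funext u
    exact hsatkinv u z σ hfix
  have hcub : c ≤ n ∨ c = n + j := by
    rcases Finset.mem_insert.mp hc with hcj | hcI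
    · right; exact hcj
    · left; exact (Finset.mem_Icc.mp hcI).2
  have hzt : ztMap n A fatk (fun i => z (σ i)) = fun i => ztMap n A fatk z (σ i) := by
    funext i
    by_cases hP : ∃ j' ∈ A, i = n + j'
    · obtain ⟨j', hj'A, rfl⟩ := hP
      have hfixi : σ (n + j') = n + j' := by
        have h1 : n + j' ≠ c := by
          rcases hcub with hcn | hcj
          · have := hA1 j' hj'A; omega
          · have : j' ≠ j := fun hh => hjA (hh ▸ hj'A)
            omega
        have h2 : n + j' ≠ n + j := by
          have : j' ≠ j := fun hh => hjA (hh ▸ hj'A)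
          omega
        exact Equiv.swap_apply_of_ne_of_ne h1 h2
      have hPi : ∃ j'' ∈ A, n + j' = n + j'' := ⟨j', hj'A, rfl⟩
      rw [ztMap]
      simp only [hPi, if_true, hfixi]
      rw [hfatk_inv]
      rw [ztMap]
      simp only [hPi, if_true]
    · have hPσ : ¬ ∃ j' ∈ A, σ i = n + j' := by
        by_cases hic : i = c
        · subst hic
          rw [hσdef, Equiv.swap_apply_left]
          rintro ⟨j', hj'A, hje⟩
          have : j' = j := by omega
          exact hjA (this ▸ hj'A)
        · by_cases hinj : i = n + j
          · subst hinj
            rw [hσdef, Equiv.swap_apply_right]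
            rintro ⟨j', hj'A, hje⟩
            rcases hcub with hcn | hcj
            · have := hA1 j' hj'A; omega
            · exact hP ⟨j', hj'A, hcj ▸ hje⟩
          · rw [hσdef, Equiv.swap_apply_of_ne_of_ne hic hinj]
            exact hP
      rw [ztMap]
      simp only [hP, if_false]
      rw [ztMap]
      simp only [hPσ, if_false]
  funext i
  show st (ztMap n A fatk (fun i' => z (σ i')) i) (ztMap n A fatk (fun i' => z (σ i')))
      = st (ztMap n A fatk z (σ i)) (ztMap n A fatk z)
  rw [hzt]
  exact hstinv _ (ztMap n A fatk z) σ hfix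

end Equivar

lemma DD_subset_block {n m k j : ℕ} (hkn : k ≤ n) (hj1 : 1 ≤ j) (hjm : j ≤ m) :
    DD n k j ⊆ Finset.Icc (k + 1) (n + m) := by
  intro i hi
  rcases Finset.mem_insert.mp hi with hh | hh
  · rw [Finset.mem_Icc]; omega
  · rw [Finset.mem_Icc] at hh ⊢; omega

lemma Fj_nonneg (n m k : ℕ) (α : ℝ) (j : ℕ) (s : ℕ → ℝ) : 0 ≤ Fj n m k α j s := by
  rw [Fj]
  apply div_nonneg _ (Nat.cast_nonneg _)
  split <;> norm_num

lemma Fj_le_one (n m k : ℕ) (α : ℝ) (j : ℕ) (s : ℕ → ℝ) : Fj n m k α j s ≤ 1 := by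
  rw [Fj]
  have hden : (1 : ℝ) ≤ ((max (Rejv n m k α s).card 1 : ℕ) : ℝ) := by
    exact_mod_cast le_max_right (Rejv n m k α s).card 1
  rw [div_le_one (by linarith)]
  split <;> linarith

lemma measurable_card_RejvH (n m k : ℕ) (α : ℝ) (H0 : Finset ℕ) :
    Measurable fun s : ℕ → ℝ => (((Rejv n m k α s).filter fun l => l ∈ H0).card : ℕ) := by
  classical
  have heq : ∀ s : ℕ → ℝ, (Rejv n m k α s).filter (fun l => l ∈ H0)
      = (Finset.Icc 1 m).filter fun l => l ∈ Rejv n m k α s ∧ l ∈ H0 := by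
    intro s
    ext l
    simp only [Finset.mem_filter]
    constructor
    · rintro ⟨hl1, hl2⟩
      exact ⟨(Finset.mem_filter.mp hl1).1, hl1, hl2⟩
    · rintro ⟨-, hl1, hl2⟩
      exact ⟨hl1, hl2⟩
  simp only [heq]
  refine measurable_card_filter (β := ℕ → ℝ) _
    (fun s l => l ∈ Rejv n m k α s ∧ l ∈ H0) fun l _ => ?_
  by_cases hlH : l ∈ H0
  · have : {s : ℕ → ℝ | l ∈ Rejv n m k α s ∧ l ∈ H0} = {s | l ∈ Rejv n m k α s} := by
      ext s; simp [hlH]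
    rw [this]; exact measurableSet_mem_Rejv n m k α l
  · have : {s : ℕ → ℝ | l ∈ Rejv n m k α s ∧ l ∈ H0} = ∅ := by
      ext s; simp [hlH]
    rw [this]; exact MeasurableSet.empty

lemma measurable_card_Rejv (n m k : ℕ) (α : ℝ) (hα : 0 ≤ α) :
    Measurable fun s : ℕ → ℝ => ((Rejv n m k α s).card : ℕ) := by
  have : (fun s : ℕ → ℝ => ((Rejv n m k α s).card : ℕ)) = fun s => τv n m k α s := by
    funext s; exact card_Rejv n m k α hα s
  rw [this]
  exact measurable_τv n m k α

end FDRaux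

/-- **FDR bound for the direct decision-based attack on AdaDetect** (Theorem 2).
`A ⊆ H0` is a fixed (deterministic) attack set with `|A| = mₐ`; the attacker's score function
`satk` is permutation-invariant over the block `{k+1,…,n+m}` and the attack map `fatk` depends
on the data only through `satk` (hence is order-invariant in the unordered set
`{Z_{k+1},…,Z_n, Z_{n+j} : j ∈ H0 \ A}`).  Under Assumption 1, if the detector's post-attack
score function `st` is permutation-invariant and the post-attack scores are almost surely
pairwise distinct, then `FDR*_{attack-decision} = E[Ṽ/(R̃ ∨ 1)] ≤ α + mₐ · E[1/(R̃ ∨ 1)]`. -/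
theorem fdr_bound_direct_decision_attack
    {Ω : Type*} [MeasureSpace Ω] [IsProbabilityMeasure (ℙ : Measure Ω)]
    {𝒵 : Type*} [MeasurableSpace 𝒵]
    (n m k m₀ mₐ : ℕ) (hk1 : 1 ≤ k) (hkn : k ≤ n) (hm : 1 ≤ m)
    (α : ℝ) (hα0 : 0 < α) (hα1 : α < 1)
    -- the set of true-null test indices
    (H0 : Finset ℕ) (hH0 : H0 ⊆ Finset.Icc 1 m) (hm₀ : H0.card = m₀)
    -- the attack set: a fixed subset of `H0` of cardinality `mₐ`
    (A : Finset ℕ) (hAH0 : A ⊆ H0) (hmₐ : A.card = mₐ)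
    -- training and test samples `Z_1, …, Z_{n+m}`
    (Z : Ω → ℕ → 𝒵) (hZmeas : Measurable Z)
    -- Assumption 1: exchangeability of the nulls given the non-nulls, i.e. the joint law
    -- is invariant under any permutation of the coordinates `{1,…,n} ∪ {n+j : j ∈ H0}`
    (hexch : ∀ σ : Equiv.Perm ℕ,
      (∀ i ∉ Finset.Icc 1 n ∪ H0.image (fun j => n + j), σ i = i) →
      Measure.map (fun ω => fun i => Z ω (σ i)) ℙ = Measure.map Z ℙ)
    -- the attacker's score function, permutation-invariant over the block `{k+1,…,n+m}`
    (satk : 𝒵 → (ℕ → 𝒵) → ℝ)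
    (hsatkmeas : Measurable fun q : 𝒵 × (ℕ → 𝒵) => satk q.1 q.2)
    (hsatkinv : ∀ (z : 𝒵) (data : ℕ → 𝒵) (σ : Equiv.Perm ℕ),
      (∀ i ∉ Finset.Icc (k + 1) (n + m), σ i = i) →
      satk z (fun i => data (σ i)) = satk z data)
    -- the attack map, depending on the data only through the attacker's score function `satk`
    -- (hence order-invariant in the unordered set `{Z_{k+1},…,Z_n, Z_{n+j} : j ∈ H0 \ A}`)
    (fatk : 𝒵 → (ℕ → 𝒵) → 𝒵)
    (hfmeas : Measurable fun q : 𝒵 × (ℕ → 𝒵) => fatk q.1 q.2)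
    (h : 𝒵 → (𝒵 → ℝ) → 𝒵)
    (hfscore : ∀ (z : 𝒵) (data : ℕ → 𝒵), fatk z data = h z (fun w => satk w data))
    -- the post-attack samples: `Z̃_{n+j} = f_attack(Z_{n+j}; data)` for `j ∈ A`, else unchanged
    (Zt : Ω → ℕ → 𝒵)
    (hZtA : ∀ ω, ∀ j ∈ A, Zt ω (n + j) = fatk (Z ω (n + j)) (Z ω))
    (hZtn : ∀ ω i, (∀ j ∈ A, i ≠ n + j) → Zt ω i = Z ω i)
    -- the detector's post-attack score function, permutation-invariant over `{k+1,…,n+m}`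
    (st : 𝒵 → (ℕ → 𝒵) → ℝ)
    (hstmeas : Measurable fun q : 𝒵 × (ℕ → 𝒵) => st q.1 q.2)
    (hstinv : ∀ (z : 𝒵) (data : ℕ → 𝒵) (σ : Equiv.Perm ℕ),
      (∀ i ∉ Finset.Icc (k + 1) (n + m), σ i = i) →
      st z (fun i => data (σ i)) = st z data)
    -- the post-attack scores `S_i = s̃(Z̃_i; Z̃)`
    (S : Ω → ℕ → ℝ) (hS : ∀ ω i, S ω i = st (Zt ω i) (Zt ω))
    -- the post-attack scores are almost surely pairwise distinct
    (hdist : ∀ᵐ ω ∂ℙ, ∀ i ∈ Finset.Icc (k + 1) (n + m), ∀ j ∈ Finset.Icc (k + 1) (n + m),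
      i ≠ j → S ω i ≠ S ω j)
    -- the post-attack conformal p-values
    (p : Ω → ℕ → ℝ)
    (hp : ∀ ω j, p ω j =
      (1 + (((Finset.Icc (k + 1) n).filter fun i => S ω (n + j) ≤ S ω i).card : ℝ)) /
        ((n : ℝ) - k + 1))
    -- BH threshold and rejection set at level `α`, number of rejections and false discoveries
    (τ : Ω → ℕ) (hτ : ∀ ω, τ ω = BHindex m α (p ω))
    (Rej : Ω → Finset ℕ)
    (hRej : ∀ ω, Rej ω = (Finset.Icc 1 m).filter fun j => p ω j ≤ α * τ ω / m)
    (Rt : Ω → ℕ) (hRt : ∀ ω, Rt ω = (Rej ω).card)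
    (Vt : Ω → ℕ) (hVt : ∀ ω, Vt ω = ((Rej ω).filter fun j => j ∈ H0).card) :
    ∫ ω, (Vt ω : ℝ) / ((max (Rt ω) 1 : ℕ) : ℝ) ∂ℙ ≤
      α + (mₐ : ℝ) * ∫ ω, 1 / ((max (Rt ω) 1 : ℕ) : ℝ) ∂ℙ := by
  classical
  have hαle : (0 : ℝ) ≤ α := hα0.le
  have hmR : (0 : ℝ) < m := by exact_mod_cast hm
  have hν : (0 : ℝ) < (n : ℝ) - k + 1 := by
    have : (k : ℝ) ≤ n := by exact_mod_cast hkn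
    linarith
  -- identification of the post-attack data and scores with explicit maps
  have hZt : ∀ ω, Zt ω = FDRaux.ztMap n A fatk (Z ω) := by
    intro ω
    funext i
    by_cases hP : ∃ j ∈ A, i = n + j
    · obtain ⟨j, hjA, rfl⟩ := hP
      rw [hZtA ω j hjA, FDRaux.ztMap]
      have hPi : ∃ j' ∈ A, n + j = n + j' := ⟨j, hjA, rfl⟩
      simp only [hPi, if_true]
    · push_neg at hP
      rw [hZtn ω i hP, FDRaux.ztMap]
      have hPi : ¬ ∃ j' ∈ A, i = n + j' := by
        rintro ⟨j', hj'A, rfl⟩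
        exact hP j' hj'A rfl
      simp only [hPi, if_false]
  have hS2 : ∀ ω, S ω = FDRaux.scoreMap n A fatk st (Z ω) := by
    intro ω
    funext i
    rw [hS ω i, hZt ω]
    rfl
  have hp2 : ∀ ω, p ω = FDRaux.pvMap n k (S ω) := by
    intro ω
    funext l
    rw [hp ω l]
    rfl
  have hτ2 : ∀ ω, τ ω = FDRaux.τv n m k α (S ω) := by
    intro ω
    rw [hτ ω, hp2 ω]
    rfl
  have hRej2 : ∀ ω, Rej ω = FDRaux.Rejv n m k α (S ω) := by
    intro ω
    rw [hRej ω, hp2 ω, hτ2 ω]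
    rfl
  have hRt2 : ∀ ω, Rt ω = (FDRaux.Rejv n m k α (S ω)).card := by
    intro ω
    rw [hRt ω, hRej2 ω]
  have hVt2 : ∀ ω, Vt ω = ((FDRaux.Rejv n m k α (S ω)).filter fun l => l ∈ H0).card := by
    intro ω
    rw [hVt ω, hRej2 ω]
  -- measurability of the score vector
  have hmeasS : Measurable fun ω => S ω := by
    have : (fun ω => S ω) = (FDRaux.scoreMap n A fatk st) ∘ Z := funext hS2
    rw [this]
    exact (FDRaux.measurable_scoreMap n A fatk st hfmeas hstmeas).comp hZmeas
  -- the (positive) denominator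
  set d : Ω → ℝ := fun ω => ((max (Rt ω) 1 : ℕ) : ℝ) with hddef
  have hd1 : ∀ ω, (1 : ℝ) ≤ d ω := by
    intro ω
    show (1 : ℝ) ≤ ((max (Rt ω) 1 : ℕ) : ℝ)
    exact_mod_cast le_max_right (Rt ω) 1
  have hdpos : ∀ ω, (0 : ℝ) < d ω := fun ω => lt_of_lt_of_le one_pos (hd1 ω)
  have hRtmeas : Measurable Rt := by
    have : Rt = (fun s => (FDRaux.Rejv n m k α s).card) ∘ fun ω => S ω := funext hRt2
    rw [this]
    exact (FDRaux.measurable_card_Rejv n m k α hαle).comp hmeasS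
  have hdmeas : Measurable d :=
    (measurable_from_top (f := fun c : ℕ => ((max c 1 : ℕ) : ℝ))).comp hRtmeas
  have hVtmeas : Measurable fun ω => (Vt ω : ℝ) := by
    have : (fun ω => (Vt ω : ℝ))
        = (fun c : ℕ => (c : ℝ)) ∘
            ((fun s => ((FDRaux.Rejv n m k α s).filter fun l => l ∈ H0).card) ∘ fun ω => S ω) := by
      funext ω
      simp only [Function.comp_apply, hVt2 ω]
    rw [this]
    exact measurable_from_top.comp ((FDRaux.measurable_card_RejvH n m k α H0).comp hmeasS)
  -- integrability helper
  have integ : ∀ f : Ω → ℝ, Measurable f → ∀ C : ℝ, (∀ ω, |f ω| ≤ C) → Integrable f ℙ := by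
    intro f hf C hC
    exact (integrable_const C).mono' hf.aestronglyMeasurable
      (Filter.Eventually.of_forall fun ω => by rw [Real.norm_eq_abs]; exact hC ω)
  have hrecint : Integrable (fun ω => 1 / d ω) ℙ := by
    refine integ _ (measurable_const.div hdmeas) 1 fun ω => ?_
    rw [abs_of_nonneg (by positivity)]
    rw [div_le_one (hdpos ω)]
    exact hd1 ω
  -- integrability and measurability for Fj-type integrands
  have hFjSmeas : ∀ j : ℕ, Measurable fun ω => FDRaux.Fj n m k α j (S ω) := fun j =>
    (FDRaux.measurable_Fj n m k α hαle j).comp hmeasS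
  have hFjSint : ∀ j : ℕ, Integrable (fun ω => FDRaux.Fj n m k α j (S ω)) ℙ := by
    intro j
    refine integ _ (hFjSmeas j) 1 fun ω => ?_
    rw [abs_of_nonneg (FDRaux.Fj_nonneg n m k α j (S ω))]
    exact FDRaux.Fj_le_one n m k α j (S ω)
  -- the core per-null-index bound
  have hcore : ∀ j ∈ H0 \ A, ∫ ω, FDRaux.Fj n m k α j (S ω) ∂ℙ ≤ α / m := by
    intro j hj
    obtain ⟨hjH0, hjA⟩ := Finset.mem_sdiff.mp hj
    obtain ⟨hj1, hjm⟩ := Finset.mem_Icc.mp (hH0 hjH0)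
    have hA1 : ∀ a ∈ A, 1 ≤ a := fun a ha => (Finset.mem_Icc.mp (hH0 (hAH0 ha))).1
    -- the swapped integrands are measurable and integrable
    have hswapmeas : ∀ c : ℕ, Measurable fun ω =>
        FDRaux.Fj n m k α j (fun i => S ω (Equiv.swap c (n + j) i)) := by
      intro c
      refine (FDRaux.measurable_Fj n m k α hαle j).comp ?_
      exact measurable_pi_lambda _ fun i =>
        (measurable_pi_apply (Equiv.swap c (n + j) i)).comp hmeasS
    have hswapint : ∀ c : ℕ, Integrable (fun ω =>
        FDRaux.Fj n m k α j (fun i => S ω (Equiv.swap c (n + j) i))) ℙ := by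
      intro c
      refine integ _ (hswapmeas c) 1 fun ω => ?_
      rw [abs_of_nonneg (FDRaux.Fj_nonneg n m k α j _)]
      exact FDRaux.Fj_le_one n m k α j _
    -- exchangeability: the swapped integral equals the original one
    have hexch_c : ∀ c ∈ FDRaux.DD n k j,
        ∫ ω, FDRaux.Fj n m k α j (fun i => S ω (Equiv.swap c (n + j) i)) ∂ℙ
          = ∫ ω, FDRaux.Fj n m k α j (S ω) ∂ℙ := by
      intro c hc
      set σ : Equiv.Perm ℕ := Equiv.swap c (n + j) with hσdef
      have hσfix : ∀ i ∉ Finset.Icc 1 n ∪ H0.image (fun j' => n + j'), σ i = i := by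
        intro i hi
        simp only [Finset.mem_union, Finset.mem_Icc, Finset.mem_image, not_or, not_exists,
          not_and] at hi
        push_neg at hi
        have hinj : i ≠ n + j := fun hh => (hi.2 j hjH0) hh.symm
        have hic : i ≠ c := by
          rcases Finset.mem_insert.mp hc with hcj | hcI
          · rw [hcj] at *; exact hinj
          · have := Finset.mem_Icc.mp hcI
            rintro rfl
            omega
        exact Equiv.swap_apply_of_ne_of_ne hic hinj
      have hmap : Measure.map (fun ω => fun i => Z ω (σ i)) ℙ = Measure.map Z ℙ :=
        hexch σ hσfix
      have hφmeas : Measurable fun z : ℕ → 𝒵 =>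
          FDRaux.Fj n m k α j (FDRaux.scoreMap n A fatk st z) :=
        (FDRaux.measurable_Fj n m k α hαle j).comp
          (FDRaux.measurable_scoreMap n A fatk st hfmeas hstmeas)
      have hZσmeas : Measurable fun ω => fun i => Z ω (σ i) :=
        measurable_pi_lambda _ fun i => (measurable_pi_apply (σ i)).comp hZmeas
      have hptw : ∀ ω, FDRaux.scoreMap n A fatk st (fun i => Z ω (σ i))
          = fun i => S ω (σ i) := by
        intro ω
        rw [hσdef]
        rw [FDRaux.scoreMap_swap n m k j A hjA hA1 hj1 hjm hkn satk hsatkinv fatk h hfscore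
          st hstinv hc (Z ω)]
        funext i
        rw [hS2 ω]
      have h1 : (fun ω => FDRaux.Fj n m k α j (fun i => S ω (σ i)))
          = fun ω => (fun z : ℕ → 𝒵 => FDRaux.Fj n m k α j (FDRaux.scoreMap n A fatk st z))
              ((fun ω' => fun i => Z ω' (σ i)) ω) := by
        funext ω
        simp only
        rw [hptw ω]
      rw [h1]
      rw [← integral_map hZσmeas.aemeasurable hφmeas.aestronglyMeasurable, hmap,
        integral_map hZmeas.aemeasurable hφmeas.aestronglyMeasurable]
      refine integral_congr_ae (Filter.Eventually.of_forall fun ω => ?_)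
      simp only
      rw [hS2 ω]
    -- average over the swaps and apply the deterministic bound
    have hcard : ((FDRaux.DD n k j).card : ℝ) = (n : ℝ) - k + 1 := by
      rw [FDRaux.card_DD hkn hj1]
      push_cast [Nat.cast_sub hkn]
      ring
    have hsumint : ∫ ω, ∑ c ∈ FDRaux.DD n k j,
        FDRaux.Fj n m k α j (fun i => S ω (Equiv.swap c (n + j) i)) ∂ℙ
          = ((FDRaux.DD n k j).card : ℝ) * ∫ ω, FDRaux.Fj n m k α j (S ω) ∂ℙ := by
      rw [integral_finset_sum _ fun c _ => hswapint c]
      rw [Finset.sum_congr rfl fun c hc => hexch_c c hc]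
      rw [Finset.sum_const, nsmul_eq_mul]
    have haebound : ∀ᵐ ω ∂ℙ, ∑ c ∈ FDRaux.DD n k j,
        FDRaux.Fj n m k α j (fun i => S ω (Equiv.swap c (n + j) i))
          ≤ α * ((n : ℝ) - k + 1) / m := by
      refine hdist.mono fun ω hω => ?_
      refine FDRaux.sum_Fj_le α hα0 hkn hm hj1 hjm (S ω) ?_
      intro i hi i' hi' heq
      by_contra hne
      exact hω i (FDRaux.DD_subset_block hkn hj1 hjm hi)
        i' (FDRaux.DD_subset_block hkn hj1 hjm hi') hne heq
    have hsumint2 : Integrable (fun ω => ∑ c ∈ FDRaux.DD n k j,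
        FDRaux.Fj n m k α j (fun i => S ω (Equiv.swap c (n + j) i))) ℙ :=
      integrable_finset_sum _ fun c _ => hswapint c
    have hineq : ((FDRaux.DD n k j).card : ℝ) * ∫ ω, FDRaux.Fj n m k α j (S ω) ∂ℙ
        ≤ α * ((n : ℝ) - k + 1) / m := by
      rw [← hsumint]
      calc ∫ ω, ∑ c ∈ FDRaux.DD n k j,
            FDRaux.Fj n m k α j (fun i => S ω (Equiv.swap c (n + j) i)) ∂ℙ
          ≤ ∫ _ω, α * ((n : ℝ) - k + 1) / m ∂ℙ :=
            integral_mono_ae hsumint2 (integrable_const _) haebound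
        _ = α * ((n : ℝ) - k + 1) / m := by
            rw [integral_const, probReal_univ, one_smul]
    rw [hcard] at hineq
    have hrw : α * ((n : ℝ) - k + 1) / m = ((n : ℝ) - k + 1) * (α / m) := by ring
    rw [hrw] at hineq
    exact le_of_mul_le_mul_left hineq hν
  -- pointwise decomposition of the FDP
  have hptbound : ∀ ω, (Vt ω : ℝ) / d ω
      ≤ (∑ j ∈ H0 \ A, FDRaux.Fj n m k α j (S ω)) + mₐ * (1 / d ω) := by
    intro ω
    set Rv : Finset ℕ := FDRaux.Rejv n m k α (S ω) with hRv
    have hVnat : Vt ω ≤ (∑ j ∈ H0 \ A, if j ∈ Rv then 1 else 0) + mₐ := by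
      rw [hVt2 ω, ← hRv]
      have hsplit : Rv.filter (fun l => l ∈ H0)
          ⊆ (Rv.filter fun l => l ∈ H0 \ A) ∪ (Rv.filter fun l => l ∈ A) := by
        intro x hx
        obtain ⟨hx1, hx2⟩ := Finset.mem_filter.mp hx
        rw [Finset.mem_union, Finset.mem_filter, Finset.mem_filter, Finset.mem_sdiff]
        by_cases hxA : x ∈ A
        · exact Or.inr ⟨hx1, hxA⟩
        · exact Or.inl ⟨hx1, hx2, hxA⟩
      have h1 : (Rv.filter fun l => l ∈ H0).card
          ≤ (Rv.filter fun l => l ∈ H0 \ A).card + (Rv.filter fun l => l ∈ A).card :=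
        (Finset.card_le_card hsplit).trans (Finset.card_union_le _ _)
      have h2 : (Rv.filter fun l => l ∈ A).card ≤ mₐ := by
        rw [← hmₐ]
        exact Finset.card_le_card fun x hx => (Finset.mem_filter.mp hx).2
      have h3 : (Rv.filter fun l => l ∈ H0 \ A).card
          = ∑ j ∈ H0 \ A, if j ∈ Rv then 1 else 0 := by
        rw [← Finset.card_filter]
        rw [Finset.filter_mem_eq_inter, Finset.inter_comm, ← Finset.filter_mem_eq_inter]
      omega
    have hVreal : (Vt ω : ℝ) ≤ (∑ j ∈ H0 \ A, if j ∈ Rv then (1 : ℝ) else 0) + mₐ := by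
      have := hVnat
      have hcast : ((∑ j ∈ H0 \ A, if j ∈ Rv then 1 else 0) + mₐ : ℕ)
          = ((∑ j ∈ H0 \ A, if j ∈ Rv then (1:ℕ) else 0 : ℕ) : ℝ) + mₐ := by push_cast; ring
      calc (Vt ω : ℝ) ≤ (((∑ j ∈ H0 \ A, if j ∈ Rv then 1 else 0) + mₐ : ℕ) : ℝ) := by
            exact_mod_cast hVnat
        _ = (∑ j ∈ H0 \ A, if j ∈ Rv then (1 : ℝ) else 0) + mₐ := by
            push_cast
            refine congrArg (· + (mₐ : ℝ)) ?_
            exact Finset.sum_congr rfl fun j _ => by split <;> norm_num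
    have hdiv : (Vt ω : ℝ) / d ω
        ≤ ((∑ j ∈ H0 \ A, if j ∈ Rv then (1 : ℝ) else 0) + mₐ) / d ω := by
      exact (div_le_div_iff_of_pos_right (hdpos ω)).mpr hVreal
    refine hdiv.trans (le_of_eq ?_)
    rw [add_div, Finset.sum_div]
    congr 1
    · refine Finset.sum_congr rfl fun j _ => ?_
      rw [FDRaux.Fj, ← hRv]
      have hdd : d ω = ((max Rv.card 1 : ℕ) : ℝ) := by
        show ((max (Rt ω) 1 : ℕ) : ℝ) = _
        rw [hRt2 ω, ← hRv]
      rw [hdd]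
    · rw [mul_one_div]
  -- integrate the pointwise bound
  have hint1 : Integrable (fun ω => (Vt ω : ℝ) / d ω) ℙ := by
    refine integ _ (hVtmeas.div hdmeas) m fun ω => ?_
    have hVm : (Vt ω : ℝ) ≤ m := by
      have : Vt ω ≤ m := by
        rw [hVt2 ω]
        calc ((FDRaux.Rejv n m k α (S ω)).filter fun l => l ∈ H0).card
            ≤ (FDRaux.Rejv n m k α (S ω)).card := Finset.card_filter_le _ _
          _ ≤ (Finset.Icc 1 m).card := Finset.card_le_card (Finset.filter_subset _ _)
          _ = m := by rw [Nat.card_Icc]; omega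
      exact_mod_cast this
    rw [abs_of_nonneg (by positivity)]
    calc (Vt ω : ℝ) / d ω ≤ (Vt ω : ℝ) / 1 :=
          div_le_div_of_nonneg_left (Nat.cast_nonneg _) one_pos (hd1 ω)
      _ = (Vt ω : ℝ) := div_one _
      _ ≤ m := hVm
  have hint2 : Integrable (fun ω =>
      (∑ j ∈ H0 \ A, FDRaux.Fj n m k α j (S ω)) + mₐ * (1 / d ω)) ℙ :=
    (integrable_finset_sum _ fun j _ => hFjSint j).add (hrecint.const_mul _)
  calc ∫ ω, (Vt ω : ℝ) / ((max (Rt ω) 1 : ℕ) : ℝ) ∂ℙ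
      = ∫ ω, (Vt ω : ℝ) / d ω ∂ℙ := rfl
    _ ≤ ∫ ω, ((∑ j ∈ H0 \ A, FDRaux.Fj n m k α j (S ω)) + mₐ * (1 / d ω)) ∂ℙ :=
        integral_mono hint1 hint2 hptbound
    _ = (∑ j ∈ H0 \ A, ∫ ω, FDRaux.Fj n m k α j (S ω) ∂ℙ) + mₐ * ∫ ω, 1 / d ω ∂ℙ := by
        rw [integral_add (integrable_finset_sum _ fun j _ => hFjSint j) (hrecint.const_mul _),
          integral_finset_sum _ fun j _ => hFjSint j, MeasureTheory.integral_const_mul]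
    _ ≤ (∑ _j ∈ H0 \ A, α / m) + mₐ * ∫ ω, 1 / d ω ∂ℙ := by
        gcongr with j hj
        · exact hcore j hj
    _ ≤ α + mₐ * ∫ ω, 1 / d ω ∂ℙ := by
        gcongr
        rw [Finset.sum_const, nsmul_eq_mul]
        have hcardle : ((H0 \ A).card : ℝ) ≤ m := by
          have : (H0 \ A).card ≤ m := by
            calc (H0 \ A).card ≤ H0.card := Finset.card_le_card (Finset.sdiff_subset)
              _ ≤ (Finset.Icc 1 m).card := Finset.card_le_card hH0
              _ = m := by rw [Nat.card_Icc]; omega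
          exact_mod_cast this
        calc ((H0 \ A).card : ℝ) * (α / m) ≤ m * (α / m) := by
              gcongr
          _ = α := by field_simp
    _ = α + mₐ * ∫ ω, 1 / ((max (Rt ω) 1 : ℕ) : ℝ) ∂ℙ := rfl

end
end

section
/- Under Assumption 1, with A ⊆ H_0 a fixed set of m_a indices, f_attack order-invariant, s̃ a permutation-invariant score function, and the post-attack scores almost surely pairwise distinct, for every unattacked true-null test index i ∈ H_0∖A the conformal p-value p̃_i is independent of W̃_i, where W̃_i consists of the unordered multiset {S_{k+1},…,S_n, S_{n+i}} together with the scores (S_{n+j} : j ∈ H_0, j ≠ i) and (S_{n+j} : j ∈ H_1). -/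
open MeasureTheory ProbabilityTheory Finset
open scoped ENNReal

noncomputable section

private lemma sorted_getD_le_iff (c : ℝ) :
    ∀ (L : List ℝ), L.Pairwise (· ≤ ·) → ∀ j, j < L.length →
      (L.getD j 0 ≤ c ↔ j < L.countP (fun x => decide (x ≤ c))) := by
  intro L
  induction L with
  | nil => intro _ j hj; simp at hj
  | cons a T ih =>
    intro hs j hj
    have hsT : T.Pairwise (· ≤ ·) := hs.of_cons
    have ha : ∀ x ∈ T, a ≤ x := fun x hx => List.rel_of_pairwise_cons hs hx
    by_cases hac : a ≤ c
    · cases j with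
      | zero => simp [List.countP_cons, hac]
      | succ j =>
        have hjT : j < T.length := by simpa using hj
        rw [List.getD_cons_succ, List.countP_cons]
        simp only [hac, decide_eq_true_eq, if_pos]
        rw [ih hsT j hjT]
        omega
    · have hT0 : T.countP (fun x => decide (x ≤ c)) = 0 := by
        rw [List.countP_eq_zero]
        intro x hx
        simp only [decide_eq_true_eq]
        intro hxc
        exact hac (le_trans (ha x hx) hxc)
      have hcnt : (a :: T).countP (fun x => decide (x ≤ c)) = 0 := by
        rw [List.countP_cons, hT0]
        simp [hac]
      rw [hcnt]
      simp only [Nat.not_lt_zero, iff_false, not_le]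
      cases j with
      | zero => rw [List.getD_cons_zero]; exact lt_of_not_ge hac
      | succ j =>
        have hjT : j < T.length := by simpa using hj
        rw [List.getD_cons_succ, List.getD_eq_getElem _ _ hjT]
        have hmem : T[j] ∈ T := List.getElem_mem hjT
        exact lt_of_lt_of_le (lt_of_not_ge hac) (ha _ hmem)

private lemma rank_image_eq (B : Finset ℕ) (f : ℕ → ℝ)
    (hf : ∀ a ∈ B, ∀ b ∈ B, a ≠ b → f a ≠ f b) :
    B.image (fun b => ((B.erase b).filter fun c => f b ≤ f c).card) = Finset.range B.card := by
  classical
  set r := fun b => ((B.erase b).filter fun c => f b ≤ f c).card with hr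
  have hmem : ∀ b ∈ B, b ∈ B.filter fun c => f b ≤ f c :=
    fun b hb => Finset.mem_filter.2 ⟨hb, le_rfl⟩
  have hrc : ∀ b ∈ B, r b = (B.filter fun c => f b ≤ f c).card - 1 := by
    intro b hb
    rw [hr]
    simp only
    rw [Finset.filter_erase, Finset.card_erase_of_mem (hmem b hb)]
  have key : ∀ x ∈ B, ∀ y ∈ B, f x < f y →
      (B.filter fun c => f y ≤ f c).card < (B.filter fun c => f x ≤ f c).card := by
    intro x hx y hy hxy
    apply Finset.card_lt_card
    constructor
    · intro c hc
      rw [Finset.mem_filter] at hc ⊢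
      exact ⟨hc.1, le_trans hxy.le hc.2⟩
    · intro hsub
      have := hsub (hmem x hx)
      rw [Finset.mem_filter] at this
      exact absurd this.2 (not_le.2 hxy)
  have hinj : ∀ a ∈ B, ∀ b ∈ B, r a = r b → a = b := by
    intro a ha b hb hab
    by_contra hne
    have h1a : 1 ≤ (B.filter fun c => f a ≤ f c).card :=
      Finset.card_pos.2 ⟨a, hmem a ha⟩
    have h1b : 1 ≤ (B.filter fun c => f b ≤ f c).card :=
      Finset.card_pos.2 ⟨b, hmem b hb⟩
    have e1 := hrc a ha
    have e2 := hrc b hb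
    rcases lt_trichotomy (f a) (f b) with h | h | h
    · have := key a ha b hb h
      omega
    · exact hf a ha b hb hne h
    · have := key b hb a ha h
      omega
  apply Finset.eq_of_subset_of_card_le
  · intro x hx
    rw [Finset.mem_image] at hx
    obtain ⟨b, hb, rfl⟩ := hx
    rw [Finset.mem_range]
    calc r b ≤ (B.erase b).card := Finset.card_filter_le _ _
    _ < B.card := by
        rw [Finset.card_erase_of_mem hb]
        exact Nat.sub_lt (Finset.card_pos.2 ⟨b, hb⟩) one_pos
  · rw [Finset.card_range, Finset.card_image_of_injOn]
    intro a ha b hb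
    exact hinj a ha b hb

private lemma meas_card_filter {α : Type*} [MeasurableSpace α] (F : Finset ℕ)
    (P : α → ℕ → Prop) [∀ z l, Decidable (P z l)]
    (hP : ∀ l, MeasurableSet {z : α | P z l}) :
    Measurable fun z => ((F.filter (P z)).card : ℝ) := by
  simp_rw [Finset.card_filter]
  push_cast
  apply Finset.measurable_sum
  intro l _
  exact Measurable.ite (hP l) measurable_const measurable_const

/-- **Independence of the conformal p-value of an unattacked null from `W̃_i`** (Lemma 3(i)).
With `A ⊆ H0` a fixed set of `mₐ` indices, the attack map order-invariant, the score function
permutation-invariant and the post-attack scores almost surely pairwise distinct, under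
Assumption 1, for every unattacked true-null test index `i ∈ H0 \ A` the conformal p-value
`p̃_i` is independent of `W̃_i`, where `W̃_i` consists of the unordered multiset
`{S_{k+1},…,S_n, S_{n+i}}` (encoded by its sorted list `Wsort ω i`) together with the scores
`(S_{n+j} : j ∈ H0, j ≠ i)` and `(S_{n+j} : j ∈ H1)`. -/
theorem pvalue_indep_of_W_after_attack
    {Ω : Type*} [MeasureSpace Ω] [IsProbabilityMeasure (ℙ : Measure Ω)]
    {𝒵 : Type*} [MeasurableSpace 𝒵]
    (n m k m₀ mₐ : ℕ) (hk1 : 1 ≤ k) (hkn : k ≤ n) (hm : 1 ≤ m)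
    -- the set of true-null test indices, `H1 = {1,…,m} \ H0` being the non-null indices
    (H0 : Finset ℕ) (hH0 : H0 ⊆ Finset.Icc 1 m) (hm₀ : H0.card = m₀)
    -- the attack set: a fixed subset of `H0` of cardinality `mₐ`
    (A : Finset ℕ) (hAH0 : A ⊆ H0) (hmₐ : A.card = mₐ)
    -- training and test samples `Z_1, …, Z_{n+m}`
    (Z : Ω → ℕ → 𝒵) (hZmeas : Measurable Z)
    -- Assumption 1: exchangeability of the nulls given the non-nulls
    (hexch : ∀ σ : Equiv.Perm ℕ,
      (∀ i ∉ Finset.Icc 1 n ∪ H0.image (fun j => n + j), σ i = i) →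
      Measure.map (fun ω => fun i => Z ω (σ i)) ℙ = Measure.map Z ℙ)
    -- the attack map, order-invariant in the unordered set `{Z_1,…,Z_n, Z_{n+j} : j ∈ H0 \ A}`
    (fatk : 𝒵 → (ℕ → 𝒵) → 𝒵)
    (hfmeas : Measurable fun q : 𝒵 × (ℕ → 𝒵) => fatk q.1 q.2)
    (hford : ∀ (z : 𝒵) (data : ℕ → 𝒵) (σ : Equiv.Perm ℕ),
      (∀ i ∉ Finset.Icc 1 n ∪ (H0 \ A).image (fun j => n + j), σ i = i) →
      fatk z (fun i => data (σ i)) = fatk z data)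
    -- the post-attack samples
    (Zt : Ω → ℕ → 𝒵)
    (hZtA : ∀ ω, ∀ j ∈ A, Zt ω (n + j) = fatk (Z ω (n + j)) (Z ω))
    (hZtn : ∀ ω i, (∀ j ∈ A, i ≠ n + j) → Zt ω i = Z ω i)
    -- the post-attack score function, permutation-invariant over the block `{k+1,…,n+m}`
    (st : 𝒵 → (ℕ → 𝒵) → ℝ)
    (hstmeas : Measurable fun q : 𝒵 × (ℕ → 𝒵) => st q.1 q.2)
    (hstinv : ∀ (z : 𝒵) (data : ℕ → 𝒵) (σ : Equiv.Perm ℕ),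
      (∀ i ∉ Finset.Icc (k + 1) (n + m), σ i = i) →
      st z (fun i => data (σ i)) = st z data)
    -- the post-attack scores `S_i = s̃(Z̃_i; Z̃)`
    (S : Ω → ℕ → ℝ) (hS : ∀ ω i, S ω i = st (Zt ω i) (Zt ω))
    -- the post-attack scores are almost surely pairwise distinct
    (hdist : ∀ᵐ ω ∂ℙ, ∀ i ∈ Finset.Icc (k + 1) (n + m), ∀ j ∈ Finset.Icc (k + 1) (n + m),
      i ≠ j → S ω i ≠ S ω j)
    -- the post-attack conformal p-values
    (p : Ω → ℕ → ℝ)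
    (hp : ∀ ω j, p ω j =
      (1 + (((Finset.Icc (k + 1) n).filter fun i => S ω (n + j) ≤ S ω i).card : ℝ)) /
        ((n : ℝ) - k + 1))
    -- the unordered multiset `{S_{k+1},…,S_n, S_{n+i}}`, encoded by its sorted list
    (Wsort : Ω → ℕ → ℕ → ℝ)
    (hWsort : ∀ ω i j, Wsort ω i j =
      ((S ω (n + i) ::ₘ (Finset.Icc (k + 1) n).val.map (S ω)).sort (· ≤ ·)).getD j 0) :
    ∀ i ∈ H0 \ A,
      IndepFun (fun ω => p ω i)
        (fun ω =>
          (Wsort ω i,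
           (fun j : {x // x ∈ H0.erase i} => S ω (n + (j : ℕ))),
           (fun j : {x // x ∈ Finset.Icc 1 m \ H0} => S ω (n + (j : ℕ))))) ℙ := by
  classical
  intro i hi
  have hiH0 : i ∈ H0 := (Finset.mem_sdiff.1 hi).1
  have hiA : i ∉ A := (Finset.mem_sdiff.1 hi).2
  have hi1 : 1 ≤ i := (Finset.mem_Icc.1 (hH0 hiH0)).1
  have him : i ≤ m := (Finset.mem_Icc.1 (hH0 hiH0)).2
  have hniIcc : n + i ∉ Finset.Icc (k + 1) n := by
    simp only [Finset.mem_Icc]; omega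
  set B : Finset ℕ := insert (n + i) (Finset.Icc (k + 1) n) with hB
  have hniB : n + i ∈ B := Finset.mem_insert_self _ _
  have hBcard : B.card = n - k + 1 := by
    rw [hB, Finset.card_insert_of_notMem hniIcc, Nat.card_Icc]; omega
  have hBmem : ∀ b ∈ B, b = n + i ∨ (k + 1 ≤ b ∧ b ≤ n) := by
    intro b hb
    rcases Finset.mem_insert.1 hb with h | h
    · exact Or.inl h
    · exact Or.inr (Finset.mem_Icc.1 h)
  have hAnotB : ∀ j ∈ A, n + j ∉ B := by
    intro j hj hmem
    have hji : j ≠ i := fun e => hiA (e ▸ hj)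
    have hj1 : 1 ≤ j := (Finset.mem_Icc.1 (hH0 (hAH0 hj))).1
    rcases hBmem _ hmem with h | h
    · exact hji (by omega)
    · omega
  -- deterministic reconstruction of the attacked samples and scores
  set Ft : (ℕ → 𝒵) → ℕ → 𝒵 :=
    fun z l => if h : ∃ j ∈ A, n + j = l then fatk (z l) z else z l with hFt
  set Sf : (ℕ → 𝒵) → ℕ → ℝ := fun z l => st (Ft z l) (Ft z) with hSf
  have hFtmeas : Measurable Ft := by
    apply measurable_pi_lambda
    intro l
    by_cases h : ∃ j ∈ A, n + j = l
    · simp only [hFt, dif_pos h]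
      have he : (fun z : ℕ → 𝒵 => fatk (z l) z)
          = (fun q : 𝒵 × (ℕ → 𝒵) => fatk q.1 q.2) ∘ (fun z => (z l, z)) := rfl
      rw [he]
      exact hfmeas.comp ((measurable_pi_apply l).prodMk measurable_id)
    · simp only [hFt, dif_neg h]
      exact measurable_pi_apply l
  have hSfmeas : ∀ l, Measurable fun z => Sf z l := by
    intro l
    simp only [hSf]
    have he : (fun z => st (Ft z l) (Ft z))
        = (fun q : 𝒵 × (ℕ → 𝒵) => st q.1 q.2) ∘ (fun z => (Ft z l, Ft z)) := rfl
    rw [he]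
    exact hstmeas.comp (hFtmeas.eval.prodMk hFtmeas)
  have hZtF : ∀ ω, Zt ω = Ft (Z ω) := by
    intro ω; funext l
    by_cases h : ∃ j ∈ A, n + j = l
    · obtain ⟨j, hj, rfl⟩ := h
      rw [hZtA ω j hj]
      simp only [hFt]
      rw [dif_pos ⟨j, hj, rfl⟩]
    · rw [hZtn ω l fun j hj e => h ⟨j, hj, e.symm⟩]
      simp only [hFt]
      rw [dif_neg h]
  have hSZ : ∀ ω l, S ω l = Sf (Z ω) l := by
    intro ω l
    rw [hS, hZtF ω]
  -- swap permutation facts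
  have hswapfix : ∀ (b : ℕ), ∀ x, x ≠ n + i → x ≠ b → Equiv.swap (n + i) b x = x :=
    fun b x h1 h2 => Equiv.swap_apply_of_ne_of_ne h1 h2
  have hFtswap : ∀ b ∈ B, ∀ z : ℕ → 𝒵,
      Ft (fun l => z (Equiv.swap (n + i) b l)) = fun l => Ft z (Equiv.swap (n + i) b l) := by
    intro b hb z
    have hfixatk : ∀ x ∉ Finset.Icc 1 n ∪ (H0 \ A).image (fun j => n + j),
        Equiv.swap (n + i) b x = x := by
      intro x hx
      apply hswapfix
      · intro e
        exact hx (by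
          rw [e]
          exact Finset.mem_union.2 (Or.inr (Finset.mem_image.2
            ⟨i, Finset.mem_sdiff.2 ⟨hiH0, hiA⟩, rfl⟩)))
      · intro e
        rcases hBmem b hb with h' | h'
        · exact hx (by
            rw [e, h']
            exact Finset.mem_union.2 (Or.inr (Finset.mem_image.2
              ⟨i, Finset.mem_sdiff.2 ⟨hiH0, hiA⟩, rfl⟩)))
        · exact hx (by
            rw [e]
            exact Finset.mem_union.2 (Or.inl (Finset.mem_Icc.2 ⟨by omega, h'.2⟩)))
    funext l
    by_cases h : ∃ j ∈ A, n + j = l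
    · obtain ⟨j, hj, rfl⟩ := h
      have hne1 : n + j ≠ n + i := fun e => hAnotB j hj (by rw [e]; exact hniB)
      have hne2 : n + j ≠ b := fun e => hAnotB j hj (by rw [e]; exact hb)
      have hσl : Equiv.swap (n + i) b (n + j) = n + j := hswapfix b _ hne1 hne2
      simp only [hFt]
      rw [dif_pos ⟨j, hj, rfl⟩, hσl, dif_pos ⟨j, hj, rfl⟩]
      exact hford (z (n + j)) z _ hfixatk
    · have hσlA : ¬ ∃ j ∈ A, n + j = Equiv.swap (n + i) b l := by
        rintro ⟨j, hj, hjl⟩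
        by_cases hl1 : l = n + i
        · rw [hl1, Equiv.swap_apply_left] at hjl
          exact hAnotB j hj (by rw [hjl]; exact hb)
        by_cases hl2 : l = b
        · rw [hl2, Equiv.swap_apply_right] at hjl
          exact hAnotB j hj (by rw [hjl]; exact hniB)
        · rw [hswapfix b l hl1 hl2] at hjl
          exact h ⟨j, hj, hjl⟩
      simp only [hFt]
      rw [dif_neg h, dif_neg hσlA]
  have hstfix : ∀ b ∈ B, ∀ x ∉ Finset.Icc (k + 1) (n + m), Equiv.swap (n + i) b x = x := by
    intro b hb x hx
    apply hswapfix
    · intro e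
      exact hx (by rw [e]; exact Finset.mem_Icc.2 ⟨by omega, by omega⟩)
    · intro e
      rcases hBmem b hb with h' | h'
      · exact hx (by rw [e, h']; exact Finset.mem_Icc.2 ⟨by omega, by omega⟩)
      · exact hx (by rw [e]; exact Finset.mem_Icc.2 ⟨by omega, by omega⟩)
  have hSfswap : ∀ b ∈ B, ∀ (z : ℕ → 𝒵) (l : ℕ),
      Sf (fun x => z (Equiv.swap (n + i) b x)) l = Sf z (Equiv.swap (n + i) b l) := by
    intro b hb z l
    simp only [hSf]
    rw [hFtswap b hb z]
    exact hstinv _ (Ft z) _ (hstfix b hb)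
  -- swap image facts
  have himg : ∀ b ∈ B, (Finset.Icc (k + 1) n).image (Equiv.swap (n + i) b) = B.erase b := by
    intro b hb
    rcases hBmem b hb with h' | h'
    · subst h'
      rw [Equiv.swap_self]
      simp only [Equiv.coe_refl, Finset.image_id]
      rw [hB, Finset.erase_insert hniIcc]
    · have hbIcc : b ∈ Finset.Icc (k + 1) n := Finset.mem_Icc.2 h'
      ext x
      simp only [Finset.mem_image, Finset.mem_erase]
      constructor
      · rintro ⟨y, hy, rfl⟩
        by_cases hyb : y = b
        · subst hyb
          rw [Equiv.swap_apply_right]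
          exact ⟨by omega, hniB⟩
        · have hyni : y ≠ n + i := by
            have := Finset.mem_Icc.1 hy; omega
          rw [hswapfix b y hyni hyb]
          exact ⟨hyb, Finset.mem_insert_of_mem hy⟩
      · rintro ⟨hxb, hxB⟩
        rcases Finset.mem_insert.1 hxB with h2 | h2
        · exact ⟨b, hbIcc, by rw [h2, Equiv.swap_apply_right]⟩
        · have hxni : x ≠ n + i := by
            have := Finset.mem_Icc.1 h2; omega
          exact ⟨x, h2, hswapfix b x hxni hxb⟩
  have hvalmap : ∀ b ∈ B, B.val.map (Equiv.swap (n + i) b) = B.val := by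
    intro b hb
    have himgB : B.image (Equiv.swap (n + i) b) = B := by
      rcases hBmem b hb with h' | h'
      · subst h'
        rw [Equiv.swap_self]
        simp only [Equiv.coe_refl, Finset.image_id]
      · rw [hB, Finset.image_insert, Equiv.swap_apply_left, ← hB, himg b hb,
          Finset.insert_erase hb, hB]
    calc B.val.map (Equiv.swap (n + i) b)
        = (B.image (Equiv.swap (n + i) b)).val :=
          (Finset.image_val_of_injOn ((Equiv.injective _).injOn)).symm
      _ = B.val := by rw [himgB]
  -- score statistics
  set φ : (ℕ → 𝒵) → ℝ := fun z =>
    (1 + (((Finset.Icc (k + 1) n).filter fun l => Sf z (n + i) ≤ Sf z l).card : ℝ)) /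
      ((n : ℝ) - k + 1) with hφ
  set φb : ℕ → (ℕ → 𝒵) → ℝ := fun b z =>
    (1 + (((B.erase b).filter fun c => Sf z b ≤ Sf z c).card : ℝ)) / ((n : ℝ) - k + 1) with hφb
  set ψ : (ℕ → 𝒵) →
      (ℕ → ℝ) × ({x // x ∈ H0.erase i} → ℝ) × ({x // x ∈ Finset.Icc 1 m \ H0} → ℝ) :=
    fun z => (fun j => ((B.val.map (Sf z)).sort (· ≤ ·)).getD j 0,
      fun j => Sf z (n + (j : ℕ)), fun j => Sf z (n + (j : ℕ))) with hψ
  have hφmeas : Measurable φ := by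
    rw [hφ]
    apply Measurable.div_const
    apply Measurable.const_add
    exact meas_card_filter _ (fun z l => Sf z (n + i) ≤ Sf z l)
      (fun l => measurableSet_le (hSfmeas (n + i)) (hSfmeas l))
  have hφbmeas : ∀ b, Measurable (φb b) := by
    intro b
    simp only [hφb]
    apply Measurable.div_const
    apply Measurable.const_add
    exact meas_card_filter _ (fun z c => Sf z b ≤ Sf z c)
      (fun c => measurableSet_le (hSfmeas b) (hSfmeas c))
  have hlen : ∀ z : ℕ → 𝒵, ((B.val.map (Sf z)).sort (· ≤ ·)).length = n - k + 1 := by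
    intro z
    rw [Multiset.length_sort, Multiset.card_map]
    exact hBcard
  have hcount : ∀ (z : ℕ → 𝒵) (c : ℝ),
      ((B.val.map (Sf z)).sort (· ≤ ·)).countP (fun x => decide (x ≤ c))
        = (B.filter fun l => Sf z l ≤ c).card := by
    intro z c
    rw [← Multiset.coe_countP (fun x => x ≤ c), Multiset.sort_eq, Multiset.countP_map]
    rfl
  have hψ1meas : ∀ j : ℕ, Measurable fun z : ℕ → 𝒵 =>
      ((B.val.map (Sf z)).sort (· ≤ ·)).getD j 0 := by
    intro j
    by_cases hj : j < n - k + 1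
    · apply measurable_of_Iic
      intro c
      have hEq : (fun z : ℕ → 𝒵 => ((B.val.map (Sf z)).sort (· ≤ ·)).getD j 0) ⁻¹' Set.Iic c
          = (fun z => ((B.filter fun l => Sf z l ≤ c).card : ℝ)) ⁻¹' Set.Ioi (j : ℝ) := by
        ext z
        simp only [Set.mem_preimage, Set.mem_Iic, Set.mem_Ioi]
        rw [sorted_getD_le_iff c _ (Multiset.pairwise_sort _ _) j (by rw [hlen z]; exact hj)]
        rw [hcount z c]
        exact Nat.cast_lt.symm
      rw [hEq]
      exact (meas_card_filter _ (fun z l => Sf z l ≤ c)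
        (fun l => measurableSet_le (hSfmeas l) measurable_const)) measurableSet_Ioi
    · have hzero : ∀ z : ℕ → 𝒵, ((B.val.map (Sf z)).sort (· ≤ ·)).getD j 0 = 0 := by
        intro z
        apply List.getD_eq_default
        rw [hlen z]; omega
      simp only [hzero]
      exact measurable_const
  have hψmeas : Measurable ψ := by
    rw [hψ]
    apply Measurable.prodMk
    · exact measurable_pi_lambda _ fun j => hψ1meas j
    apply Measurable.prodMk
    · exact measurable_pi_lambda _ fun j => hSfmeas _
    · exact measurable_pi_lambda _ fun j => hSfmeas _
  -- invariance of φ and ψ under swaps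
  have hφswap : ∀ b ∈ B, ∀ z : ℕ → 𝒵,
      φ (fun l => z (Equiv.swap (n + i) b l)) = φb b z := by
    intro b hb z
    have h1 : ∀ l, Sf (fun x => z (Equiv.swap (n + i) b x)) l = Sf z (Equiv.swap (n + i) b l) :=
      hSfswap b hb z
    simp only [hφ, hφb, h1, Equiv.swap_apply_left]
    have hcardeq : ((Finset.Icc (k + 1) n).filter
          fun l => Sf z b ≤ Sf z (Equiv.swap (n + i) b l)).card
        = ((B.erase b).filter fun c => Sf z b ≤ Sf z c).card := by
      rw [← himg b hb, Finset.filter_image, Finset.card_image_of_injective _ (Equiv.injective _)]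
    rw [hcardeq]
  have hψswap : ∀ b ∈ B, ∀ z : ℕ → 𝒵,
      ψ (fun l => z (Equiv.swap (n + i) b l)) = ψ z := by
    intro b hb z
    have h1 : ∀ l, Sf (fun x => z (Equiv.swap (n + i) b x)) l = Sf z (Equiv.swap (n + i) b l) :=
      hSfswap b hb z
    have hfix2 : ∀ j : ℕ, 1 ≤ j → j ≠ i → Equiv.swap (n + i) b (n + j) = n + j := by
      intro j hj1 hji
      have hne1 : n + j ≠ n + i := by omega
      have hne2 : n + j ≠ b := by rcases hBmem b hb with h' | h' <;> omega
      exact hswapfix b _ hne1 hne2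
    have hmul : B.val.map (Sf (fun x => z (Equiv.swap (n + i) b x))) = B.val.map (Sf z) := by
      have hstep : B.val.map (Sf (fun x => z (Equiv.swap (n + i) b x)))
          = (B.val.map (Equiv.swap (n + i) b)).map (Sf z) := by
        rw [Multiset.map_map]
        exact Multiset.map_congr rfl fun x _ => h1 x
      rw [hstep, hvalmap b hb]
    simp only [hψ, Prod.mk.injEq]
    refine ⟨?_, ?_, ?_⟩
    · funext j
      rw [hmul]
    · funext j
      rcases j with ⟨j, hj⟩
      have hji : j ≠ i := (Finset.mem_erase.1 hj).1
      have hj1 : 1 ≤ j := (Finset.mem_Icc.1 (hH0 (Finset.mem_erase.1 hj).2)).1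
      simp only
      rw [h1, hfix2 j hj1 hji]
    · funext j
      rcases j with ⟨j, hj⟩
      have hjm := Finset.mem_sdiff.1 hj
      have hji : j ≠ i := fun e => hjm.2 (e ▸ hiH0)
      have hj1 : 1 ≤ j := (Finset.mem_Icc.1 hjm.1).1
      simp only
      rw [h1, hfix2 j hj1 hji]
  -- measure invariance under swaps
  have hswapmeas : ∀ (b : ℕ), Measurable fun ω => fun l => Z ω (Equiv.swap (n + i) b l) :=
    fun b => measurable_pi_lambda _ fun l => (measurable_pi_apply _).comp hZmeas
  have htrans : ∀ b ∈ B, ∀ E : Set (ℕ → 𝒵), MeasurableSet E →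
      ℙ ((fun ω => fun l => Z ω (Equiv.swap (n + i) b l)) ⁻¹' E) = ℙ (Z ⁻¹' E) := by
    intro b hb E hE
    have hfix : ∀ x ∉ Finset.Icc 1 n ∪ H0.image (fun j => n + j),
        Equiv.swap (n + i) b x = x := by
      intro x hx
      apply hswapfix
      · intro e
        exact hx (by
          rw [e]
          exact Finset.mem_union.2 (Or.inr (Finset.mem_image.2 ⟨i, hiH0, rfl⟩)))
      · intro e
        rcases hBmem b hb with h' | h'
        · exact hx (by
            rw [e, h']
            exact Finset.mem_union.2 (Or.inr (Finset.mem_image.2 ⟨i, hiH0, rfl⟩)))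
        · exact hx (by
            rw [e]
            exact Finset.mem_union.2 (Or.inl (Finset.mem_Icc.2 ⟨by omega, h'.2⟩)))
    have hm' := hexch (Equiv.swap (n + i) b) hfix
    rw [← Measure.map_apply (hswapmeas b) hE, ← Measure.map_apply hZmeas hE, hm']
  -- key identity
  have hkey : ∀ (s : Set ℝ)
      (t : Set ((ℕ → ℝ) × ({x // x ∈ H0.erase i} → ℝ) × ({x // x ∈ Finset.Icc 1 m \ H0} → ℝ))),
      MeasurableSet s → MeasurableSet t →
      ((n - k + 1 : ℕ) : ℝ≥0∞) * ℙ ((fun ω => φ (Z ω)) ⁻¹' s ∩ (fun ω => ψ (Z ω)) ⁻¹' t)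
        = ((((Finset.range (n - k + 1)).filter
              fun r : ℕ => (1 + (r : ℝ)) / ((n : ℝ) - k + 1) ∈ s).card : ℕ) : ℝ≥0∞)
            * ℙ ((fun ω => ψ (Z ω)) ⁻¹' t) := by
    intro s t hs ht
    set T := (fun ω => ψ (Z ω)) ⁻¹' t with hT
    have hTmeas : MeasurableSet T := (hψmeas.comp hZmeas) ht
    have hEbmeas : ∀ b, MeasurableSet ((fun ω => φb b (Z ω)) ⁻¹' s) :=
      fun b => ((hφbmeas b).comp hZmeas) hs
    have hstep1 : ∀ b ∈ B,
        ℙ ((fun ω => φ (Z ω)) ⁻¹' s ∩ T) = ℙ ((fun ω => φb b (Z ω)) ⁻¹' s ∩ T) := by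
      intro b hb
      have hE : MeasurableSet (φ ⁻¹' s ∩ ψ ⁻¹' t) := (hφmeas hs).inter (hψmeas ht)
      have h2 := htrans b hb _ hE
      have e1 : (fun ω => fun l => Z ω (Equiv.swap (n + i) b l)) ⁻¹' (φ ⁻¹' s ∩ ψ ⁻¹' t)
          = (fun ω => φb b (Z ω)) ⁻¹' s ∩ T := by
        ext ω
        simp only [Set.mem_preimage, Set.mem_inter_iff, hT]
        rw [hφswap b hb (Z ω), hψswap b hb (Z ω)]
      have e2 : Z ⁻¹' (φ ⁻¹' s ∩ ψ ⁻¹' t) = (fun ω => φ (Z ω)) ⁻¹' s ∩ T := rfl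
      rw [← e2, ← h2, e1]
    have hae : ∀ᵐ ω ∂ℙ,
        (∑ b ∈ B, ((fun ω => φb b (Z ω)) ⁻¹' s).indicator (1 : Ω → ℝ≥0∞) ω)
          = ((((Finset.range (n - k + 1)).filter
              fun r : ℕ => (1 + (r : ℝ)) / ((n : ℝ) - k + 1) ∈ s).card : ℕ) : ℝ≥0∞) := by
      filter_upwards [hdist] with ω hω
      have hfd : ∀ a ∈ B, ∀ c ∈ B, a ≠ c → Sf (Z ω) a ≠ Sf (Z ω) c := by
        intro a ha c hc hac
        have hsub : ∀ x ∈ B, x ∈ Finset.Icc (k + 1) (n + m) := by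
          intro x hx
          rcases hBmem x hx with h' | h'
          · rw [h']; exact Finset.mem_Icc.2 ⟨by omega, by omega⟩
          · exact Finset.mem_Icc.2 ⟨h'.1, by omega⟩
        have hSne := hω a (hsub a ha) c (hsub c hc) hac
        rw [hSZ ω a, hSZ ω c] at hSne
        exact hSne
      have himgr : B.image (fun b =>
            ((B.erase b).filter fun c => Sf (Z ω) b ≤ Sf (Z ω) c).card)
          = Finset.range (n - k + 1) := by
        rw [rank_image_eq B (Sf (Z ω)) hfd, hBcard]
      have hinjr : ∀ x ∈ B, ∀ y ∈ B,
          ((B.erase x).filter fun c => Sf (Z ω) x ≤ Sf (Z ω) c).card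
            = ((B.erase y).filter fun c => Sf (Z ω) y ≤ Sf (Z ω) c).card → x = y := by
        have hcard : (B.image (fun b =>
            ((B.erase b).filter fun c => Sf (Z ω) b ≤ Sf (Z ω) c).card)).card = B.card := by
          rw [himgr, Finset.card_range, hBcard]
        intro x hx y hy hxy
        exact Finset.injOn_of_card_image_eq hcard hx hy hxy
      calc (∑ b ∈ B, ((fun ω => φb b (Z ω)) ⁻¹' s).indicator (1 : Ω → ℝ≥0∞) ω)
          = ∑ b ∈ B, if (1 + ((((B.erase b).filter
                fun c => Sf (Z ω) b ≤ Sf (Z ω) c).card : ℕ) : ℝ)) / ((n : ℝ) - k + 1) ∈ s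
              then (1 : ℝ≥0∞) else 0 := by
            refine Finset.sum_congr rfl fun b _ => ?_
            rw [Set.indicator_apply]
            simp only [Set.mem_preimage, hφb, Pi.one_apply]
        _ = ∑ x ∈ Finset.range (n - k + 1),
              (if (1 + (x : ℝ)) / ((n : ℝ) - k + 1) ∈ s then (1 : ℝ≥0∞) else 0) := by
            rw [← himgr, Finset.sum_image hinjr]
        _ = ((((Finset.range (n - k + 1)).filter
              fun r : ℕ => (1 + (r : ℝ)) / ((n : ℝ) - k + 1) ∈ s).card : ℕ) : ℝ≥0∞) := by
            rw [Finset.sum_boole]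
    calc ((n - k + 1 : ℕ) : ℝ≥0∞) * ℙ ((fun ω => φ (Z ω)) ⁻¹' s ∩ T)
        = ∑ _b ∈ B, ℙ ((fun ω => φ (Z ω)) ⁻¹' s ∩ T) := by
          rw [Finset.sum_const, hBcard, nsmul_eq_mul]
      _ = ∑ b ∈ B, ℙ ((fun ω => φb b (Z ω)) ⁻¹' s ∩ T) :=
          Finset.sum_congr rfl fun b hb => hstep1 b hb
      _ = ∑ b ∈ B, ∫⁻ ω, ((fun ω => φb b (Z ω)) ⁻¹' s).indicator 1 ω ∂((ℙ : Measure Ω).restrict T) := by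
          refine Finset.sum_congr rfl fun b _ => ?_
          rw [← Measure.restrict_apply (hEbmeas b), lintegral_indicator_one (hEbmeas b)]
      _ = ∫⁻ ω, ∑ b ∈ B, ((fun ω => φb b (Z ω)) ⁻¹' s).indicator 1 ω ∂((ℙ : Measure Ω).restrict T) :=
          (lintegral_finset_sum _ fun b _ => measurable_one.indicator (hEbmeas b)).symm
      _ = ∫⁻ _ω, ((((Finset.range (n - k + 1)).filter
              fun r : ℕ => (1 + (r : ℝ)) / ((n : ℝ) - k + 1) ∈ s).card : ℕ) : ℝ≥0∞)
            ∂((ℙ : Measure Ω).restrict T) := lintegral_congr_ae (ae_restrict_of_ae hae)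
      _ = ((((Finset.range (n - k + 1)).filter
              fun r : ℕ => (1 + (r : ℝ)) / ((n : ℝ) - k + 1) ∈ s).card : ℕ) : ℝ≥0∞) * ℙ T := by
          rw [lintegral_const, Measure.restrict_apply_univ]
  -- identify the random variables
  rw [indepFun_iff_measure_inter_preimage_eq_mul]
  intro s t hs ht
  have hpfun : (fun ω => p ω i) = fun ω => φ (Z ω) := by
    funext ω
    rw [hp ω i]
    simp only [hφ, hSZ]
  have hWfun : (fun ω => (Wsort ω i,
      fun j : {x // x ∈ H0.erase i} => S ω (n + (j : ℕ)),
      fun j : {x // x ∈ Finset.Icc 1 m \ H0} => S ω (n + (j : ℕ))))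
      = fun ω => ψ (Z ω) := by
    funext ω
    have hmul : (S ω (n + i) ::ₘ (Finset.Icc (k + 1) n).val.map (S ω))
        = B.val.map (Sf (Z ω)) := by
      rw [hB, Finset.insert_val_of_notMem hniIcc, Multiset.map_cons, hSZ ω (n + i)]
      congr 1
      exact Multiset.map_congr rfl fun x _ => hSZ ω x
    simp only [hψ, Prod.mk.injEq]
    refine ⟨?_, ?_, ?_⟩
    · funext j
      rw [hWsort ω i j, hmul]
    · funext j
      exact hSZ ω _
    · funext j
      exact hSZ ω _
  rw [hpfun, hWfun]
  have h1 := hkey s t hs ht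
  have h2 := hkey s Set.univ hs MeasurableSet.univ
  rw [Set.preimage_univ, Set.inter_univ, measure_univ, mul_one] at h2
  have hN0 : ((n - k + 1 : ℕ) : ℝ≥0∞) ≠ 0 := by
    simp only [ne_eq, Nat.cast_eq_zero]
    omega
  have hNtop : ((n - k + 1 : ℕ) : ℝ≥0∞) ≠ ⊤ := ENNReal.natCast_ne_top _
  rw [← ENNReal.mul_right_inj hN0 hNtop, h1, ← mul_assoc, h2]

end
end

section
/- Under Assumption 1, with A ⊆ H_0 a fixed set of m_a indices, f_attack order-invariant, s̃ a permutation-invariant score function, and the post-attack scores almost surely pairwise distinct, for every unattacked true-null test index i ∈ H_0∖A the quantity (n−k+1)·p̃_i is uniformly distributed on the integers {1,…,n−k+1}. -/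
/-!
Swapping a calibration index `t ∈ {k+1,…,n}` with the unattacked null index `n+i` is a
permutation of the exchangeable block that fixes every attacked position. Since the attack
map sees the clean sample only through an unordered set and the score is permutation-invariant,
the score vector is equivariant under this swap, so its law is invariant. Hence the rank of
`S_{n+i}` among the `n-k+1` scores indexed by `{k+1,…,n} ∪ {n+i}` has the same law as the rank
of each of them; as the scores are a.s. distinct, these ranks a.s. enumerate `{1,…,n-k+1}`, so
each value is taken with probability `1/(n-k+1)`.
-/

open MeasureTheory ProbabilityTheory Finset
open scoped ENNReal

noncomputable section

namespace Equiv

variable {α : Type*} [DecidableEq α] {s : Finset α} {a b x : α}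

lemma swap_apply_of_notMem (ha : a ∈ s) (hb : b ∈ s) (hx : x ∉ s) : swap a b x = x :=
  swap_apply_of_ne_of_ne (ne_of_mem_of_not_mem ha hx).symm (ne_of_mem_of_not_mem hb hx).symm

lemma swap_apply_mem_iff (ha : a ∈ s) (hb : b ∈ s) : swap a b x ∈ s ↔ x ∈ s := by
  rcases eq_or_ne x a with rfl | hxa
  · simp [ha, hb]
  rcases eq_or_ne x b with rfl | hxb
  · simp [ha, hb]
  rw [swap_apply_of_ne_of_ne hxa hxb]

end Equiv

section UpperRank

variable {ι α : Type*} [LinearOrder α] {s : ι → α} {T : Finset ι} {t : ι}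

def upperRank (s : ι → α) (T : Finset ι) (t : ι) : ℕ := #{u ∈ T | s t ≤ s u}

lemma upperRank_pos (ht : t ∈ T) : 0 < upperRank s T t :=
  card_pos.mpr ⟨t, mem_filter.mpr ⟨ht, le_rfl⟩⟩

lemma upperRank_le_card : upperRank s T t ≤ #T := card_filter_le _ _

lemma upperRank_lt_upperRank {a b : ι} (ha : a ∈ T) (hab : s a < s b) :
    upperRank s T b < upperRank s T a := by
  refine card_lt_card ((ssubset_iff_of_subset ?_).mpr ⟨a, ?_, ?_⟩)
  · exact monotone_filter_right _ fun _ _ hu => hab.le.trans hu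
  · exact mem_filter.mpr ⟨ha, le_rfl⟩
  · exact fun h => (mem_filter.mp h).2.not_gt hab

lemma injOn_upperRank (hs : Set.InjOn s T) : Set.InjOn (upperRank s T) T := by
  intro a ha b hb hab
  by_contra hne
  rcases (hs.ne ha hb hne).lt_or_gt with h | h
  · exact (upperRank_lt_upperRank ha h).ne' hab
  · exact (upperRank_lt_upperRank hb h).ne hab

lemma card_filter_upperRank_eq_one (hs : Set.InjOn s T) {r : ℕ} (hr : r ∈ Icc 1 #T) :
    #{t ∈ T | upperRank s T t = r} = 1 := by
  obtain ⟨t, ht, rfl⟩ := surj_on_of_inj_on_of_card_le (fun t _ => upperRank s T t)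
    (fun t ht => mem_Icc.mpr ⟨upperRank_pos ht, upperRank_le_card⟩)
    (fun _ _ ha hb h => injOn_upperRank hs ha hb h) (by simp) r hr
  refine card_eq_one.mpr ⟨t, ext fun u => ?_⟩
  simp only [mem_filter, mem_singleton]
  exact ⟨fun hu => injOn_upperRank hs hu.1 ht hu.2, fun hu => by subst hu; exact ⟨ht, rfl⟩⟩

lemma upperRank_comp_perm (σ : Equiv.Perm ι) (hσ : ∀ u, σ u ∈ T ↔ u ∈ T) (s : ι → α) (t : ι) :
    upperRank (s ∘ σ) T t = upperRank s T (σ t) :=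
  card_equiv σ fun u => by simp [hσ]

lemma upperRank_insert_self [DecidableEq ι] {C : Finset ι} (ht : t ∉ C) :
    upperRank s (insert t C) t = #{u ∈ C | s t ≤ s u} + 1 := by
  rw [upperRank, filter_insert, if_pos le_rfl,
    card_insert_of_notMem fun h => ht (mem_filter.mp h).1]

lemma measurable_upperRank {β : Type*} [MeasurableSpace β] {S : β → ι → ℝ}
    (hS : ∀ u, Measurable fun x => S x u) (T : Finset ι) (t : ι) :
    Measurable fun x => upperRank (S x) T t := by
  simp_rw [upperRank, card_filter]
  exact Finset.measurable_sum T fun u _ =>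
    (measurable_const.ite (measurableSet_le (hS t) (hS u)) measurable_const)

end UpperRank

section Probability

variable {Ω ι : Type*} [MeasurableSpace Ω] {μ : Measure Ω}

lemma sum_measure_eq_one_of_ae_card_filter_eq_one [IsProbabilityMeasure μ] {T : Finset ι}
    {E : ι → Set Ω} [∀ t, DecidablePred (· ∈ E t)] (hE : ∀ t ∈ T, MeasurableSet (E t))
    (h : ∀ᵐ ω ∂μ, #{t ∈ T | ω ∈ E t} = 1) : ∑ t ∈ T, μ (E t) = 1 :=
  calc ∑ t ∈ T, μ (E t) = ∑ t ∈ T, ∫⁻ ω, (E t).indicator 1 ω ∂μ :=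
        sum_congr rfl fun t ht => (lintegral_indicator_one (hE t ht)).symm
    _ = ∫⁻ ω, ∑ t ∈ T, (E t).indicator 1 ω ∂μ :=
        (lintegral_finsetSum T fun t ht => measurable_one.indicator (hE t ht)).symm
    _ = ∫⁻ _, 1 ∂μ := lintegral_congr_ae <| h.mono fun ω hω => by
        simp only [Set.indicator_apply, Pi.one_apply, sum_boole, hω, Nat.cast_one]
    _ = 1 := by simp

lemma measure_eq_one_div_card_of_ae_card_filter_eq_one [IsProbabilityMeasure μ] {T : Finset ι}
    {E : ι → Set Ω} [∀ t, DecidablePred (· ∈ E t)] (hE : ∀ t ∈ T, MeasurableSet (E t))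
    (h : ∀ᵐ ω ∂μ, #{t ∈ T | ω ∈ E t} = 1) {t₀ : ι} (ht₀ : t₀ ∈ T)
    (heq : ∀ t ∈ T, μ (E t) = μ (E t₀)) : μ (E t₀) = 1 / #T := by
  have hsum := sum_measure_eq_one_of_ae_card_filter_eq_one hE h
  rw [sum_congr rfl heq, sum_const, nsmul_eq_mul] at hsum
  rw [ENNReal.eq_div_iff (by simpa using card_ne_zero_of_mem ht₀) (ENNReal.natCast_ne_top _)]
  exact hsum

lemma measure_upperRank_perm_eq {S : Ω → ι → ℝ} (hS : Measurable S) {σ : Equiv.Perm ι}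
    (hσS : μ.map (fun ω => S ω ∘ σ) = μ.map S) {T : Finset ι} (hσT : ∀ u, σ u ∈ T ↔ u ∈ T)
    (t : ι) (r : ℕ) :
    μ {ω | upperRank (S ω) T (σ t) = r} = μ {ω | upperRank (S ω) T t = r} := by
  have hB : MeasurableSet {s : ι → ℝ | upperRank s T t = r} :=
    measurable_upperRank measurable_pi_apply T t (measurableSet_singleton r)
  have hSσ : Measurable fun ω => S ω ∘ σ :=
    measurable_pi_lambda _ fun u => (measurable_pi_apply (σ u)).comp hS
  simp_rw [← upperRank_comp_perm σ hσT]
  calc μ {ω | upperRank (S ω ∘ σ) T t = r}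
      = μ.map (fun ω => S ω ∘ σ) {s | upperRank s T t = r} := (Measure.map_apply hSσ hB).symm
    _ = μ {ω | upperRank (S ω) T t = r} := by rw [hσS, Measure.map_apply hS hB]; rfl

lemma measure_upperRank_eq_one_div_card [IsProbabilityMeasure μ] [DecidableEq ι]
    {S : Ω → ι → ℝ} (hS : Measurable S) {T : Finset ι} {t₀ : ι} (ht₀ : t₀ ∈ T)
    (hswap : ∀ t ∈ T, μ.map (fun ω => S ω ∘ Equiv.swap t t₀) = μ.map S)
    (hinj : ∀ᵐ ω ∂μ, Set.InjOn (S ω) T) {r : ℕ} (hr : r ∈ Icc 1 #T) :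
    μ {ω | upperRank (S ω) T t₀ = r} = 1 / #T := by
  refine measure_eq_one_div_card_of_ae_card_filter_eq_one
    (E := fun t => {ω | upperRank (S ω) T t = r})
    (fun t _ => measurable_upperRank (fun u => (measurable_pi_apply u).comp hS) T t
      (measurableSet_singleton r))
    (hinj.mono fun ω h => card_filter_upperRank_eq_one h hr) ht₀ fun t ht => ?_
  simpa using (measure_upperRank_perm_eq hS (hswap t ht)
    (fun _ => Equiv.swap_apply_mem_iff ht ht₀) t r).symm

lemma map_comp_perm_eq_of_equivariant {α β : Type*} [MeasurableSpace α] [MeasurableSpace β]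
    {Z : Ω → ι → α} (hZ : Measurable Z) {Φ : (ι → α) → ι → β} (hΦ : Measurable Φ)
    {σ : Equiv.Perm ι} (hΦσ : ∀ z, Φ (z ∘ σ) = Φ z ∘ σ)
    (hZσ : μ.map (fun ω => Z ω ∘ σ) = μ.map Z) :
    μ.map (fun ω => Φ (Z ω) ∘ σ) = μ.map (fun ω => Φ (Z ω)) := by
  have hZσm : Measurable fun ω => Z ω ∘ σ :=
    measurable_pi_lambda _ fun u => (measurable_pi_apply (σ u)).comp hZ
  simp_rw [← hΦσ]
  rw [← Function.comp_def Φ (fun ω => Z ω ∘ σ), ← Measure.map_map hΦ hZσm, hZσ,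
    Measure.map_map hΦ hZ, Function.comp_def]

end Probability

section Attack

variable {ι 𝒵 : Type*} {σ : Equiv.Perm ι}

def sampleScores (st : 𝒵 → (ι → 𝒵) → ℝ) (w : ι → 𝒵) : ι → ℝ := fun u => st (w u) w

lemma sampleScores_comp_perm {st : 𝒵 → (ι → 𝒵) → ℝ} {w : ι → 𝒵}
    (hst : ∀ x, st x (w ∘ σ) = st x w) : sampleScores st (w ∘ σ) = sampleScores st w ∘ σ := by
  funext u
  simp [sampleScores, hst]

lemma measurable_sampleScores [MeasurableSpace 𝒵] {st : 𝒵 → (ι → 𝒵) → ℝ}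
    (hst : Measurable fun q : 𝒵 × (ι → 𝒵) => st q.1 q.2) : Measurable (sampleScores st) :=
  measurable_pi_lambda _ fun u =>
    hst.comp (f := fun w : ι → 𝒵 => (w u, w)) ((measurable_pi_apply u).prodMk measurable_id)

variable [DecidableEq ι] {f : 𝒵 → (ι → 𝒵) → 𝒵} {P : Finset ι}

def attackSample (f : 𝒵 → (ι → 𝒵) → 𝒵) (P : Finset ι) (z : ι → 𝒵) : ι → 𝒵 :=
  fun u => if u ∈ P then f (z u) z else z u

lemma attackSample_comp_perm (hσP : ∀ u ∈ P, σ u = u) {z : ι → 𝒵}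
    (hf : ∀ x, f x (z ∘ σ) = f x z) : attackSample f P (z ∘ σ) = attackSample f P z ∘ σ := by
  funext u
  by_cases hu : u ∈ P
  · simp [attackSample, hu, hσP u hu, hf]
  · have hσu : σ u ∉ P := fun h => hu (σ.injective (hσP _ h) ▸ h)
    simp [attackSample, hu, hσu]

lemma eq_attackSample {z w : ι → 𝒵} (hP : ∀ u ∈ P, w u = f (z u) z) (hPc : ∀ u ∉ P, w u = z u) :
    w = attackSample f P z := by
  funext u
  by_cases hu : u ∈ P
  · simp [attackSample, hu, hP u hu]
  · simp [attackSample, hu, hPc u hu]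

variable [MeasurableSpace 𝒵]

lemma measurable_attackSample (hf : Measurable fun q : 𝒵 × (ι → 𝒵) => f q.1 q.2) (P : Finset ι) :
    Measurable (attackSample f P) := by
  refine measurable_pi_lambda _ fun u => ?_
  by_cases hu : u ∈ P
  · simp only [attackSample, if_pos hu]
    exact hf.comp (f := fun z => (z u, z)) ((measurable_pi_apply u).prodMk measurable_id)
  · simpa only [attackSample, if_neg hu] using measurable_pi_apply u

lemma map_sampleScores_attackSample_comp_perm {Ω : Type*} [MeasurableSpace Ω] {μ : Measure Ω}
    {Z : Ω → ι → 𝒵} (hZ : Measurable Z) (hf : Measurable fun q : 𝒵 × (ι → 𝒵) => f q.1 q.2)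
    {st : 𝒵 → (ι → 𝒵) → ℝ} (hst : Measurable fun q : 𝒵 × (ι → 𝒵) => st q.1 q.2)
    (hσP : ∀ u ∈ P, σ u = u) (hZσ : μ.map (fun ω => Z ω ∘ σ) = μ.map Z)
    (hfσ : ∀ x z, f x (z ∘ σ) = f x z) (hstσ : ∀ x w, st x (w ∘ σ) = st x w) :
    μ.map (fun ω => sampleScores st (attackSample f P (Z ω)) ∘ σ) =
      μ.map (fun ω => sampleScores st (attackSample f P (Z ω))) :=
  map_comp_perm_eq_of_equivariant hZ
    ((measurable_sampleScores hst).comp (measurable_attackSample hf P))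
    (fun z => by simp only [Function.comp_apply, attackSample_comp_perm hσP (hfσ · z),
      sampleScores_comp_perm (hstσ · _)]) hZσ

end Attack

theorem pvalue_uniform_after_attack_general
    {Ω : Type*} [MeasureSpace Ω] [IsProbabilityMeasure (ℙ : Measure Ω)]
    {𝒵 : Type*} [MeasurableSpace 𝒵]
    (n m k : ℕ) (hkn : k ≤ n)
    -- the set of true-null test indices, `H1 = {1,…,m} \ H0` being the non-null indices
    (H0 : Finset ℕ) (hH0 : H0 ⊆ Finset.Icc 1 m)
    -- the attack set: a fixed subset of `H0` of cardinality `mₐ`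
    (A : Finset ℕ) (hAH0 : A ⊆ H0)
    -- training and test samples `Z_1, …, Z_{n+m}`
    (Z : Ω → ℕ → 𝒵) (hZmeas : Measurable Z)
    -- Assumption 1: exchangeability of the nulls given the non-nulls
    (hexch : ∀ σ : Equiv.Perm ℕ,
      (∀ i ∉ Finset.Icc 1 n ∪ H0.image (fun j => n + j), σ i = i) →
      Measure.map (fun ω => fun i => Z ω (σ i)) ℙ = Measure.map Z ℙ)
    -- the attack map, order-invariant in the unordered set `{Z_1,…,Z_n, Z_{n+j} : j ∈ H0 \ A}`
    (fatk : 𝒵 → (ℕ → 𝒵) → 𝒵)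
    (hfmeas : Measurable fun q : 𝒵 × (ℕ → 𝒵) => fatk q.1 q.2)
    (hford : ∀ (z : 𝒵) (data : ℕ → 𝒵) (σ : Equiv.Perm ℕ),
      (∀ i ∉ Finset.Icc 1 n ∪ (H0 \ A).image (fun j => n + j), σ i = i) →
      fatk z (fun i => data (σ i)) = fatk z data)
    -- the post-attack samples
    (Zt : Ω → ℕ → 𝒵)
    (hZtA : ∀ ω, ∀ j ∈ A, Zt ω (n + j) = fatk (Z ω (n + j)) (Z ω))
    (hZtn : ∀ ω i, (∀ j ∈ A, i ≠ n + j) → Zt ω i = Z ω i)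
    -- the post-attack score function, permutation-invariant over the block `{k+1,…,n+m}`
    (st : 𝒵 → (ℕ → 𝒵) → ℝ)
    (hstmeas : Measurable fun q : 𝒵 × (ℕ → 𝒵) => st q.1 q.2)
    (hstinv : ∀ (z : 𝒵) (data : ℕ → 𝒵) (σ : Equiv.Perm ℕ),
      (∀ i ∉ Finset.Icc (k + 1) (n + m), σ i = i) →
      st z (fun i => data (σ i)) = st z data)
    -- the post-attack scores `S_i = s̃(Z̃_i; Z̃)`
    (S : Ω → ℕ → ℝ) (hS : ∀ ω i, S ω i = st (Zt ω i) (Zt ω))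
    -- the post-attack scores are almost surely pairwise distinct
    (hdist : ∀ᵐ ω ∂ℙ, ∀ i ∈ Finset.Icc (k + 1) (n + m), ∀ j ∈ Finset.Icc (k + 1) (n + m),
      i ≠ j → S ω i ≠ S ω j)
    -- the post-attack conformal p-values
    (p : Ω → ℕ → ℝ)
    (hp : ∀ ω j, p ω j =
      (1 + (((Finset.Icc (k + 1) n).filter fun i => S ω (n + j) ≤ S ω i).card : ℝ)) /
        ((n : ℝ) - k + 1))
    :
    ∀ i ∈ H0 \ A, ∀ r ∈ Finset.Icc 1 (n - k + 1),
      ℙ {ω | ((n : ℝ) - k + 1) * p ω i = (r : ℝ)} = 1 / ((n - k + 1 : ℕ) : ℝ≥0∞) := by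
  intro i hi r hr
  obtain ⟨hiH0, hiA⟩ := mem_sdiff.mp hi
  have hi1m := mem_Icc.mp (hH0 hiH0)
  set P := A.image (n + ·)
  set T := insert (n + i) (Icc (k + 1) n)
  have hniT : n + i ∉ Icc (k + 1) n := by simp only [mem_Icc]; omega
  have hTcard : #T = n - k + 1 := by rw [card_insert_of_notMem hniT, Nat.card_Icc]; omega
  have hTU : T ⊆ Icc 1 n ∪ (H0 \ A).image (n + ·) :=
    insert_subset (mem_union_right _ (mem_image_of_mem _ hi))
      ((Icc_subset_Icc (by omega) le_rfl).trans subset_union_left)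
  have hTS : T ⊆ Icc (k + 1) (n + m) :=
    insert_subset (mem_Icc.mpr ⟨by omega, by omega⟩) (Icc_subset_Icc le_rfl (by omega))
  have hPT : ∀ u ∈ P, u ∉ T := by
    simp only [P, forall_mem_image]
    intro j hj
    have := mem_Icc.mp (hH0 (hAH0 hj))
    have hji : j ≠ i := fun h => hiA (h ▸ hj)
    simp only [T, mem_insert, mem_Icc]
    omega
  have hSZ : S = fun ω => sampleScores st (attackSample fatk P (Z ω)) := by
    funext ω u
    rw [hS, sampleScores, eq_attackSample (forall_mem_image.mpr (hZtA ω))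
      (fun u hu => hZtn ω u fun j hj h => hu (h ▸ mem_image_of_mem _ hj))]
  have hSmeas : Measurable S := hSZ ▸
    (measurable_sampleScores hstmeas).comp ((measurable_attackSample hfmeas P).comp hZmeas)
  have hd0 : (n : ℝ) - k + 1 ≠ 0 := by linarith [(Nat.cast_le.mpr hkn : (k : ℝ) ≤ n)]
  have hpval : ∀ ω, ((n : ℝ) - k + 1) * p ω i = upperRank (S ω) T (n + i) := fun ω => by
    rw [hp, mul_div_cancel₀ _ hd0, upperRank_insert_self hniT]; push_cast; ring
  have hswap : ∀ t ∈ T, Measure.map (fun ω => S ω ∘ Equiv.swap t (n + i)) ℙ = Measure.map S ℙ := by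
    intro t ht
    have hfix : ∀ s, T ⊆ s → ∀ u ∉ s, Equiv.swap t (n + i) u = u :=
      fun s hs u hu => Equiv.swap_apply_of_notMem (hs ht) (hs (mem_insert_self _ _)) hu
    rw [hSZ]
    exact map_sampleScores_attackSample_comp_perm hZmeas hfmeas hstmeas
      (fun u hu => hfix T le_rfl u (hPT u hu))
      (hexch _ (hfix _ (hTU.trans (union_subset_union_right (image_subset_image sdiff_subset)))))
      (fun x z => hford x z _ (hfix _ hTU)) (fun x w => hstinv x w _ (hfix _ hTS))
  have hinj : ∀ᵐ ω ∂ℙ, Set.InjOn (S ω) T := hdist.mono fun ω h u hu v hv huv =>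
    by_contra fun hne => h u (hTS hu) v (hTS hv) hne huv
  simp_rw [hpval, Nat.cast_inj]
  rw [← hTcard] at hr ⊢
  exact measure_upperRank_eq_one_div_card hSmeas (mem_insert_self _ _) hswap hinj hr

/-- **Uniformity of the conformal p-value of an unattacked null** (Lemma 3(ii)).
With `A ⊆ H0` a fixed set of `mₐ` indices, the attack map order-invariant, the score function
permutation-invariant and the post-attack scores almost surely pairwise distinct, under
Assumption 1, for every unattacked true-null test index `i ∈ H0 \ A` the quantity
`(n−k+1)·p̃_i` is uniformly distributed on the integers `{1,…,n−k+1}`. -/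
theorem pvalue_uniform_after_attack
    {Ω : Type*} [MeasureSpace Ω] [IsProbabilityMeasure (ℙ : Measure Ω)]
    {𝒵 : Type*} [MeasurableSpace 𝒵]
    (n m k m₀ mₐ : ℕ) (hk1 : 1 ≤ k) (hkn : k ≤ n) (hm : 1 ≤ m)
    -- the set of true-null test indices, `H1 = {1,…,m} \ H0` being the non-null indices
    (H0 : Finset ℕ) (hH0 : H0 ⊆ Finset.Icc 1 m) (hm₀ : H0.card = m₀)
    -- the attack set: a fixed subset of `H0` of cardinality `mₐ`
    (A : Finset ℕ) (hAH0 : A ⊆ H0) (hmₐ : A.card = mₐ)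
    -- training and test samples `Z_1, …, Z_{n+m}`
    (Z : Ω → ℕ → 𝒵) (hZmeas : Measurable Z)
    -- Assumption 1: exchangeability of the nulls given the non-nulls
    (hexch : ∀ σ : Equiv.Perm ℕ,
      (∀ i ∉ Finset.Icc 1 n ∪ H0.image (fun j => n + j), σ i = i) →
      Measure.map (fun ω => fun i => Z ω (σ i)) ℙ = Measure.map Z ℙ)
    -- the attack map, order-invariant in the unordered set `{Z_1,…,Z_n, Z_{n+j} : j ∈ H0 \ A}`
    (fatk : 𝒵 → (ℕ → 𝒵) → 𝒵)
    (hfmeas : Measurable fun q : 𝒵 × (ℕ → 𝒵) => fatk q.1 q.2)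
    (hford : ∀ (z : 𝒵) (data : ℕ → 𝒵) (σ : Equiv.Perm ℕ),
      (∀ i ∉ Finset.Icc 1 n ∪ (H0 \ A).image (fun j => n + j), σ i = i) →
      fatk z (fun i => data (σ i)) = fatk z data)
    -- the post-attack samples
    (Zt : Ω → ℕ → 𝒵)
    (hZtA : ∀ ω, ∀ j ∈ A, Zt ω (n + j) = fatk (Z ω (n + j)) (Z ω))
    (hZtn : ∀ ω i, (∀ j ∈ A, i ≠ n + j) → Zt ω i = Z ω i)
    -- the post-attack score function, permutation-invariant over the block `{k+1,…,n+m}`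
    (st : 𝒵 → (ℕ → 𝒵) → ℝ)
    (hstmeas : Measurable fun q : 𝒵 × (ℕ → 𝒵) => st q.1 q.2)
    (hstinv : ∀ (z : 𝒵) (data : ℕ → 𝒵) (σ : Equiv.Perm ℕ),
      (∀ i ∉ Finset.Icc (k + 1) (n + m), σ i = i) →
      st z (fun i => data (σ i)) = st z data)
    -- the post-attack scores `S_i = s̃(Z̃_i; Z̃)`
    (S : Ω → ℕ → ℝ) (hS : ∀ ω i, S ω i = st (Zt ω i) (Zt ω))
    -- the post-attack scores are almost surely pairwise distinct
    (hdist : ∀ᵐ ω ∂ℙ, ∀ i ∈ Finset.Icc (k + 1) (n + m), ∀ j ∈ Finset.Icc (k + 1) (n + m),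
      i ≠ j → S ω i ≠ S ω j)
    -- the post-attack conformal p-values
    (p : Ω → ℕ → ℝ)
    (hp : ∀ ω j, p ω j =
      (1 + (((Finset.Icc (k + 1) n).filter fun i => S ω (n + j) ≤ S ω i).card : ℝ)) /
        ((n : ℝ) - k + 1))
    :
    ∀ i ∈ H0 \ A, ∀ r ∈ Finset.Icc 1 (n - k + 1),
      ℙ {ω | ((n : ℝ) - k + 1) * p ω i = (r : ℝ)} = 1 / ((n - k + 1 : ℕ) : ℝ≥0∞) :=
  pvalue_uniform_after_attack_general n m k hkn H0 hH0 A hAH0 Z hZmeas hexch fatk hfmeas hford Zt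
    hZtA hZtn st hstmeas hstinv S hS hdist p hp

end
end

section
/- Let 𝓔 be an event with P(𝓔) ≥ 1 − δ′ on which the number of non-null test indices (indices in H_1 ∪ A, treating attacked samples as non-nulls) left unrejected is at most c = ⌊(m_1 + m_A)·η′⌋, and suppose that, conditionally on the data, the attack set A is a uniformly random subset of size m_A of the m − R̃ unrejected test indices. Then P(A ⊆ H_0) ≥ (1 − δ′) · l(η′), where l(η′) = E[ C(m − R̃ − c, m_A) / C(m − R̃, m_A) | 𝓔 ] and C(·,·) denotes the binomial coefficient; in particular l(η′) → 1 as η′ → 0. -/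
open MeasureTheory ProbabilityTheory Finset
open scoped ENNReal

noncomputable section

/-- **Tightness of the FDR upper bound via the detection power** (Proposition 3).
`Ωd` carries the randomness of the data and `Ωs` the independent randomness of the attack-set
selection.  `Urej ωd` is the set of unrejected test indices (of cardinality `m − R̃`),
`m_A = ⌊γ(m − R̃)⌋`, and, conditionally on the data, the attack set `A` is a uniformly random
subset of size `m_A` of the `m − R̃` unrejected test indices.  If `𝓔` is an event with
`P(𝓔) ≥ 1 − δ′` on which the number of unrejected non-null test indices is at most
`c = ⌊(m₁ + m_A)·η′⌋`, then `P(A ⊆ H0) ≥ (1 − δ′) · l(η′)` where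
`l(η′) = E[ C(m − R̃ − c, m_A) / C(m − R̃, m_A) | 𝓔 ]`; in particular `l(η′) → 1` as
`η′ → 0⁺`. -/
theorem attack_set_in_nulls_high_probability
    {Ωd Ωs : Type*} [MeasurableSpace Ωd] [MeasurableSpace Ωs]
    (μd : Measure Ωd) [IsProbabilityMeasure μd]
    (μs : Measure Ωs) [IsProbabilityMeasure μs]
    (m m₁ : ℕ) (hm : 1 ≤ m)
    -- true-null test indices `H0` and non-null test indices `H1 = {1,…,m} \ H0`, `|H1| = m₁`
    (H0 : Finset ℕ) (hH0 : H0 ⊆ Finset.Icc 1 m) (hm₁ : (Finset.Icc 1 m \ H0).card = m₁)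
    (γ δ' η' : ℝ) (hγ : γ ∈ Set.Ioc (0 : ℝ) 1) (hδ' : δ' ∈ Set.Ioo (0 : ℝ) 1)
    (hη' : η' ∈ Set.Ioo (0 : ℝ) 1)
    -- number of rejections `R̃` (a function of the data)
    (Rt : Ωd → ℕ) (hRtmeas : Measurable Rt)
    -- the set of unrejected test indices, of cardinality `m − R̃`
    (Urej : Ωd → Finset ℕ)
    (hUrejmeas : ∀ B : Finset ℕ, MeasurableSet {ωd | Urej ωd = B})
    (hUrejsub : ∀ ωd, Urej ωd ⊆ Finset.Icc 1 m)
    (hUrejcard : ∀ ωd, (Urej ωd).card = m - Rt ωd)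
    -- the attack size `m_A = ⌊γ(m − R̃)⌋`
    (mA : Ωd → ℕ) (hmA : ∀ ωd, mA ωd = Nat.floor (γ * ((m - Rt ωd : ℕ) : ℝ)))
    -- the attack set: conditionally on the data, a uniformly random subset of size `m_A`
    -- of the `m − R̃` unrejected test indices
    (A : Ωd × Ωs → Finset ℕ)
    (hAmeas : ∀ B : Finset ℕ, MeasurableSet {ω : Ωd × Ωs | A ω = B})
    (hAsub : ∀ ω : Ωd × Ωs, A ω ⊆ Urej ω.1)
    (hAcard : ∀ ω : Ωd × Ωs, (A ω).card = mA ω.1)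
    (hAunif : ∀ ωd : Ωd, ∀ B ⊆ Urej ωd, B.card = mA ωd →
      μs {ωs | A (ωd, ωs) = B} = 1 / (((Urej ωd).card.choose (mA ωd) : ℕ) : ℝ≥0∞))
    -- the event `𝓔`, of probability at least `1 − δ′`, on which the number of unrejected
    -- non-null test indices is at most `c = ⌊(m₁ + m_A)·η′⌋`
    (E : Set Ωd) (hEmeas : MeasurableSet E)
    (hEprob : ENNReal.ofReal (1 - δ') ≤ μd E)
    (hEgood : ∀ ωd ∈ E, (Urej ωd \ H0).card ≤ Nat.floor (((m₁ : ℝ) + (mA ωd : ℝ)) * η'))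
    -- the function `l : t ↦ E[ C(m − R̃ − ⌊(m₁+m_A)t⌋, m_A) / C(m − R̃, m_A) | 𝓔 ]`
    (l : ℝ → ℝ)
    (hl : ∀ t, l t =
      (∫ ωd in E,
        (((m - Rt ωd - Nat.floor (((m₁ : ℝ) + (mA ωd : ℝ)) * t)).choose (mA ωd) : ℝ) /
          (((m - Rt ωd).choose (mA ωd) : ℕ) : ℝ)) ∂μd) / (μd E).toReal) :
    (1 - δ') * l η' ≤ ((μd.prod μs) {ω | A ω ⊆ H0}).toReal ∧
      Filter.Tendsto l (nhdsWithin 0 (Set.Ioi 0)) (nhds 1) := by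

  obtain ⟨hγ0, hγ1⟩ := hγ
  obtain ⟨hδ0, hδ1⟩ := hδ'
  -- basic facts
  have hmAle : ∀ ωd, mA ωd ≤ m - Rt ωd := by
    intro ωd
    rw [hmA]
    have hle : γ * ((m - Rt ωd : ℕ) : ℝ) ≤ ((m - Rt ωd : ℕ) : ℝ) := by
      nlinarith [(Nat.cast_nonneg (m - Rt ωd) : (0:ℝ) ≤ (m - Rt ωd : ℕ))]
    calc Nat.floor (γ * ((m - Rt ωd : ℕ) : ℝ)) ≤ Nat.floor (((m - Rt ωd : ℕ) : ℝ)) :=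
          Nat.floor_le_floor hle
      _ = m - Rt ωd := Nat.floor_natCast _
  have hchoosepos : ∀ ωd, 0 < (m - Rt ωd).choose (mA ωd) := fun ωd => Nat.choose_pos (hmAle ωd)
  -- the integrand
  set f : ℝ → Ωd → ℝ := (fun t ωd =>
    ((m - Rt ωd - Nat.floor (((m₁ : ℝ) + (mA ωd : ℝ)) * t)).choose (mA ωd) : ℝ) /
      (((m - Rt ωd).choose (mA ωd) : ℕ) : ℝ)) with hf
  have hf_nonneg : ∀ t ωd, 0 ≤ f t ωd := by
    intro t ωd
    apply div_nonneg <;> positivity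
  have hf_le_one : ∀ t ωd, f t ωd ≤ 1 := by
    intro t ωd
    simp only [hf]
    apply div_le_one_of_le₀
    · exact_mod_cast Nat.choose_le_choose (mA ωd) (Nat.sub_le _ _)
    · positivity
  have hf_meas : ∀ t, Measurable (f t) := by
    intro t
    have : f t = (fun k : ℕ =>
        (((m - k - Nat.floor (((m₁ : ℝ) + ((Nat.floor (γ * ((m - k : ℕ) : ℝ))) : ℝ)) * t)).choose
            (Nat.floor (γ * ((m - k : ℕ) : ℝ))) : ℝ) /
          (((m - k).choose (Nat.floor (γ * ((m - k : ℕ) : ℝ))) : ℕ) : ℝ))) ∘ Rt := by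
      funext ωd
      simp only [hf, Function.comp, hmA ωd]
    rw [this]
    exact measurable_from_top.comp hRtmeas
  have hf_int : ∀ t, Integrable (f t) (μd.restrict E) := by
    intro t
    refine (integrable_const (1 : ℝ)).mono' ((hf_meas t).aestronglyMeasurable) ?_
    filter_upwards with ωd
    rw [Real.norm_eq_abs, abs_of_nonneg (hf_nonneg t ωd)]
    exact hf_le_one t ωd
  have heT : 1 - δ' ≤ (μd E).toReal := by
    have h := ENNReal.toReal_mono (measure_ne_top μd E) hEprob
    rwa [ENNReal.toReal_ofReal (by linarith)] at h
  have heTpos : 0 < (μd E).toReal := lt_of_lt_of_le (by linarith) heT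
  -- measurability of the target event
  have hSmeas : MeasurableSet {ω : Ωd × Ωs | A ω ⊆ H0} := by
    have hS : {ω : Ωd × Ωs | A ω ⊆ H0} = ⋃ (B : Finset ℕ) (_ : B ⊆ H0), {ω | A ω = B} := by
      ext ω
      simp only [Set.mem_setOf_eq, Set.mem_iUnion]
      constructor
      · intro h; exact ⟨A ω, h, rfl⟩
      · rintro ⟨B, hB, hAB⟩; rw [hAB]; exact hB
    rw [hS]
    exact MeasurableSet.iUnion fun B => MeasurableSet.iUnion fun _ => hAmeas B
  -- the key pointwise lower bound on the conditional probability
  have key : ∀ ωd ∈ E,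
      ENNReal.ofReal (f η' ωd) ≤ μs (Prod.mk ωd ⁻¹' {ω : Ωd × Ωs | A ω ⊆ H0}) := by
    intro ωd hωd
    classical
    set U := Urej ωd with hU
    set k := mA ωd with hk
    set c := Nat.floor (((m₁ : ℝ) + (mA ωd : ℝ)) * η') with hc
    set D := (m - Rt ωd).choose k with hD
    set T := Finset.powersetCard k (U ∩ H0) with hT
    have hmeassec : ∀ B : Finset ℕ, MeasurableSet {ωs | A (ωd, ωs) = B} := fun B =>
      (hAmeas B).preimage measurable_prodMk_left
    have hdisj : (↑T : Set (Finset ℕ)).PairwiseDisjoint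
        (fun B => {ωs | A (ωd, ωs) = B}) := by
      intro B1 _ B2 _ hne
      simp only [Function.onFun, Set.disjoint_left, Set.mem_setOf_eq]
      intro ωs e1 e2
      exact hne (e1 ▸ e2)
    have hval : ∀ B ∈ T, μs {ωs | A (ωd, ωs) = B} = 1 / ((D : ℕ) : ℝ≥0∞) := by
      intro B hB
      rw [Finset.mem_powersetCard] at hB
      have := hAunif ωd B (hB.1.trans Finset.inter_subset_left) hB.2
      rwa [hUrejcard ωd] at this
    have hunion : (⋃ B ∈ T, {ωs | A (ωd, ωs) = B}) ⊆
        Prod.mk ωd ⁻¹' {ω : Ωd × Ωs | A ω ⊆ H0} := by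
      intro ωs hωs
      simp only [Set.mem_iUnion, Set.mem_setOf_eq] at hωs
      obtain ⟨B, hB, hAB⟩ := hωs
      rw [Finset.mem_powersetCard] at hB
      simp only [Set.mem_preimage, Set.mem_setOf_eq, hAB]
      exact hB.1.trans Finset.inter_subset_right
    have hsum : μs (⋃ B ∈ T, {ωs | A (ωd, ωs) = B}) =
        (((U ∩ H0).card.choose k : ℕ) : ℝ≥0∞) / ((D : ℕ) : ℝ≥0∞) := by
      rw [measure_biUnion_finset hdisj (fun B _ => hmeassec B),
        Finset.sum_congr rfl hval, Finset.sum_const, hT, Finset.card_powersetCard,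
        nsmul_eq_mul, mul_one_div]
    -- card bound
    have hcardU : U.card = m - Rt ωd := hUrejcard ωd
    have hcard : m - Rt ωd - c ≤ (U ∩ H0).card := by
      have h1 : (U ∩ H0).card + (U \ H0).card = m - Rt ωd := by
        rw [Finset.card_inter_add_card_sdiff, hcardU]
      have h2 := hEgood ωd hωd
      rw [← hU, ← hc] at h2
      omega
    have hDpos : 0 < D := hchoosepos ωd
    have hofReal : ENNReal.ofReal (f η' ωd) =
        (((m - Rt ωd - c).choose k : ℕ) : ℝ≥0∞) / ((D : ℕ) : ℝ≥0∞) := by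
      simp only [hf]
      rw [ENNReal.ofReal_div_of_pos (by exact_mod_cast hchoosepos ωd),
        ENNReal.ofReal_natCast, ENNReal.ofReal_natCast]
    calc ENNReal.ofReal (f η' ωd)
        = (((m - Rt ωd - c).choose k : ℕ) : ℝ≥0∞) / ((D : ℕ) : ℝ≥0∞) := hofReal
      _ ≤ (((U ∩ H0).card.choose k : ℕ) : ℝ≥0∞) / ((D : ℕ) : ℝ≥0∞) := by
          apply ENNReal.div_le_div_right
          exact_mod_cast Nat.choose_le_choose k hcard
      _ = μs (⋃ B ∈ T, {ωs | A (ωd, ωs) = B}) := hsum.symm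
      _ ≤ μs (Prod.mk ωd ⁻¹' {ω : Ωd × Ωs | A ω ⊆ H0}) := measure_mono hunion
  -- first part
  have hI0 : 0 ≤ ∫ ωd in E, f η' ωd ∂μd :=
    integral_nonneg fun ωd => hf_nonneg η' ωd
  have h1 : ENNReal.ofReal (∫ ωd in E, f η' ωd ∂μd) ≤
      (μd.prod μs) {ω : Ωd × Ωs | A ω ⊆ H0} := by
    rw [ofReal_integral_eq_lintegral_ofReal (hf_int η')
      (Filter.Eventually.of_forall (hf_nonneg η')), Measure.prod_apply hSmeas]
    calc ∫⁻ ωd in E, ENNReal.ofReal (f η' ωd) ∂μd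
        ≤ ∫⁻ ωd in E, μs (Prod.mk ωd ⁻¹' {ω : Ωd × Ωs | A ω ⊆ H0}) ∂μd :=
          setLIntegral_mono (measurable_measure_prodMk_left hSmeas) key
      _ ≤ ∫⁻ ωd, μs (Prod.mk ωd ⁻¹' {ω : Ωd × Ωs | A ω ⊆ H0}) ∂μd :=
          lintegral_mono' Measure.restrict_le_self le_rfl
  have hIle : (∫ ωd in E, f η' ωd ∂μd) ≤ ((μd.prod μs) {ω : Ωd × Ωs | A ω ⊆ H0}).toReal := by
    have h2 := ENNReal.toReal_mono (measure_ne_top _ _) h1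
    rwa [ENNReal.toReal_ofReal hI0] at h2
  constructor
  · rw [hl]
    calc (1 - δ') * ((∫ ωd in E, f η' ωd ∂μd) / (μd E).toReal)
        = (∫ ωd in E, f η' ωd ∂μd) * ((1 - δ') / (μd E).toReal) := by ring
      _ ≤ (∫ ωd in E, f η' ωd ∂μd) * 1 :=
          mul_le_mul_of_nonneg_left ((div_le_one heTpos).2 heT) hI0
      _ = ∫ ωd in E, f η' ωd ∂μd := mul_one _
      _ ≤ _ := hIle
  · -- the limit
    have hmAub : ∀ ωd, mA ωd ≤ m := fun ωd => (hmAle ωd).trans (Nat.sub_le m _)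
    set ε := (1 : ℝ) / (m + m₁ + 1) with hε
    have hεpos : 0 < ε := by positivity
    have hconst : ∀ t ∈ Set.Ioo (0 : ℝ) ε, l t = 1 := by
      intro t ht
      have hfloor : ∀ ωd, Nat.floor (((m₁ : ℝ) + (mA ωd : ℝ)) * t) = 0 := by
        intro ωd
        rw [Nat.floor_eq_zero]
        have hb : ((mA ωd : ℝ)) ≤ m := by exact_mod_cast hmAub ωd
        have hm1 : (0:ℝ) ≤ m₁ := Nat.cast_nonneg _
        have ht2 : t < 1 / ((m : ℝ) + m₁ + 1) := ht.2
        have hden : (0:ℝ) < (m : ℝ) + m₁ + 1 := by positivity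
        rw [lt_div_iff₀ hden] at ht2
        nlinarith [ht.1]
      have hone : ∀ ωd : Ωd, f t ωd = 1 := by
        intro ωd
        simp only [hf]
        simp only [hfloor ωd, Nat.sub_zero]
        exact div_self (by exact_mod_cast (hchoosepos ωd).ne')
      rw [hl]
      have hint : (∫ ωd in E, f t ωd ∂μd) = (μd E).toReal := by
        rw [integral_congr_ae (Filter.Eventually.of_forall hone)]
        simp
        rfl
      show (∫ ωd in E, f t ωd ∂μd) / (μd E).toReal = 1
      rw [hint, div_self heTpos.ne']
    refine Filter.Tendsto.congr' ?_ tendsto_const_nhds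
    filter_upwards [Ioo_mem_nhdsGT_of_mem (Set.mem_Ico.2 ⟨le_refl (0:ℝ), hεpos⟩)] with t ht
    exact (hconst t ht).symm


end
end

section
/- Let N and m be positive integers and α ∈ [0,1]. Let P be a random variable such that N·P is uniformly distributed on the integers {1,…,N}, and let T be a random variable taking values in {1,…,m} that is independent of P. Then E[ 1{P ≤ αT/m} / T ] = E[ ⌊αNT/m⌋ / (N·T) ] ≤ α/m. -/
open MeasureTheory ProbabilityTheory

noncomputable section

/-- **The per-hypothesis conditional expectation bound in the BH–conformal FDR analysis.**
Let `N, m` be positive integers and `α ∈ [0,1]`.  Let `P` be a random variable such that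
`N·P` is uniformly distributed on the integers `{1,…,N}`, and let `T` be a random variable
taking values in `{1,…,m}` that is independent of `P`.  Then
`E[ 1{P ≤ αT/m} / T ] = E[ ⌊αNT/m⌋ / (N·T) ] ≤ α/m`. -/
theorem bh_conformal_conditional_expectation_bound
    {Ω : Type*} [MeasureSpace Ω] [IsProbabilityMeasure (ℙ : Measure Ω)]
    (N m : ℕ) (hN : 0 < N) (hm : 0 < m)
    (α : ℝ) (hα : α ∈ Set.Icc (0 : ℝ) 1)
    (P T : Ω → ℝ) (hPmeas : Measurable P) (hTmeas : Measurable T)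
    -- `N·P` is uniformly distributed on the integers `{1,…,N}`
    (hPunif : ∀ r ∈ Finset.Icc 1 N, ℙ {ω | (N : ℝ) * P ω = (r : ℝ)} = 1 / (N : ENNReal))
    -- `T` takes values in the integers `{1,…,m}`
    (hTval : ∀ ω, ∃ t ∈ Finset.Icc 1 m, T ω = (t : ℝ))
    -- `P` and `T` are independent
    (hindep : IndepFun P T ℙ) :
    (∫ ω, (if P ω ≤ α * T ω / m then (1 : ℝ) else 0) / T ω ∂ℙ) =
        (∫ ω, ((⌊α * N * T ω / m⌋ : ℤ) : ℝ) / ((N : ℝ) * T ω) ∂ℙ) ∧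
      (∫ ω, ((⌊α * N * T ω / m⌋ : ℤ) : ℝ) / ((N : ℝ) * T ω) ∂ℙ) ≤ α / m := by
  obtain ⟨hα0, hα1⟩ := hα
  have hNR : (0:ℝ) < N := by exact_mod_cast hN
  have hmR : (0:ℝ) < m := by exact_mod_cast hm
  set A : ℕ → Set Ω := fun r => {ω | (N : ℝ) * P ω = (r : ℝ)} with hAdef
  have hAmeas : ∀ r, MeasurableSet (A r) := fun r =>
    measurableSet_eq_fun (measurable_const.mul hPmeas) measurable_const
  have hdisj : (Set.univ : Set ℕ).PairwiseDisjoint A := by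
    intro r _ s _ hrs
    refine Set.disjoint_left.2 fun ω h1 h2 => hrs ?_
    have h3 : (r : ℝ) = (s : ℝ) := by
      have h1' : (N : ℝ) * P ω = (r : ℝ) := h1
      have h2' : (N : ℝ) * P ω = (s : ℝ) := h2
      rw [← h1', h2']
    exact_mod_cast h3
  have hU : ℙ (⋃ r ∈ Finset.Icc 1 N, A r) = 1 := by
    rw [measure_biUnion_finset (hdisj.subset (Set.subset_univ _)) fun r _ => hAmeas r]
    rw [Finset.sum_congr rfl hPunif, Finset.sum_const, Nat.card_Icc]
    simp only [Nat.add_sub_cancel, nsmul_eq_mul, one_div]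
    rw [ENNReal.mul_inv_cancel (by exact_mod_cast hN.ne') (by simp)]
  have hUc : ℙ (⋃ r ∈ Finset.Icc 1 N, A r)ᶜ = 0 := by
    rw [measure_compl (Finset.measurableSet_biUnion _ fun r _ => hAmeas r) (by simp), hU,
      measure_univ, tsub_self]
  -- the key probability computation
  have hkey : ∀ t : ℕ, t ∈ Finset.Icc 1 m →
      ℙ (P ⁻¹' Set.Iic (α * t / m))
        = ((⌊α * N * t / m⌋.toNat : ℕ) : ENNReal) * (1 / (N : ENNReal)) := by
    intro t ht
    obtain ⟨ht1, htm⟩ := Finset.mem_Icc.1 ht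
    have htR : (0:ℝ) < t := by exact_mod_cast ht1
    have htmR : (t:ℝ) ≤ m := by exact_mod_cast htm
    set x : ℝ := α * N * t / m with hxdef
    have hx0 : 0 ≤ x :=
      div_nonneg (mul_nonneg (mul_nonneg hα0 (Nat.cast_nonneg N)) (Nat.cast_nonneg t)) hmR.le
    have hxN : x ≤ N := by
      rw [hxdef, div_le_iff₀ hmR]
      have hNt : (0:ℝ) ≤ (N:ℝ) * t := mul_nonneg (Nat.cast_nonneg N) (Nat.cast_nonneg t)
      calc α * (N:ℝ) * t = α * ((N:ℝ) * t) := by ring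
        _ ≤ 1 * ((N:ℝ) * t) := mul_le_mul_of_nonneg_right hα1 hNt
        _ = (N:ℝ) * t := one_mul _
        _ ≤ (N:ℝ) * m := mul_le_mul_of_nonneg_left htmR hNR.le
    set k : ℕ := ⌊x⌋.toNat with hkdef
    have hkfl : ((k : ℤ) : ℝ) = ((⌊x⌋ : ℤ) : ℝ) := by
      rw [hkdef, Int.toNat_of_nonneg (Int.floor_nonneg.2 hx0)]
    have hkx : (k : ℝ) ≤ x := by
      have := Int.floor_le x
      rw [← hkfl] at this
      exact_mod_cast this
    have hkN : k ≤ N := by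
      have : (k : ℝ) ≤ N := hkx.trans hxN
      exact_mod_cast this
    have hset : P ⁻¹' Set.Iic (α * t / m) ∩ (⋃ r ∈ Finset.Icc 1 N, A r)
        = ⋃ r ∈ Finset.Icc 1 k, A r := by
      ext ω
      simp only [Set.mem_inter_iff, Set.mem_preimage, Set.mem_Iic, Set.mem_iUnion,
        Finset.mem_Icc, hAdef, Set.mem_setOf_eq, exists_prop]
      constructor
      · rintro ⟨hP, r, ⟨hr1, hrN⟩, hre⟩
        refine ⟨r, ⟨hr1, ?_⟩, hre⟩
        have hrx : (r:ℝ) ≤ x := by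
          rw [← hre]
          calc (N:ℝ) * P ω ≤ (N:ℝ) * (α * t / m) :=
                mul_le_mul_of_nonneg_left hP (Nat.cast_nonneg N)
            _ = x := by rw [hxdef]; ring
        have hrk : (r : ℤ) ≤ ⌊x⌋ := Int.le_floor.2 (by exact_mod_cast hrx)
        have : (r : ℤ) ≤ (k : ℤ) := by rw [hkdef, Int.toNat_of_nonneg (Int.floor_nonneg.2 hx0)]; exact hrk
        exact_mod_cast this
      · rintro ⟨r, ⟨hr1, hrk⟩, hre⟩
        refine ⟨?_, r, ⟨hr1, hrk.trans hkN⟩, hre⟩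
        have hrx : (r : ℝ) ≤ x := le_trans (by exact_mod_cast hrk) hkx
        have : (N:ℝ) * P ω ≤ (N:ℝ) * (α * t / m) := by
          rw [hre]
          calc (r:ℝ) ≤ x := hrx
            _ = (N:ℝ) * (α * t / m) := by rw [hxdef]; ring
        exact le_of_mul_le_mul_left this hNR
    calc ℙ (P ⁻¹' Set.Iic (α * t / m))
        = ℙ (P ⁻¹' Set.Iic (α * t / m) ∩ ⋃ r ∈ Finset.Icc 1 N, A r) :=
          (measure_inter_conull hUc).symm
      _ = ℙ (⋃ r ∈ Finset.Icc 1 k, A r) := by rw [hset]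
      _ = ∑ r ∈ Finset.Icc 1 k, ℙ (A r) :=
          measure_biUnion_finset (hdisj.subset (Set.subset_univ _)) fun r _ => hAmeas r
      _ = ((k : ℕ) : ENNReal) * (1 / (N : ENNReal)) := by
          rw [Finset.sum_congr rfl fun r hr => hPunif r (Finset.mem_Icc.2
              ⟨(Finset.mem_Icc.1 hr).1, (Finset.mem_Icc.1 hr).2.trans hkN⟩),
            Finset.sum_const, Nat.card_Icc]
          simp [nsmul_eq_mul]
  -- decomposition into indicators over values of T
  set S : ℕ → Set Ω := fun t => P ⁻¹' Set.Iic (α * t / m) ∩ T ⁻¹' {(t:ℝ)} with hSdef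
  have hSmeas : ∀ t, MeasurableSet (S t) := fun t =>
    (hPmeas measurableSet_Iic).inter (hTmeas (measurableSet_singleton _))
  have hS2meas : ∀ t : ℕ, MeasurableSet (T ⁻¹' {(t:ℝ)}) := fun t =>
    hTmeas (measurableSet_singleton _)
  have hdec1 : ∀ ω, (if P ω ≤ α * T ω / m then (1:ℝ) else 0) / T ω
      = ∑ t ∈ Finset.Icc 1 m, (S t).indicator (fun _ => ((t:ℝ))⁻¹) ω := by
    intro ω
    obtain ⟨t0, ht0, hTt0⟩ := hTval ω
    rw [Finset.sum_eq_single_of_mem t0 ht0 ?side]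
    case side =>
      intro t _ htne
      have hne : T ω ≠ (t:ℝ) := by
        rw [hTt0]
        exact_mod_cast (Ne.symm htne)
      simp [Set.indicator_apply, hSdef, hne]
    by_cases h : P ω ≤ α * t0 / m
    · have hmem : ω ∈ S t0 := ⟨h, hTt0⟩
      rw [Set.indicator_of_mem hmem, hTt0, if_pos h, one_div]
    · have hmem : ω ∉ S t0 := fun hc => h hc.1
      rw [Set.indicator_of_notMem hmem, hTt0, if_neg h, zero_div]
  have hdec2 : ∀ ω, ((⌊α * N * T ω / m⌋ : ℤ) : ℝ) / ((N : ℝ) * T ω)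
      = ∑ t ∈ Finset.Icc 1 m, (T ⁻¹' {(t:ℝ)}).indicator
          (fun _ => ((⌊α * N * t / m⌋ : ℤ) : ℝ) / ((N : ℝ) * t)) ω := by
    intro ω
    obtain ⟨t0, ht0, hTt0⟩ := hTval ω
    rw [Finset.sum_eq_single_of_mem t0 ht0 ?side]
    case side =>
      intro t _ htne
      have hne : T ω ≠ (t:ℝ) := by
        rw [hTt0]
        exact_mod_cast (Ne.symm htne)
      simp [Set.indicator_apply, hne]
    have hmem : ω ∈ T ⁻¹' {((t0:ℕ):ℝ)} := hTt0
    rw [Set.indicator_of_mem hmem, hTt0]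
  have hint1 : ∀ t ∈ Finset.Icc 1 m,
      Integrable ((S t).indicator (fun _ => ((t:ℝ))⁻¹)) ℙ :=
    fun t _ => (integrable_const _).indicator (hSmeas t)
  have hint2 : ∀ t ∈ Finset.Icc 1 m,
      Integrable ((T ⁻¹' {(t:ℝ)}).indicator
        (fun _ => ((⌊α * N * t / m⌋ : ℤ) : ℝ) / ((N : ℝ) * t))) ℙ :=
    fun t _ => (integrable_const _).indicator (hS2meas t)
  have hI1 : (∫ ω, (if P ω ≤ α * T ω / m then (1 : ℝ) else 0) / T ω ∂ℙ)
      = ∑ t ∈ Finset.Icc 1 m, (ℙ (S t)).toReal * ((t:ℝ))⁻¹ := by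
    rw [integral_congr_ae (Filter.Eventually.of_forall hdec1), integral_finset_sum _ hint1]
    refine Finset.sum_congr rfl fun t _ => ?_
    rw [integral_indicator_const _ (hSmeas t), smul_eq_mul]
    rfl
  have hI2 : (∫ ω, ((⌊α * N * T ω / m⌋ : ℤ) : ℝ) / ((N : ℝ) * T ω) ∂ℙ)
      = ∑ t ∈ Finset.Icc 1 m, (ℙ (T ⁻¹' {(t:ℝ)})).toReal
          * (((⌊α * N * t / m⌋ : ℤ) : ℝ) / ((N : ℝ) * t)) := by
    rw [integral_congr_ae (Filter.Eventually.of_forall hdec2), integral_finset_sum _ hint2]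
    refine Finset.sum_congr rfl fun t _ => ?_
    rw [integral_indicator_const _ (hS2meas t), smul_eq_mul]
    rfl
  have hmain : ∀ t ∈ Finset.Icc 1 m,
      (ℙ (S t)).toReal * ((t:ℝ))⁻¹
        = (ℙ (T ⁻¹' {(t:ℝ)})).toReal * (((⌊α * N * t / m⌋ : ℤ) : ℝ) / ((N : ℝ) * t)) := by
    intro t ht
    have hmul : ℙ (S t) = ℙ (P ⁻¹' Set.Iic (α * t / m)) * ℙ (T ⁻¹' {(t:ℝ)}) :=
      hindep.measure_inter_preimage_eq_mul _ _ measurableSet_Iic (measurableSet_singleton _)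
    rw [hmul, hkey t ht, ENNReal.toReal_mul, ENNReal.toReal_mul]
    have hxnn : 0 ≤ α * N * t / m := by
      obtain ⟨ht1, _⟩ := Finset.mem_Icc.1 ht
      exact div_nonneg (mul_nonneg (mul_nonneg hα0 (Nat.cast_nonneg N)) (Nat.cast_nonneg t)) hmR.le
    have hfl : ((⌊α * N * t / m⌋ : ℤ) : ℝ) = ((⌊α * N * t / m⌋.toNat : ℕ) : ℝ) := by
      exact_mod_cast congrArg (fun z : ℤ => (z : ℝ))
        (Int.toNat_of_nonneg (Int.floor_nonneg.2 hxnn)).symm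
    rw [hfl]
    have h1 : ((((⌊α * N * t / m⌋.toNat : ℕ)) : ENNReal)).toReal
        = ((⌊α * N * t / m⌋.toNat : ℕ) : ℝ) := by simp
    have h2 : ((1 : ENNReal) / (N : ENNReal)).toReal = 1 / (N : ℝ) := by
      rw [ENNReal.toReal_div]
      simp
    rw [h1, h2]
    ring
  refine ⟨?_, ?_⟩
  · rw [hI1, hI2]
    exact Finset.sum_congr rfl hmain
  · have hf2int : Integrable (fun ω => ((⌊α * N * T ω / m⌋ : ℤ) : ℝ) / ((N : ℝ) * T ω)) ℙ := by
      rw [show (fun ω => ((⌊α * N * T ω / m⌋ : ℤ) : ℝ) / ((N : ℝ) * T ω))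
          = fun ω => ∑ t ∈ Finset.Icc 1 m, (T ⁻¹' {(t:ℝ)}).indicator
            (fun _ => ((⌊α * N * t / m⌋ : ℤ) : ℝ) / ((N : ℝ) * t)) ω from funext hdec2]
      exact integrable_finset_sum _ hint2
    have hle : ∀ ω, ((⌊α * N * T ω / m⌋ : ℤ) : ℝ) / ((N : ℝ) * T ω) ≤ α / m := by
      intro ω
      obtain ⟨t0, ht0, hTt0⟩ := hTval ω
      obtain ⟨h1, h2⟩ := Finset.mem_Icc.1 ht0
      have ht0R : (0:ℝ) < t0 := by exact_mod_cast h1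
      rw [hTt0]
      have hpos : (0:ℝ) < (N:ℝ) * t0 := mul_pos hNR ht0R
      have hfle : ((⌊α * N * t0 / m⌋ : ℤ) : ℝ) ≤ α * N * t0 / m := Int.floor_le _
      have hdiv : ((⌊α * N * t0 / m⌋ : ℤ) : ℝ) / ((N : ℝ) * t0)
          ≤ (α * N * t0 / m) / ((N : ℝ) * t0) := by
        exact div_le_div_of_nonneg_right hfle hpos.le
      refine hdiv.trans_eq ?_
      field_simp
    calc (∫ ω, ((⌊α * N * T ω / m⌋ : ℤ) : ℝ) / ((N : ℝ) * T ω) ∂ℙ)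
        ≤ ∫ _ω, α / m ∂ℙ := integral_mono hf2int (integrable_const _) hle
      _ = α / m := by simp
end
end
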